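/- arXiv:2304.08747 — 8 statements merged into one kernel-verified Lean document; each statement's English description precedes it below -/
import Mathlib

section
/- Cut-set bound for repairing h nodes in a single rack (Proposition 1, lower bound). Let C be an (n,k,l) MDS code over a finite field F and let h be an integer with 1 ≤ h ≤ min{u, s̄u − v}. Fix a host rack index e' ∈ {0,…,n̄−1}, distinct g'_1,…,g'_h ∈ {0,…,u−1} (the failed nodes are j'_b = e'u + g'_b), and a set R ⊆ {0,…,n̄−1}∖{e'} of helper racks with |R| = d̄. Suppose there exist natural numbers (β_e)_{e∈R}, functions f_e : (F^l)^u → F^{β_e} for e ∈ R, and a function g such that for every codeword c ∈ C, g applied to ((f_e(c̄_e))_{e∈R}, (c_{e'u+g})_{g∈{0,…,u−1}∖{g'_1,…,g'_h}}) equals (c_{j'_1},…,c_{j'_h}). Then s̄ · ∑_{e∈R} β_e ≥ h·d̄·l. -/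
/-- Counting subsets of given cardinality containing a fixed element. -/
lemma count_subsets_containing {α : Type*} [DecidableEq α] (R : Finset α) (e : α)
    (he : e ∈ R) (m : ℕ) (hm : 1 ≤ m) :
    ((R.powersetCard m).filter (fun S => e ∈ S)).card = (R.card - 1).choose (m - 1) := by
  rw [← Finset.card_erase_of_mem he, ← Finset.card_powersetCard (m - 1) (R.erase e)]
  apply Finset.card_bij (fun S _ => S.erase e)
  · intro S hS
    simp only [Finset.mem_filter, Finset.mem_powersetCard] at hS
    obtain ⟨⟨hSR, hScard⟩, heS⟩ := hS
    rw [Finset.mem_powersetCard]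
    constructor
    · intro x hx
      rw [Finset.mem_erase] at hx ⊢
      exact ⟨hx.1, hSR hx.2⟩
    · rw [Finset.card_erase_of_mem heS, hScard]
  · intro S hS S' hS' hE
    simp only [Finset.mem_filter, Finset.mem_powersetCard] at hS hS'
    rw [← Finset.insert_erase hS.2, ← Finset.insert_erase hS'.2, hE]
  · intro T hT
    rw [Finset.mem_powersetCard] at hT
    obtain ⟨hTR, hTcard⟩ := hT
    have heT : e ∉ T := fun h => (Finset.mem_erase.1 (hTR h)).1 rfl
    refine ⟨insert e T, ?_, ?_⟩
    · simp only [Finset.mem_filter, Finset.mem_powersetCard]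
      refine ⟨⟨?_, ?_⟩, Finset.mem_insert_self e T⟩
      · intro x hx
        rcases Finset.mem_insert.1 hx with rfl | hx
        · exact he
        · exact (Finset.erase_subset e R) (hTR hx)
      · rw [Finset.card_insert_of_notMem heT, hTcard]; omega
    · rw [Finset.erase_insert heT]

/-- **Cut-set bound for repairing `h` nodes in a single rack** (Proposition 1, lower bound).
Nodes are indexed by pairs `(e, g) : Fin nb × Fin u` (rack `e`, node `g` within the rack),
so that node `j = e·u + g`.  `C` is an `(n, k, l)` MDS code over the finite field `F`,
with `n = nb·u`, `k = kb·u + v`.  If the `h` failed nodes `(e', g'_1), …, (e', g'_h)` of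
the host rack `e'` can be recovered, for every codeword, from functions `f_e` of the
contents of each helper rack `e ∈ R` (producing `β e` symbols of `F`) together with the
surviving nodes of the host rack, then `s̄ · ∑_{e ∈ R} β_e ≥ h·d̄·l`. -/
theorem cut_set_bound_multiple_nodes
    (F : Type*) [Field F] [Fintype F]
    (u nb kb v db sb l h : ℕ)
    (hu : 1 < u) (hkb : 1 ≤ kb) (hnb : kb < nb) (hv : v < u)
    (hdb1 : kb ≤ db) (hdb2 : db ≤ nb - 1) (hsb : sb = db - kb + 1)
    (hh1 : 1 ≤ h) (hh2 : h ≤ u) (hh3 : h + v ≤ sb * u)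
    (C : Finset ((Fin nb × Fin u) → Fin l → F))
    (hCcard : C.card = Fintype.card F ^ ((kb * u + v) * l))
    (hMDS : ∀ S : Finset (Fin nb × Fin u), S.card = kb * u + v →
      ∀ c ∈ C, ∀ c' ∈ C, (∀ j ∈ S, c j = c' j) → c = c')
    (e' : Fin nb) (g' : Fin h → Fin u) (hg' : Function.Injective g')
    (R : Finset (Fin nb)) (hR : R.card = db) (he'R : e' ∉ R)
    (β : Fin nb → ℕ)
    (f : (e : Fin nb) → ((Fin u → Fin l → F) → (Fin (β e) → F)))
    (G : ((e : {x // x ∈ R}) → (Fin (β e.1) → F)) →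
         (({g : Fin u // ∀ b, g ≠ g' b}) → Fin l → F) → (Fin h → Fin l → F))
    (hrepair : ∀ c ∈ C,
      G (fun e => f e.1 (fun g => c (e.1, g))) (fun g => c (e', g.1))
        = fun b => c (e', g' b)) :
    h * (db * l) ≤ sb * ∑ e ∈ R, β e := by
  classical
  set q : ℕ := kb * u + v with hq
  have hF2 : 1 < Fintype.card F := Fintype.one_lt_card
  have hsb1 : 1 ≤ sb := by omega
  have hdb0 : 1 ≤ db := le_trans hkb hdb1
  have hsbdb : sb ≤ db := by omega
  have hkbu : (kb - 1) * u + u = kb * u := by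
    have : kb - 1 + 1 = kb := by omega
    calc (kb - 1) * u + u = (kb - 1 + 1) * u := by ring
    _ = kb * u := by rw [this]
  -- main per-subset bound
  have key : ∀ S ∈ R.powersetCard sb, h * l ≤ ∑ e ∈ S, β e := by
    intro S hS
    rw [Finset.mem_powersetCard] at hS
    obtain ⟨hSR, hScard⟩ := hS
    obtain ⟨e₀, he₀⟩ : S.Nonempty := Finset.card_pos.1 (by omega)
    -- the known coordinate set K
    set A : Finset (Fin nb × Fin u) := (R \ S) ×ˢ Finset.univ with hA
    set T : Finset (Fin nb × Fin u) :=
      {e₀} ×ˢ (Finset.univ.map (Fin.castLEEmb hv.le)) with hT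
    set Hs : Finset (Fin nb × Fin u) :=
      {e'} ×ˢ (Finset.univ \ Finset.image g' Finset.univ) with hHs
    have hAcard : A.card = (kb - 1) * u := by
      rw [hA, Finset.card_product, Finset.card_sdiff_of_subset hSR, hR, hScard, Finset.card_univ,
        Fintype.card_fin]
      congr 1; omega
    have hTcard : T.card = v := by
      rw [hT, Finset.card_product, Finset.card_singleton, Finset.card_map, Finset.card_univ,
        Fintype.card_fin, one_mul]
    have hHscard : Hs.card = u - h := by
      rw [hHs, Finset.card_product, Finset.card_singleton, one_mul,
        Finset.card_sdiff_of_subset (Finset.subset_univ _), Finset.card_univ, Fintype.card_fin,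
        Finset.card_image_of_injective _ hg', Finset.card_univ, Fintype.card_fin]
    have he₀R : e₀ ∈ R := hSR he₀
    have he₀S' : e₀ ∉ R \ S := fun hc => (Finset.mem_sdiff.1 hc).2 he₀
    have he'RS : e' ∉ R \ S := fun hc => he'R (Finset.mem_sdiff.1 hc).1
    have he₀e' : e₀ ≠ e' := fun hc => he'R (hc ▸ he₀R)
    have hdAH : Disjoint A Hs := by
      rw [Finset.disjoint_left]
      rintro ⟨a, b⟩ ha hb
      rw [hA, Finset.mem_product] at ha
      rw [hHs, Finset.mem_product, Finset.mem_singleton] at hb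
      exact he'RS (hb.1 ▸ ha.1)
    have hdAT : Disjoint A T := by
      rw [Finset.disjoint_left]
      rintro ⟨a, b⟩ ha hb
      rw [hA, Finset.mem_product] at ha
      rw [hT, Finset.mem_product, Finset.mem_singleton] at hb
      exact he₀S' (hb.1 ▸ ha.1)
    have hdHT : Disjoint Hs T := by
      rw [Finset.disjoint_left]
      rintro ⟨a, b⟩ ha hb
      rw [hHs, Finset.mem_product, Finset.mem_singleton] at ha
      rw [hT, Finset.mem_product, Finset.mem_singleton] at hb
      exact he₀e' (hb.1.symm.trans ha.1)
    set K : Finset (Fin nb × Fin u) := A ∪ Hs ∪ T with hK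
    have hKcard : K.card + h = q := by
      rw [hK, Finset.card_union_of_disjoint, Finset.card_union_of_disjoint hdAH,
        hAcard, hTcard, hHscard]
      · omega
      · exact Finset.disjoint_union_left.2 ⟨hdAT, hdHT⟩
    have hqn : q ≤ nb * u := by
      have h1 : kb + 1 ≤ nb := hnb
      have := Nat.mul_le_mul_right u h1
      rw [add_mul, one_mul] at this
      omega
    obtain ⟨K', hKK', -, hK'card⟩ :=
      Finset.exists_subsuperset_card_eq (n := q) (Finset.subset_univ K) (by omega)
        (by rw [Finset.card_univ, Fintype.card_prod, Fintype.card_fin, Fintype.card_fin]; exact hqn)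
    -- restriction map to K
    set ρ : ((Fin nb × Fin u) → Fin l → F) → ({x // x ∈ K} → Fin l → F) :=
      fun c j => c j.1 with hρ
    have hpart : C.card = ∑ b ∈ Finset.univ, (C.filter (fun c => ρ c = b)).card :=
      Finset.card_eq_sum_card_fiberwise (fun c _ => Finset.mem_univ _)
    have hKKcard : (K' \ K).card = h := by
      rw [Finset.card_sdiff_of_subset hKK', hK'card]; omega
    -- each fiber has at most |F|^(h*l) elements
    have hfiber : ∀ b, (C.filter (fun c => ρ c = b)).card ≤ Fintype.card F ^ (h * l) := by
      intro b
      have hinj : Set.InjOn (fun c (j : {x // x ∈ K' \ K}) => c j.1)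
          ((C.filter (fun c => ρ c = b)) : Set ((Fin nb × Fin u) → Fin l → F)) := by
        intro c hc c' hc' hcc
        simp only [Finset.coe_filter, Set.mem_setOf_eq] at hc hc'
        apply hMDS K' hK'card c hc.1 c' hc'.1
        intro j hj
        by_cases hjK : j ∈ K
        · have := congrFun (hc.2.trans hc'.2.symm) ⟨j, hjK⟩
          exact this
        · exact congrFun hcc ⟨j, Finset.mem_sdiff.2 ⟨hj, hjK⟩⟩
      calc (C.filter (fun c => ρ c = b)).card
          ≤ (Finset.univ : Finset ({x // x ∈ K' \ K} → Fin l → F)).card :=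
            Finset.card_le_card_of_injOn _ (fun _ _ => Finset.mem_univ _) hinj
        _ = Fintype.card F ^ (h * l) := by
            rw [Finset.card_univ, Fintype.card_fun, Fintype.card_fun, Fintype.card_fin,
              Fintype.card_coe, hKKcard, ← pow_mul, mul_comm l h]
    -- pick a codeword
    obtain ⟨c₀, hc₀⟩ : C.Nonempty := by
      rw [← Finset.card_pos, hCcard]; exact pow_pos (by omega) _
    set N := C.filter (fun c => ρ c = ρ c₀) with hN
    -- the fiber of c₀ has at least |F|^(h*l) elements
    have hNcard : Fintype.card F ^ (h * l) ≤ N.card := by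
      by_contra hcon
      push_neg at hcon
      set t : Finset ({x // x ∈ K} → Fin l → F) := Finset.univ with ht
      have htcard : t.card = Fintype.card F ^ (K.card * l) := by
        rw [ht, Finset.card_univ, Fintype.card_fun, Fintype.card_fun, Fintype.card_fin,
          Fintype.card_coe, ← pow_mul, mul_comm l K.card]
      have hb₀ : ρ c₀ ∈ t := Finset.mem_univ _
      have hsplit : ∑ b ∈ t, (C.filter (fun c => ρ c = b)).card
          = N.card + ∑ b ∈ t.erase (ρ c₀), (C.filter (fun c => ρ c = b)).card :=
        (Finset.add_sum_erase t _ hb₀).symm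
      have hrest : ∑ b ∈ t.erase (ρ c₀), (C.filter (fun c => ρ c = b)).card
          ≤ (t.card - 1) * Fintype.card F ^ (h * l) := by
        calc ∑ b ∈ t.erase (ρ c₀), (C.filter (fun c => ρ c = b)).card
            ≤ (t.erase (ρ c₀)).card • (Fintype.card F ^ (h * l)) :=
              Finset.sum_le_card_nsmul _ _ _ (fun b _ => hfiber b)
          _ = (t.card - 1) * Fintype.card F ^ (h * l) := by
              rw [Finset.card_erase_of_mem hb₀, smul_eq_mul]
      have hCeq : C.card = t.card * Fintype.card F ^ (h * l) := by
        rw [hCcard, htcard, ← pow_add]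
        congr 1
        have h3 : K.card * l + h * l = (K.card + h) * l := by ring
        rw [h3, hKcard]
      have htpos : 1 ≤ t.card := Finset.card_pos.2 ⟨ρ c₀, hb₀⟩
      have : C.card < C.card := by
        calc C.card = N.card + ∑ b ∈ t.erase (ρ c₀), (C.filter (fun c => ρ c = b)).card := by
              rw [hpart]; exact hsplit
          _ ≤ N.card + (t.card - 1) * Fintype.card F ^ (h * l) := by omega
          _ < Fintype.card F ^ (h * l) + (t.card - 1) * Fintype.card F ^ (h * l) := by omega
          _ = t.card * Fintype.card F ^ (h * l) := by
              have h3 : t.card - 1 + 1 = t.card := by omega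
              calc Fintype.card F ^ (h * l) + (t.card - 1) * Fintype.card F ^ (h * l)
                  = (t.card - 1 + 1) * Fintype.card F ^ (h * l) := by ring
                _ = t.card * Fintype.card F ^ (h * l) := by rw [h3]
          _ = C.card := hCeq.symm
      omega
    -- the repair data from racks in S determines codewords in the fiber N
    have hinjψ : Set.InjOn (fun c (e : {x // x ∈ S}) => f e.1 (fun g => c (e.1, g)))
        (N : Set ((Fin nb × Fin u) → Fin l → F)) := by
      intro c hc c' hc' hψ
      simp only [hN, Finset.coe_filter, Set.mem_setOf_eq] at hc hc'
      obtain ⟨hcC, hcK⟩ := hc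
      obtain ⟨hc'C, hc'K⟩ := hc'
      have hagreeK : ∀ j ∈ K, c j = c' j := by
        intro j hj
        exact (congrFun (hcK.trans hc'K.symm) ⟨j, hj⟩ : _)
      -- the G inputs agree
      have hf1 : (fun (e : {x // x ∈ R}) => f e.1 (fun g => c (e.1, g)))
          = (fun (e : {x // x ∈ R}) => f e.1 (fun g => c' (e.1, g))) := by
        funext e
        by_cases heS : e.1 ∈ S
        · exact congrFun hψ ⟨e.1, heS⟩
        · have harg : (fun g => c (e.1, g)) = (fun g => c' (e.1, g)) := by
            funext g
            apply hagreeK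
            rw [hK]
            refine Finset.mem_union_left _ (Finset.mem_union_left _ ?_)
            rw [hA, Finset.mem_product]
            exact ⟨Finset.mem_sdiff.2 ⟨e.2, heS⟩, Finset.mem_univ _⟩
          rw [harg]
      have hf2 : (fun (g : {g : Fin u // ∀ b, g ≠ g' b}) => c (e', g.1))
          = (fun (g : {g : Fin u // ∀ b, g ≠ g' b}) => c' (e', g.1)) := by
        funext g
        apply hagreeK
        rw [hK]
        refine Finset.mem_union_left _ (Finset.mem_union_right _ ?_)
        rw [hHs, Finset.mem_product, Finset.mem_singleton]
        refine ⟨rfl, Finset.mem_sdiff.2 ⟨Finset.mem_univ _, ?_⟩⟩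
        rw [Finset.mem_image]
        rintro ⟨b, -, hb⟩
        exact g.2 b hb.symm
      have hfailed : ∀ b, c (e', g' b) = c' (e', g' b) := by
        intro b
        have h1 := hrepair c hcC
        have h2 := hrepair c' hc'C
        rw [hf1, hf2] at h1
        have := h1.symm.trans h2
        exact congrFun this b
      -- now c and c' agree on a set of k coordinates
      set K'' : Finset (Fin nb × Fin u) := ({e'} ×ˢ Finset.univ) ∪ (A ∪ T) with hK''
      have hK''card : K''.card = q := by
        have hd1 : Disjoint ({e'} ×ˢ (Finset.univ : Finset (Fin u))) A := by
          rw [Finset.disjoint_left]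
          rintro ⟨a, b⟩ ha hb
          rw [Finset.mem_product, Finset.mem_singleton] at ha
          rw [hA, Finset.mem_product] at hb
          exact he'RS (ha.1 ▸ hb.1)
        have hd2 : Disjoint ({e'} ×ˢ (Finset.univ : Finset (Fin u))) T := by
          rw [Finset.disjoint_left]
          rintro ⟨a, b⟩ ha hb
          rw [Finset.mem_product, Finset.mem_singleton] at ha
          rw [hT, Finset.mem_product, Finset.mem_singleton] at hb
          exact he₀e' (hb.1.symm.trans ha.1)
        rw [hK'', Finset.card_union_of_disjoint (Finset.disjoint_union_right.2 ⟨hd1, hd2⟩),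
          Finset.card_union_of_disjoint hdAT, hAcard, hTcard, Finset.card_product,
          Finset.card_singleton, Finset.card_univ, Fintype.card_fin, one_mul, hq]
        omega
      apply hMDS K'' hK''card c hcC c' hc'C
      rintro ⟨a, b⟩ hj
      rw [hK'', Finset.mem_union] at hj
      rcases hj with hj | hj
      · rw [Finset.mem_product, Finset.mem_singleton] at hj
        obtain ⟨rfl, -⟩ := hj
        by_cases hb : ∃ i, b = g' i
        · obtain ⟨i, rfl⟩ := hb
          exact hfailed i
        · push_neg at hb
          apply hagreeK
          rw [hK]
          refine Finset.mem_union_left _ (Finset.mem_union_right _ ?_)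
          rw [hHs, Finset.mem_product, Finset.mem_singleton]
          refine ⟨rfl, Finset.mem_sdiff.2 ⟨Finset.mem_univ _, ?_⟩⟩
          rw [Finset.mem_image]
          rintro ⟨i, -, hi⟩
          exact hb i hi.symm
      · apply hagreeK
        rw [hK]
        rcases Finset.mem_union.1 hj with hj | hj
        · exact Finset.mem_union_left _ (Finset.mem_union_left _ hj)
        · exact Finset.mem_union_right _ hj
    -- conclude: |F|^(h*l) ≤ |F|^(∑_{e∈S} β e)
    have hcount : N.card ≤ Fintype.card F ^ (∑ e ∈ S, β e) := by
      calc N.card ≤ (Finset.univ : Finset ((e : {x // x ∈ S}) → Fin (β e.1) → F)).card :=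
            Finset.card_le_card_of_injOn _ (fun _ _ => Finset.mem_univ _) hinjψ
        _ = Fintype.card F ^ (∑ e ∈ S, β e) := by
            rw [Finset.card_univ, Fintype.card_pi]
            have : ∀ e : {x // x ∈ S}, Fintype.card (Fin (β e.1) → F)
                = Fintype.card F ^ β e.1 := by
              intro e
              rw [Fintype.card_fun, Fintype.card_fin]
            rw [Finset.prod_congr rfl (fun e _ => this e), ← Finset.prod_pow_eq_pow_sum]
            exact Finset.prod_coe_sort S (fun e => Fintype.card F ^ β e)
    have : Fintype.card F ^ (h * l) ≤ Fintype.card F ^ (∑ e ∈ S, β e) :=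
      le_trans hNcard hcount
    exact (Nat.pow_le_pow_iff_right hF2).1 this
  -- averaging over all subsets S of size sb
  set P := R.powersetCard sb with hP
  have hPcard : P.card = db.choose sb := by rw [hP, Finset.card_powersetCard, hR]
  have hsum1 : db.choose sb * (h * l) ≤ ∑ S ∈ P, ∑ e ∈ S, β e := by
    have := Finset.card_nsmul_le_sum P (fun S => ∑ e ∈ S, β e) (h * l) key
    rwa [smul_eq_mul, hPcard] at this
  have hsum2 : ∑ S ∈ P, ∑ e ∈ S, β e = (db - 1).choose (sb - 1) * ∑ e ∈ R, β e := by
    have hstep : ∀ S ∈ P, ∑ e ∈ S, β e = ∑ e ∈ R, if e ∈ S then β e else 0 := by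
      intro S hS
      rw [hP, Finset.mem_powersetCard] at hS
      rw [← Finset.sum_filter]
      congr 1
      rw [Finset.filter_mem_eq_inter, Finset.inter_eq_right.2 hS.1]
    rw [Finset.sum_congr rfl hstep, Finset.sum_comm]
    rw [Finset.mul_sum]
    apply Finset.sum_congr rfl
    intro e he
    rw [← Finset.sum_filter, Finset.sum_const, smul_eq_mul]
    congr 1
    rw [hP, count_subsets_containing R e he sb hsb1, hR]
  -- combine
  have hid : db * (db - 1).choose (sb - 1) = db.choose sb * sb := by
    have h1 : db - 1 + 1 = db := by omega
    have h2 : sb - 1 + 1 = sb := by omega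
    have := Nat.add_one_mul_choose_eq (db - 1) (sb - 1)
    rwa [h1, h2] at this
  set cc := (db - 1).choose (sb - 1) with hcc
  have hccpos : 0 < cc := Nat.choose_pos (by omega)
  have hmain : cc * (h * (db * l)) ≤ cc * (sb * ∑ e ∈ R, β e) := by
    calc cc * (h * (db * l)) = db * cc * (h * l) := by ring
      _ = db.choose sb * sb * (h * l) := by rw [hid]
      _ = sb * (db.choose sb * (h * l)) := by ring
      _ ≤ sb * ∑ S ∈ P, ∑ e ∈ S, β e := Nat.mul_le_mul_left sb hsum1
      _ = sb * (cc * ∑ e ∈ R, β e) := by rw [hsum2]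
      _ = cc * (sb * ∑ e ∈ R, β e) := by ring
  exact Nat.le_of_mul_le_mul_left hmain hccpos
end

section
/- Cut-set bound for repairing h nodes in a single rack (Proposition 1, equality characterization). Under the hypotheses of the cut-set bound (an (n,k,l) MDS code C over F, failed nodes j'_1,…,j'_h in host rack e' with 1 ≤ h ≤ min{u, s̄u − v}, helper racks R with |R| = d̄, and repair functions f_e : (F^l)^u → F^{β_e} and g recovering the failed nodes from ((f_e(c̄_e))_{e∈R}, (c_{e'u+g})_{g∉{g'_1,…,g'_h}}) for every c ∈ C), assume in addition k̄ ≥ 2. If s̄ · ∑_{e∈R} β_e = h·d̄·l, then s̄·β_e = h·l for every e ∈ R; that is, equality in the cut-set bound forces every helper rack to contribute exactly hl/s̄ symbols of F. -/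
/-!
Fix a set `S` of `s̄` helper racks. The host rack and the `d̄ - s̄ = k̄ - 1` helper racks outside
`S` hold `k̄u ≤ k` nodes, so by the MDS property a codeword can take any prescribed contents on them.
With the surviving nodes of these racks fixed, the `h` failed nodes still range over all of
`(F^l)^h`, while the repair recovers them from the outputs of the racks in `S` alone; hence
`hl ≤ ∑_{e ∈ S} β_e`. Summed over all `s̄`-subsets of `R`, these bounds add up to exactly the
assumed equality, so each of them is an equality, and as `s̄ < d̄`, exchanging one rack of such
a subset for another shows that all `β_e` with `e ∈ R` coincide.
-/

open Finset

namespace Finset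

variable {ι : Type*} [DecidableEq ι] {R : Finset ι} {s : ℕ}

theorem sum_powersetCard_sum {M : Type*} [AddCommMonoid M] (β : ι → M) (hs : 0 < s) :
    ∑ S ∈ R.powersetCard s, ∑ e ∈ S, β e = (#R - 1).choose (s - 1) • ∑ e ∈ R, β e := by
  rw [sum_comm' (t' := R) (s' := fun e => (R.powersetCard s).filter ({e} ⊆ ·))
    (fun S e => by simp only [mem_filter, mem_powersetCard, singleton_subset_iff]; grind),
    smul_sum]
  refine sum_congr rfl fun e he => ?_
  rw [sum_const, card_filter_powersetCard_subset _ _ _ (singleton_subset_iff.2 he)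
    (by rwa [card_singleton]), card_singleton]

theorem sum_eq_of_forall_powersetCard_le (β : ι → ℕ) {T : ℕ} (hs : 0 < s) (hsR : s ≤ #R)
    (hge : ∀ S ∈ R.powersetCard s, T ≤ ∑ e ∈ S, β e) (heq : s * ∑ e ∈ R, β e = #R * T) :
    ∀ S ∈ R.powersetCard s, ∑ e ∈ S, β e = T := by
  have hchoose := Nat.add_one_mul_choose_eq (#R - 1) (s - 1)
  rw [Nat.sub_add_cancel (by omega), Nat.sub_add_cancel hs] at hchoose
  have htotal : ∑ S ∈ R.powersetCard s, T = ∑ S ∈ R.powersetCard s, ∑ e ∈ S, β e := by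
    rw [sum_const, card_powersetCard, sum_powersetCard_sum β hs, smul_eq_mul, smul_eq_mul]
    refine Nat.eq_of_mul_eq_mul_left hs ?_
    calc s * ((#R).choose s * T) = #R * (#R - 1).choose (s - 1) * T := by rw [hchoose]; ring
      _ = s * ((#R - 1).choose (s - 1) * ∑ e ∈ R, β e) := by rw [mul_left_comm, heq]; ring
  exact fun S hS => ((sum_eq_sum_iff_of_le hge).1 htotal S hS).symm

theorem apply_eq_of_sum_powersetCard_eq {M : Type*} [AddCancelCommMonoid M] {β : ι → M} {T : M}
    (hs : 0 < s) (hsR : s < #R) (hsum : ∀ S ∈ R.powersetCard s, ∑ e ∈ S, β e = T)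
    {a b : ι} (ha : a ∈ R) (hb : b ∈ R) : β a = β b := by
  obtain rfl | hab := eq_or_ne a b
  · rfl
  obtain ⟨S, hSR, hS⟩ := exists_subset_card_eq (s := (R.erase a).erase b) (n := s - 1)
    (by rw [card_erase_of_mem (mem_erase.2 ⟨hab.symm, hb⟩), card_erase_of_mem ha]; omega)
  have haS : a ∉ S := fun h => by simpa using (mem_erase.1 (hSR h)).2
  have hbS : b ∉ S := fun h => (mem_erase.1 (hSR h)).1 rfl
  have hSR' : S ⊆ R := hSR.trans ((erase_subset _ _).trans (erase_subset _ _))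
  have hsa := hsum (insert a S) (mem_powersetCard.2 ⟨insert_subset ha hSR', by
    rw [card_insert_of_notMem haS, hS]; omega⟩)
  have hsb := hsum (insert b S) (mem_powersetCard.2 ⟨insert_subset hb hSR', by
    rw [card_insert_of_notMem hbS, hS]; omega⟩)
  rw [sum_insert haS] at hsa
  rw [sum_insert hbS] at hsb
  exact add_right_cancel (hsa.trans hsb.symm)

theorem mul_eq_of_forall_powersetCard_le (β : ι → ℕ) {T : ℕ} (hs : 0 < s) (hsR : s < #R)
    (hge : ∀ S ∈ R.powersetCard s, T ≤ ∑ e ∈ S, β e) (heq : s * ∑ e ∈ R, β e = #R * T) :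
    ∀ e ∈ R, s * β e = T := by
  intro e he
  have hconst : ∀ a ∈ R, β a = β e := fun a ha =>
    apply_eq_of_sum_powersetCard_eq hs hsR
      (sum_eq_of_forall_powersetCard_le β hs hsR.le hge heq) ha he
  rw [sum_congr rfl hconst, sum_const, smul_eq_mul, mul_left_comm] at heq
  exact Nat.eq_of_mul_eq_mul_left (by omega) heq

end Finset

section Restriction

variable {ι A : Type*} [DecidableEq ι] [Fintype A]

theorem exists_mem_eqOn_of_mds [Fintype ι] {C : Finset (ι → A)} {k : ℕ}
    (hC : #C = Fintype.card A ^ k)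
    (hMDS : ∀ S : Finset ι, #S = k → ∀ c ∈ C, ∀ c' ∈ C, (∀ j ∈ S, c j = c' j) → c = c')
    (hk : k ≤ Fintype.card ι) {B : Finset ι} (hB : #B ≤ k) (t : ι → A) :
    ∃ c ∈ C, ∀ j ∈ B, c j = t j := by
  classical
  obtain ⟨K, hBK, -, hK⟩ := exists_subsuperset_card_eq (subset_univ B) hB (by rwa [card_univ])
  let restrict : (ι → A) → (K → A) := fun c j => c j
  have hinj : Set.InjOn restrict C := fun c hc c' hc' h =>
    hMDS K hK c hc c' hc' fun j hj => congrFun h ⟨j, hj⟩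
  have himage : C.image restrict = univ := eq_univ_of_card _ <| by
    rw [card_image_of_injOn hinj, hC, Fintype.card_fun, Fintype.card_coe, hK]
  obtain ⟨c, hc, hct⟩ := mem_image.1 (himage ▸ mem_univ (fun j : K => t j))
  exact ⟨c, hc, fun j hj => congrFun hct ⟨j, hBK hj⟩⟩

theorem card_pow_le_of_determined {W : Type*} [Fintype W] [Nonempty A] {C : Set (ι → A)}
    {B L : Finset ι} (hLB : L ⊆ B) (hext : ∀ t : ι → A, ∃ c ∈ C, ∀ j ∈ B, c j = t j)
    (w : (ι → A) → W)
    (hdet : ∀ c ∈ C, ∀ c' ∈ C, (∀ j ∈ B \ L, c j = c' j) → w c = w c' → ∀ j ∈ L, c j = c' j) :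
    Fintype.card A ^ #L ≤ Fintype.card W := by
  choose c hcC hc using fun t : L → A =>
    hext fun j => if h : j ∈ L then t ⟨j, h⟩ else Classical.arbitrary A
  have hinj : Function.Injective (w ∘ c) := by
    intro t t' htt
    have hknown : ∀ j ∈ B \ L, c t j = c t' j := fun j hj => by
      rw [hc t j (mem_sdiff.1 hj).1, hc t' j (mem_sdiff.1 hj).1]
      simp [(mem_sdiff.1 hj).2]
    funext j
    simpa [hc t j (hLB j.2), hc t' j (hLB j.2)] using
      hdet _ (hcC t) _ (hcC t') hknown htt j j.2
  simpa using Fintype.card_le_of_injective _ hinj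

end Restriction

theorem mul_le_sum_of_repair {F : Type*} [Field F] [Fintype F] {nb u kb v l h : ℕ}
    (hk : kb * u + v ≤ nb * u)
    {C : Finset ((Fin nb × Fin u) → Fin l → F)}
    (hCcard : #C = Fintype.card F ^ ((kb * u + v) * l))
    (hMDS : ∀ S : Finset (Fin nb × Fin u), #S = kb * u + v →
      ∀ c ∈ C, ∀ c' ∈ C, (∀ j ∈ S, c j = c' j) → c = c')
    {e' : Fin nb} {g' : Fin h → Fin u} (hg' : Function.Injective g')
    {R : Finset (Fin nb)} (he'R : e' ∉ R) {β : Fin nb → ℕ}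
    {f : (e : Fin nb) → ((Fin u → Fin l → F) → (Fin (β e) → F))}
    {G : ((e : {x // x ∈ R}) → (Fin (β e.1) → F)) →
         (({g : Fin u // ∀ b, g ≠ g' b}) → Fin l → F) → (Fin h → Fin l → F)}
    (hrepair : ∀ c ∈ C,
      G (fun e => f e.1 (fun g => c (e.1, g))) (fun g => c (e', g.1))
        = fun b => c (e', g' b))
    {S : Finset (Fin nb)} (hSR : S ⊆ R) (hS : #R + 1 = #S + kb) :
    h * l ≤ ∑ e ∈ S, β e := by
  -- `B`: the host rack and the helper racks outside `S`; `L`: the failed nodes.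
  set B : Finset (Fin nb × Fin u) := insert e' (R \ S) ×ˢ univ
  set L : Finset (Fin nb × Fin u) := {e'} ×ˢ univ.image g'
  have hLB : L ⊆ B :=
    product_subset_product (singleton_subset_iff.2 (mem_insert_self _ _)) (subset_univ _)
  have hBcard : #B = kb * u := by
    rw [card_product, card_insert_of_notMem (fun h => he'R (mem_sdiff.1 h).1),
      card_sdiff_of_subset hSR, card_univ, Fintype.card_fin,
      show #R - #S + 1 = kb by have := card_le_card hSR; omega]
  have hLcard : #L = h := by
    rw [card_product, card_singleton, card_image_of_injective _ hg', card_univ, Fintype.card_fin,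
      one_mul]
  have hext := exists_mem_eqOn_of_mds (A := Fin l → F)
    (by rw [hCcard, Fintype.card_fun, Fintype.card_fin, ← pow_mul, mul_comm]) hMDS
    (by simpa using hk) (hBcard.trans_le (Nat.le_add_right _ v))
  have hdet : ∀ c ∈ C, ∀ c' ∈ C, (∀ j ∈ B \ L, c j = c' j) →
      (fun e : S => f e fun g => c (e, g)) = (fun e : S => f e fun g => c' (e, g)) →
      ∀ j ∈ L, c j = c' j := by
    rintro c hc c' hc' hknown hw ⟨j₁, j₂⟩ hj
    obtain ⟨hj₁, hj₂⟩ := mem_product.1 hj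
    obtain ⟨b, -, hb⟩ := mem_image.1 hj₂
    rw [show j₁ = e' from mem_singleton.1 hj₁, ← show g' b = j₂ from hb,
      ← congrFun (hrepair c hc) b, ← congrFun (hrepair c' hc') b]
    congr 1
    · funext e
      by_cases hes : e.1 ∈ S
      · exact congrFun hw ⟨e, hes⟩
      · refine congrArg (f e) (funext fun g => hknown _ ?_)
        have he : e.1 ≠ e' := ne_of_mem_of_not_mem e.2 he'R
        simp [B, L, e.2, hes, he.symm]
    · funext g
      refine hknown _ ?_
      simpa [B, L] using fun b => (g.2 b).symm
  have := card_pow_le_of_determined hLB hext _ hdet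
  simp only [hLcard, Fintype.card_fun, Fintype.card_fin, Fintype.card_pi, prod_pow_eq_pow_sum,
    ← pow_mul] at this
  rw [mul_comm, ← sum_coe_sort S]
  exact (Nat.pow_le_pow_iff_right Fintype.one_lt_card).1 this

theorem cut_set_bound_equality_general
    (F : Type*) [Field F] [Fintype F]
    (u nb kb v db sb l h : ℕ)
    (hkb : 2 ≤ kb) (hnb : kb < nb) (hv : v < u)
    (hdb1 : kb ≤ db) (hsb : sb = db - kb + 1)
    (C : Finset ((Fin nb × Fin u) → Fin l → F))
    (hCcard : C.card = Fintype.card F ^ ((kb * u + v) * l))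
    (hMDS : ∀ S : Finset (Fin nb × Fin u), S.card = kb * u + v →
      ∀ c ∈ C, ∀ c' ∈ C, (∀ j ∈ S, c j = c' j) → c = c')
    (e' : Fin nb) (g' : Fin h → Fin u) (hg' : Function.Injective g')
    (R : Finset (Fin nb)) (hR : R.card = db) (he'R : e' ∉ R)
    (β : Fin nb → ℕ)
    (f : (e : Fin nb) → ((Fin u → Fin l → F) → (Fin (β e) → F)))
    (G : ((e : {x // x ∈ R}) → (Fin (β e.1) → F)) →
         (({g : Fin u // ∀ b, g ≠ g' b}) → Fin l → F) → (Fin h → Fin l → F))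
    (hrepair : ∀ c ∈ C,
      G (fun e => f e.1 (fun g => c (e.1, g))) (fun g => c (e', g.1))
        = fun b => c (e', g' b))
    (heq : sb * ∑ e ∈ R, β e = h * (db * l)) :
    ∀ e ∈ R, sb * β e = h * l := by
  have hk : kb * u + v ≤ nb * u :=
    calc kb * u + v ≤ (kb + 1) * u := by rw [add_one_mul]; omega
      _ ≤ nb * u := Nat.mul_le_mul_right u hnb
  refine mul_eq_of_forall_powersetCard_le β (by omega) (by omega) (fun S hS => ?_)
    (by rw [heq, hR]; ring)
  obtain ⟨hSR, hScard⟩ := mem_powersetCard.1 hS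
  exact mul_le_sum_of_repair hk hCcard hMDS hg' he'R hrepair hSR (by omega)

/-- **Cut-set bound, equality characterization** (Proposition 1).
Under the hypotheses of the cut-set bound, with `k̄ ≥ 2`, if
`s̄ · ∑_{e ∈ R} β_e = h·d̄·l`, then `s̄ · β_e = h·l` for every helper rack `e ∈ R`. -/
theorem cut_set_bound_equality
    (F : Type*) [Field F] [Fintype F]
    (u nb kb v db sb l h : ℕ)
    (hu : 1 < u) (hkb : 2 ≤ kb) (hnb : kb < nb) (hv : v < u)
    (hdb1 : kb ≤ db) (hdb2 : db ≤ nb - 1) (hsb : sb = db - kb + 1)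
    (hh1 : 1 ≤ h) (hh2 : h ≤ u) (hh3 : h + v ≤ sb * u)
    (C : Finset ((Fin nb × Fin u) → Fin l → F))
    (hCcard : C.card = Fintype.card F ^ ((kb * u + v) * l))
    (hMDS : ∀ S : Finset (Fin nb × Fin u), S.card = kb * u + v →
      ∀ c ∈ C, ∀ c' ∈ C, (∀ j ∈ S, c j = c' j) → c = c')
    (e' : Fin nb) (g' : Fin h → Fin u) (hg' : Function.Injective g')
    (R : Finset (Fin nb)) (hR : R.card = db) (he'R : e' ∉ R)
    (β : Fin nb → ℕ)
    (f : (e : Fin nb) → ((Fin u → Fin l → F) → (Fin (β e) → F)))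
    (G : ((e : {x // x ∈ R}) → (Fin (β e.1) → F)) →
         (({g : Fin u // ∀ b, g ≠ g' b}) → Fin l → F) → (Fin h → Fin l → F))
    (hrepair : ∀ c ∈ C,
      G (fun e => f e.1 (fun g => c (e.1, g))) (fun g => c (e', g.1))
        = fun b => c (e', g' b))
    (heq : sb * ∑ e ∈ R, β e = h * (db * l)) :
    ∀ e ∈ R, sb * β e = h * l :=
  cut_set_bound_equality_general F u nb kb v db sb l h hkb hnb hv hdb1 hsb C hCcard hMDS e' g' hg' R
    hR he'R β f G hrepair heq
end

section
/- Theorem 1 (total access bound). Let C be an (n,k,l) MDS linear array code over a finite field F and let P be an hl × nl matrix over F whose rows lie in C^⊥, where 1 ≤ h ≤ min{u, s̄u − v}, such that: (i) rank [P_{j'_1},…,P_{j'_h}] = hl for distinct failed nodes j'_b = e'u + g'_b in a host rack e'; (ii) there is a set R ⊆ {0,…,n̄−1}∖{e'} with |R| = d̄ such that P̄_e = 0 for every e ∉ R ∪ {e'}; and (iii) s̄ · rank P̄_e = hl for every e ∈ R. Then the total number of accessed symbols satisfies s̄(u−v) · ∑_{e∈R} acs(P̄_e) ≥ h·d̄·u·l.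 -/
/-!
Since `C` is MDS, a dual codeword vanishing outside `k` nodes is zero; hence deleting the columns
of `P` at any `k` nodes does not shrink its column span, whose dimension is at least `hl` because
of the failed nodes. For a helper rack `e ∈ R`, delete the host rack `e'`, all but `s̄ - 1` of the
other helper racks, and `v` nodes of rack `e`: these are `k̄u + v = k` nodes, so
`hl ≤ (s̄ - 1) · hl/s̄ + rank` of the surviving columns of rack `e`, i.e. any `u - v` nodes
of rack `e` already carry rank `hl/s̄`. Averaging over the `u` cyclic translates of the `v`
deleted nodes gives `u · rank P̄_e ≤ (u - v) · acs(P̄_e)`, and summing over `R` gives the bound.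
-/

open Module Submodule Finset

section MDS

variable {F ι κ : Type*} [Field F] [Fintype ι] [Fintype κ] [DecidableEq ι] [DecidableEq κ]

structure IsMDS (C : Submodule F (ι → κ → F)) (k : ℕ) : Prop where
  finrank_eq : finrank F C = k * Fintype.card κ
  eq_zero_of_eqOn_zero : ∀ c ∈ C, ∀ S : Finset ι, S.card = k → (∀ j ∈ S, c j = 0) → c = 0

variable {C : Submodule F (ι → κ → F)} {k : ℕ}

theorem IsMDS.exists_mem_eqOn_single (hC : IsMDS C k) {S : Finset ι} (hS : S.card = k)
    (j : ι) (i : κ) : ∃ c ∈ C, ∀ j' ∈ S, c j' = (Pi.single j (Pi.single i 1) : ι → κ → F) j' := by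
  let π : C →ₗ[F] (S → κ → F) := (LinearMap.funLeft F (κ → F) ((↑) : S → ι)).comp C.subtype
  have hinj : Function.Injective π := by
    rw [← LinearMap.ker_eq_bot, LinearMap.ker_eq_bot']
    exact fun c hc =>
      Subtype.ext (hC.eq_zero_of_eqOn_zero c c.2 S hS fun j hj => congrFun hc ⟨j, hj⟩)
  have hdim : finrank F C = finrank F (S → κ → F) := by
    rw [hC.finrank_eq, Module.finrank_pi_fintype]; simp [hS]
  have hsurj : Function.Surjective π :=
    (LinearMap.injective_iff_surjective_of_finrank_eq_finrank hdim).mp hinj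
  obtain ⟨c, hc⟩ := hsurj fun j' => (Pi.single j (Pi.single i 1) : ι → κ → F) j'
  exact ⟨c, c.2, fun j' hj' => congrFun hc ⟨j', hj'⟩⟩

theorem IsMDS.eq_zero_of_orthogonal (hC : IsMDS C k) (hk : k ≤ Fintype.card ι)
    {y : ι → κ → F} (hy : ∀ c ∈ C, ∑ j, ∑ i, y j i * c j i = 0)
    {S : Finset ι} (hS : S.card ≤ k) (hyS : ∀ j ∉ S, y j = 0) : y = 0 := by
  obtain ⟨S', hSS', hS'⟩ := Finset.exists_superset_card_eq hS (by simpa using hk)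
  have hyS' : ∀ j ∉ S', y j = 0 := fun j hj => hyS j fun h => hj (hSS' h)
  funext j i
  by_cases hj : j ∈ S'
  · obtain ⟨c, hc, hcS'⟩ := hC.exists_mem_eqOn_single hS' j i
    calc y j i = ∑ j', ∑ i', y j' i' * c j' i' := by
          rw [Finset.sum_eq_single j]
          · simp [hcS' j hj, Pi.single_apply]
          · intro j' _ hj'
            by_cases hj'S : j' ∈ S'
            · simp [hcS' j' hj'S, hj']
            · simp [hyS' j' hj'S]
          · simp
      _ = 0 := hy c hc
  · exact congrFun (hyS' j hj) i

variable {V : Type*} [AddCommGroup V] [Module F V]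

theorem IsMDS.span_image_compl_eq (hC : IsMDS C k) (hk : k ≤ Fintype.card ι) {col : ι × κ → V}
    (hcol : ∀ c ∈ C, ∑ j, ∑ i, c j i • col (j, i) = 0) {S : Finset ι} (hS : S.card ≤ k) :
    span F (col '' {q | q.1 ∉ S}) = span F (Set.range col) := by
  refine le_antisymm (span_mono (Set.image_subset_range _ _)) (span_le.2 ?_)
  rintro _ ⟨q, rfl⟩
  by_contra hq
  obtain ⟨φ, hφq, hφS⟩ := exists_dual_map_eq_bot_of_notMem hq inferInstance
  suffices (fun j i => φ (col (j, i))) = 0 from hφq (congrFun (congrFun this q.1) q.2)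
  refine hC.eq_zero_of_orthogonal hk (fun c hc => ?_) hS (fun j hj => funext fun i => ?_)
  · calc ∑ j, ∑ i, φ (col (j, i)) * c j i = φ (∑ j, ∑ i, c j i • col (j, i)) := by
          simp [map_sum, mul_comm]
      _ = 0 := by rw [hcol c hc, map_zero]
  · have hmem : col (j, i) ∈ span F (col '' {q | q.1 ∉ S}) := subset_span ⟨(j, i), hj, rfl⟩
    simpa [hφS] using Submodule.mem_map_of_mem (f := φ) hmem

end MDS

theorem Submodule.finrank_biSup_le_sum {F V ι : Type*} [Field F] [AddCommGroup V] [Module F V]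
    [FiniteDimensional F V] (T : Finset ι) (W : ι → Submodule F V) :
    finrank F (⨆ i ∈ T, W i : Submodule F V) ≤ ∑ i ∈ T, finrank F (W i) := by
  classical
  induction T using Finset.induction_on with
  | empty => simp
  | insert a T ha ih =>
    rw [Finset.iSup_insert, Finset.sum_insert ha]
    exact (finrank_add_le_finrank_add_finrank _ _).trans (by omega)

theorem finrank_span_image_le_card_filter {F V ι : Type*} [Field F] [AddCommGroup V] [Module F V]
    [Fintype ι] [DecidableEq V] (f : ι → V) (s : Set ι) [DecidablePred (· ∈ s)] :
    finrank F (span F (f '' s)) ≤ #{i | i ∈ s ∧ f i ≠ 0} := by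
  have hle : span F (f '' s) ≤
      span F ((({i | i ∈ s ∧ f i ≠ 0} : Finset ι).image f : Finset V) : Set V) := by
    rw [span_le]
    rintro _ ⟨i, hi, rfl⟩
    by_cases hfi : f i = 0
    · simp [hfi]
    · exact subset_span (by simp; exact ⟨i, ⟨hi, hfi⟩, rfl⟩)
  exact (Submodule.finrank_mono hle).trans ((finrank_span_finset_le_card _).trans card_image_le)

theorem Finset.card_mul_le_of_le_card_filter_sub_notMem {G α : Type*} [AddGroup G] [Fintype G]
    [DecidableEq G] (D : Finset G) (A : Finset α) (π : α → G) {ρ : ℕ}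
    (h : ∀ t, ρ ≤ #{a ∈ A | π a - t ∉ D}) : Fintype.card G * ρ ≤ (Fintype.card G - #D) * #A := by
  have hcount : ∀ x : G, #{t | x - t ∉ D} = Fintype.card G - #D := fun x => by
    rw [filter_not, card_sdiff_of_subset (filter_subset _ _), card_univ,
      card_equiv (Equiv.subLeft x) (t := D) (by simp)]
  calc Fintype.card G * ρ = ∑ _t : G, ρ := by simp
    _ ≤ ∑ t, #{a ∈ A | π a - t ∉ D} := sum_le_sum fun t _ => h t
    _ = ∑ a ∈ A, #{t | π a - t ∉ D} := by simp only [card_filter]; exact sum_comm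
    _ = (Fintype.card G - #D) * #A := by rw [sum_congr rfl fun a _ => hcount (π a)]; simp [mul_comm]

section Racks

variable {F V ε γ κ : Type*} [Field F] [AddCommGroup V] [Module F V] [FiniteDimensional F V]
  [Fintype ε] [Fintype γ] [Fintype κ] [DecidableEq ε] [DecidableEq γ] [DecidableEq κ]
  {C : Submodule F ((ε × γ) → κ → F)} {k : ℕ} {col : (ε × γ) × κ → V}

def rackCols (col : (ε × γ) × κ → V) (e : ε) : γ × κ → V := fun gi => col ((e, gi.1), gi.2)

theorem IsMDS.finrank_span_le_sum_rack_add (hC : IsMDS C k) (hk : k ≤ Fintype.card (ε × γ))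
    (hcol : ∀ c ∈ C, ∑ j, ∑ i, c j i • col (j, i) = 0) {R T : Finset ε} {e e' : ε}
    (hzero : ∀ e₁ ∉ R, e₁ ≠ e' → ∀ g i, col ((e₁, g), i) = 0)
    (he : e ∈ R) (hT : T ⊆ R.erase e) {D : Finset γ}
    (hS : (#R - #T) * Fintype.card γ + #D ≤ k) :
    finrank F (span F (Set.range col)) ≤ ∑ e₁ ∈ T, finrank F (span F (Set.range (rackCols col e₁)))
      + finrank F (span F (rackCols col e '' {gi | gi.1 ∉ D})) := by
  set O := insert e' (R \ insert e T)
  set S : Finset (ε × γ) := O ×ˢ univ ∪ {e} ×ˢ D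
  have hO : #O ≤ #R - #T := by
    have heT : e ∉ T := fun h => by simpa using hT h
    have hsub : insert e T ⊆ R := insert_subset he (hT.trans (erase_subset e R))
    have hR := card_le_card hsub
    rw [card_insert_of_notMem heT] at hR
    calc #O ≤ #(R \ insert e T) + 1 := card_insert_le _ _
      _ = #R - #T := by rw [card_sdiff_of_subset hsub, card_insert_of_notMem heT]; omega
  have hScard : #S ≤ k := calc
    #S ≤ #O * Fintype.card γ + #D := by
      refine (card_union_le _ _).trans ?_
      simp [card_product]
    _ ≤ k := le_trans (by gcongr) hS
  rw [← hC.span_image_compl_eq hk hcol hScard]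
  have hle : span F (col '' {q | q.1 ∉ S}) ≤
      (⨆ e₁ ∈ T, span F (Set.range (rackCols col e₁))) ⊔
        span F (rackCols col e '' {gi | gi.1 ∉ D}) := by
    rw [span_le]
    rintro _ ⟨⟨⟨e₁, g⟩, i⟩, hq, rfl⟩
    simp only [Set.mem_ofPred_eq, S, O, mem_union, mem_product, mem_insert, mem_sdiff, mem_univ,
      and_true, mem_singleton, not_or, not_and] at hq
    by_cases he₁T : e₁ ∈ T
    · exact mem_sup_left (mem_iSup_of_mem e₁ (mem_iSup_of_mem he₁T (subset_span ⟨(g, i), rfl⟩)))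
    by_cases he₁ : e₁ = e
    · subst he₁
      exact mem_sup_right (subset_span ⟨(g, i), hq.2 rfl, rfl⟩)
    · have : col ((e₁, g), i) = 0 := hzero e₁ (fun h => hq.1.2 h he₁ he₁T) hq.1.1 g i
      simp [this]
  calc _ ≤ _ := Submodule.finrank_mono hle
    _ ≤ _ := finrank_add_le_finrank_add_finrank _ _
    _ ≤ _ := by gcongr; exact Submodule.finrank_biSup_le_sum _ _

theorem IsMDS.finrank_rack_le_card_filter [DecidableEq V] (hC : IsMDS C k)
    (hk : k ≤ Fintype.card (ε × γ)) (hcol : ∀ c ∈ C, ∑ j, ∑ i, c j i • col (j, i) = 0)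
    {R : Finset ε} {e e' : ε} (hzero : ∀ e₁ ∉ R, e₁ ≠ e' → ∀ g i, col ((e₁, g), i) = 0)
    {N s : ℕ} (hN : N ≤ finrank F (span F (Set.range col)))
    (hrank : ∀ e₁ ∈ R, s * finrank F (span F (Set.range (rackCols col e₁))) = N)
    (hs : 1 ≤ s) (hsR : s ≤ #R) (he : e ∈ R) {D : Finset γ}
    (hD : (#R + 1 - s) * Fintype.card γ + #D ≤ k) :
    finrank F (span F (Set.range (rackCols col e))) ≤ #{gi | gi.1 ∉ D ∧ rackCols col e gi ≠ 0} := by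
  have hNe := hrank e he
  set ρ := finrank F (span F (Set.range (rackCols col e)))
  obtain ⟨T, hT, hTcard⟩ := exists_subset_card_eq (s := R.erase e) (n := s - 1)
    (by rw [card_erase_of_mem he]; omega)
  have hrankT : ∀ e₁ ∈ T, finrank F (span F (Set.range (rackCols col e₁))) = ρ := fun e₁ he₁ =>
    Nat.eq_of_mul_eq_mul_left hs ((hrank e₁ (mem_of_mem_erase (hT he₁))).trans hNe.symm)
  have hbound := hC.finrank_span_le_sum_rack_add hk hcol hzero he hT (D := D)
    (by rw [hTcard]; convert hD using 3; omega)
  rw [sum_congr rfl hrankT, sum_const, hTcard, smul_eq_mul] at hbound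
  have hsρ : s * ρ = (s - 1) * ρ + ρ := by
    rw [← Nat.succ_mul, Nat.succ_eq_add_one, Nat.sub_add_cancel hs]
  have hoff : ρ ≤ finrank F (span F (rackCols col e '' {gi | gi.1 ∉ D})) := by omega
  exact hoff.trans (finrank_span_image_le_card_filter _ _)

theorem IsMDS.card_mul_le_mul_card_rackCols_ne_zero [AddGroup γ] [DecidableEq V] (hC : IsMDS C k)
    (hk : k ≤ Fintype.card (ε × γ)) (hcol : ∀ c ∈ C, ∑ j, ∑ i, c j i • col (j, i) = 0)
    {R : Finset ε} {e e' : ε} (hzero : ∀ e₁ ∉ R, e₁ ≠ e' → ∀ g i, col ((e₁, g), i) = 0)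
    {N s : ℕ} (hN : N ≤ finrank F (span F (Set.range col)))
    (hrank : ∀ e₁ ∈ R, s * finrank F (span F (Set.range (rackCols col e₁))) = N)
    (hs : 1 ≤ s) (hsR : s ≤ #R) (he : e ∈ R) {v : ℕ} (hv : v ≤ Fintype.card γ)
    (hkv : (#R + 1 - s) * Fintype.card γ + v ≤ k) :
    Fintype.card γ * N ≤ s * (Fintype.card γ - v) * #{gi | rackCols col e gi ≠ 0} := by
  obtain ⟨D, -, hD⟩ := exists_subset_card_eq (s := (univ : Finset γ)) (n := v) (by simpa using hv)
  have hwindow := card_mul_le_of_le_card_filter_sub_notMem D {gi | rackCols col e gi ≠ 0} Prod.fst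
    fun t => by
      have := hC.finrank_rack_le_card_filter hk hcol hzero hN hrank hs hsR he
        (D := D.map (Equiv.subRight t).symm.toEmbedding) (by simpa [hD] using hkv)
      convert this using 2
      ext gi
      simp [and_comm]
  rw [hD] at hwindow
  calc Fintype.card γ * N
      = s * (Fintype.card γ * finrank F (span F (Set.range (rackCols col e)))) := by
        rw [← hrank e he]; ring
    _ ≤ s * (Fintype.card γ - v) * #{gi | rackCols col e gi ≠ 0} := by
        rw [mul_assoc]; gcongr

end Racks

theorem total_access_bound_general
    (F : Type*) [Field F] [DecidableEq F]
    (u nb kb v db sb l h : ℕ)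
    (hkb : 1 ≤ kb) (hnb : kb < nb) (hv : v < u)
    (hdb1 : kb ≤ db) (hsb : sb = db - kb + 1)
    (C : Submodule F ((Fin nb × Fin u) → Fin l → F))
    (hdim : Module.finrank F C = (kb * u + v) * l)
    (hMDS : ∀ c ∈ C, ∀ S : Finset (Fin nb × Fin u), S.card = kb * u + v →
      (∀ j ∈ S, c j = 0) → c = 0)
    (P : Matrix (Fin (h * l)) ((Fin nb × Fin u) × Fin l) F)
    (hdual : ∀ ρ : Fin (h * l), ∀ c ∈ C,
      ∑ j : Fin nb × Fin u, ∑ i : Fin l, P ρ (j, i) * c j i = 0)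
    (e' : Fin nb) (g' : Fin h → Fin u)
    (hrank1 : (Matrix.of fun ρ (bi : Fin h × Fin l) =>
      P ρ ((e', g' bi.1), bi.2)).rank = h * l)
    (R : Finset (Fin nb)) (hR : R.card = db)
    (hzero : ∀ e : Fin nb, e ∉ R → e ≠ e' → ∀ ρ g i, P ρ ((e, g), i) = 0)
    (hrankR : ∀ e ∈ R,
      sb * (Matrix.of fun ρ (gi : Fin u × Fin l) =>
        P ρ ((e, gi.1), gi.2)).rank = h * l) :
    h * (db * (u * l)) ≤ sb * (u - v) *
      ∑ e ∈ R, (Finset.univ.filter (fun gi : Fin u × Fin l =>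
        ∃ ρ, P ρ ((e, gi.1), gi.2) ≠ 0)).card := by
  have : NeZero u := ⟨by omega⟩
  have hC : IsMDS C (kb * u + v) := ⟨by rw [hdim, Fintype.card_fin], hMDS⟩
  have hk : kb * u + v ≤ Fintype.card (Fin nb × Fin u) := by
    simp only [Fintype.card_prod, Fintype.card_fin]; nlinarith
  have hcol : ∀ c ∈ C, ∑ j, ∑ i, c j i • P.col (j, i) = 0 := fun c hc => funext fun ρ => by
    simpa [Finset.sum_apply, mul_comm] using hdual ρ c hc
  have hN : h * l ≤ finrank F (span F (Set.range P.col)) := by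
    calc h * l = _ := hrank1.symm
      _ = _ := Matrix.rank_eq_finrank_span_cols _
      _ ≤ _ := Submodule.finrank_mono (span_mono
        (Set.range_comp_subset_range (fun bi : Fin h × Fin l => ((e', g' bi.1), bi.2)) P.col))
  have hrankCols : ∀ e ∈ R, sb * finrank F (span F (Set.range (rackCols P.col e))) = h * l :=
    fun e he => by
      have := hrankR e he
      rw [Matrix.rank_eq_finrank_span_cols] at this
      exact this
  have hrack : ∀ e ∈ R, u * (h * l) ≤ sb * (u - v) * #{gi | rackCols P.col e gi ≠ 0} :=
    fun e he => by
      simpa using hC.card_mul_le_mul_card_rackCols_ne_zero hk hcol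
        (fun e₁ h₁ h₂ g i => funext fun ρ => hzero e₁ h₁ h₂ ρ g i) hN hrankCols (by omega)
        (by omega) he (v := v) (by simpa using hv.le)
        (by rw [hR, Fintype.card_fin, show db + 1 - sb = kb by omega])
  calc h * (db * (u * l)) = ∑ _e ∈ R, u * (h * l) := by rw [sum_const, hR, smul_eq_mul]; ring
    _ ≤ _ := sum_le_sum hrack
    _ = _ := by simp only [← mul_sum, rackCols, Function.ne_iff, Matrix.col_apply, Pi.zero_apply]

/-- **Theorem 1 (total access bound).**
Under the hypotheses of Theorem 1 (rows of `P` in `C^⊥`; rank `hl` on the failed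
nodes; `P̄_e = 0` off `R ∪ {e'}`; `s̄ · rank P̄_e = hl` on `R`), the total number of
accessed symbols satisfies `s̄(u−v) · ∑_{e∈R} acs(P̄_e) ≥ h·d̄·u·l`. -/
theorem total_access_bound
    (F : Type*) [Field F] [Fintype F] [DecidableEq F]
    (u nb kb v db sb l h : ℕ)
    (hu : 1 < u) (hkb : 1 ≤ kb) (hnb : kb < nb) (hv : v < u)
    (hdb1 : kb ≤ db) (hdb2 : db ≤ nb - 1) (hsb : sb = db - kb + 1)
    (hh1 : 1 ≤ h) (hh2 : h ≤ u) (hh3 : h + v ≤ sb * u)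
    (C : Submodule F ((Fin nb × Fin u) → Fin l → F))
    (hdim : Module.finrank F C = (kb * u + v) * l)
    (hMDS : ∀ c ∈ C, ∀ S : Finset (Fin nb × Fin u), S.card = kb * u + v →
      (∀ j ∈ S, c j = 0) → c = 0)
    (P : Matrix (Fin (h * l)) ((Fin nb × Fin u) × Fin l) F)
    (hdual : ∀ ρ : Fin (h * l), ∀ c ∈ C,
      ∑ j : Fin nb × Fin u, ∑ i : Fin l, P ρ (j, i) * c j i = 0)
    (e' : Fin nb) (g' : Fin h → Fin u) (hg' : Function.Injective g')
    (hrank1 : (Matrix.of fun ρ (bi : Fin h × Fin l) =>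
      P ρ ((e', g' bi.1), bi.2)).rank = h * l)
    (R : Finset (Fin nb)) (hR : R.card = db) (he'R : e' ∉ R)
    (hzero : ∀ e : Fin nb, e ∉ R → e ≠ e' → ∀ ρ g i, P ρ ((e, g), i) = 0)
    (hrankR : ∀ e ∈ R,
      sb * (Matrix.of fun ρ (gi : Fin u × Fin l) =>
        P ρ ((e, gi.1), gi.2)).rank = h * l) :
    h * (db * (u * l)) ≤ sb * (u - v) *
      ∑ e ∈ R, (Finset.univ.filter (fun gi : Fin u × Fin l =>
        ∃ ρ, P ρ ((e, gi.1), gi.2) ≠ 0)).card :=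
  total_access_bound_general F u nb kb v db sb l h hkb hnb hv hdb1 hsb C hdim hMDS P hdual e' g'
    hrank1 R hR hzero hrankR
end

section
/- Theorem 1 (equality characterization of the access bound). Under the hypotheses of the total access bound of Theorem 1 (an (n,k,l) MDS linear array code C over F; an hl × nl matrix P with rows in C^⊥, 1 ≤ h ≤ min{u, s̄u − v}; rank [P_{j'_1},…,P_{j'_h}] = hl for failed nodes in host rack e'; P̄_e = 0 for e ∉ R ∪ {e'} where |R| = d̄; s̄ · rank P̄_e = hl for e ∈ R), assume in addition v > 0. Then s̄(u−v) · ∑_{e∈R} acs(P̄_e) = h·d̄·u·l holds if and only if s̄(u−v) · acs(P_{eu+g}) = h·l for every e ∈ R and every g ∈ {0,…,u−1}. -/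
/-!
Fix a rack `e ∈ R` and any `u - v` of its nodes `S`, and pick `s̄ - 1` further racks `E ⊆ R`.
If a combination `xᵀP` of the repair rows vanishes on the racks of `E` and on the nodes of `S`,
it is a dual codeword supported on `k` nodes (the host rack, the other `k̄ - 1` racks of `R` and
the `v` remaining nodes of `e`), so the MDS property kills it, and the full rank of the failed
nodes' columns forces `x = 0`. Counting dimensions,
`hl ≤ (s̄ - 1) hl / s̄ + ∑_{g ∈ S} rank P_{eu+g}`, hence `s̄ (u - v) ∑_{g ∈ S} acs(P_{eu+g}) ≥ (u - v) hl` for every such `S`. Averaging over `S`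
bounds every rack; as `u - v < u`, equality on average forces equality at every node.
-/

open Finset Module

namespace Finset

variable {α : Type*} [DecidableEq α]

theorem card_mul_le_sum_of_forall_card_eq {w q : ℕ} (hw : 0 < w) (f : α → ℕ) {A : Finset α}
    (hwA : w ≤ #A) (hsub : ∀ S ⊆ A, #S = w → w * q ≤ ∑ g ∈ S, f g) :
    #A * q ≤ ∑ g ∈ A, f g := by
  induction A using Finset.strongInduction with
  | H A ih =>
  rcases hwA.eq_or_lt with hA | hA
  · simpa [← hA] using hsub A subset_rfl hA.symm
  obtain ⟨m, hm, hmax⟩ := A.exists_max_image f (card_pos.1 (hw.trans hA))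
  have hcard : #(A.erase m) = #A - 1 := card_erase_of_mem hm
  have hrest : (#A - 1) * q ≤ ∑ g ∈ A.erase m, f g :=
    hcard ▸ ih _ (erase_ssubset hm) (by omega) fun S hS => hsub S (hS.trans (erase_subset _ _))
  -- the largest value dominates the average of any `w` of the others, hence is at least `q`
  obtain ⟨S, hS, hScard⟩ := exists_subset_card_eq (show w ≤ #(A.erase m) by omega)
  have hq : q ≤ f m := by
    refine Nat.le_of_mul_le_mul_left ?_ hw
    calc w * q ≤ ∑ g ∈ S, f g := hsub S (hS.trans (erase_subset _ _)) hScard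
      _ ≤ ∑ _g ∈ S, f m := sum_le_sum fun g hg => hmax g (erase_subset _ _ (hS hg))
      _ = w * f m := by rw [sum_const, hScard, smul_eq_mul]
  calc #A * q = (#A - 1) * q + q := by
        rw [Nat.sub_one_mul, Nat.sub_add_cancel (Nat.le_mul_of_pos_left q (by omega))]
    _ ≤ ∑ g ∈ A.erase m, f g + f m := add_le_add hrest hq
    _ = ∑ g ∈ A, f g := sum_erase_add _ _ hm

theorem forall_eq_of_sum_eq_card_mul {w q : ℕ} (hw : 0 < w) {f : α → ℕ} {A : Finset α}
    (hwA : w < #A) (hsub : ∀ S ⊆ A, #S = w → w * q ≤ ∑ g ∈ S, f g)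
    (hsum : ∑ g ∈ A, f g = #A * q) : ∀ g ∈ A, f g = q := by
  have hle : ∀ g ∈ A, f g ≤ q := by
    intro g hg
    have hrest := card_mul_le_sum_of_forall_card_eq hw f (A := A.erase g)
      (by rw [card_erase_of_mem hg]; omega) fun S hS => hsub S (hS.trans (erase_subset _ _))
    rw [card_erase_of_mem hg, Nat.sub_one_mul] at hrest
    have := sum_erase_add A f hg
    have := Nat.le_mul_of_pos_left q (show 0 < #A by omega)
    omega
  exact (sum_eq_sum_iff_of_le hle).1 (by rwa [sum_const, smul_eq_mul])

theorem sum_sum_eq_card_mul_iff {ι : Type*} {w q : ℕ} (hw : 0 < w) (R : Finset ι)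
    {A : Finset α} (hwA : w < #A) (f : ι → α → ℕ)
    (hsub : ∀ e ∈ R, ∀ S ⊆ A, #S = w → w * q ≤ ∑ g ∈ S, f e g) :
    ∑ e ∈ R, ∑ g ∈ A, f e g = #R * (#A * q) ↔ ∀ e ∈ R, ∀ g ∈ A, f e g = q := by
  constructor
  · intro hsum e he
    have hge : ∀ e ∈ R, #A * q ≤ ∑ g ∈ A, f e g := fun e he =>
      card_mul_le_sum_of_forall_card_eq hw (f e) hwA.le (hsub e he)
    have hrack := (sum_eq_sum_iff_of_le hge).1 (by rw [sum_const, smul_eq_mul, hsum]) e he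
    exact forall_eq_of_sum_eq_card_mul hw hwA (hsub e he) hrack.symm
  · intro h
    rw [sum_congr rfl fun e he => sum_congr rfl (h e he)]
    simp only [sum_const, smul_eq_mul]

theorem card_filter_prod {β γ : Type*} [Fintype β] [Fintype γ] (p : β → γ → Prop)
    [∀ b c, Decidable (p b c)] : #{x : β × γ | p x.1 x.2} = ∑ b, #{c | p b c} := by
  simp only [card_filter, Fintype.sum_prod_type]

end Finset

section LinearAlgebra

variable {F V W : Type*} [Field F] [AddCommGroup V] [Module F V] [FiniteDimensional F V]
  [AddCommGroup W] [Module F W]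

theorem Submodule.finrank_le_finrank_inf_ker_add (V' : Submodule F V) (f : V →ₗ[F] W) :
    finrank F V' ≤ finrank F ↥(V' ⊓ LinearMap.ker f) + finrank F (LinearMap.range f) := by
  have hsup := Submodule.finrank_sup_add_finrank_inf_eq V' (LinearMap.ker f)
  have hle := Submodule.finrank_le (V' ⊔ LinearMap.ker f)
  have hrank := LinearMap.finrank_range_add_finrank_ker f
  omega

theorem Submodule.finrank_le_finrank_inf_iInf_ker_add_sum {ι : Type*} [DecidableEq ι]
    (t : Finset ι) (c : ι → V →ₗ[F] W) (V' : Submodule F V) :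
    finrank F V' ≤ finrank F ↥(V' ⊓ ⨅ i ∈ t, LinearMap.ker (c i)) +
      ∑ i ∈ t, finrank F (LinearMap.range (c i)) := by
  induction t using Finset.induction_on generalizing V' with
  | empty =>
    simpa using Submodule.finrank_mono
      (le_inf le_rfl (by simp) : V' ≤ V' ⊓ ⨅ i ∈ (∅ : Finset ι), LinearMap.ker (c i))
  | insert a t ha ih =>
    have hstep := V'.finrank_le_finrank_inf_ker_add (c a)
    have hrest := ih (V' ⊓ LinearMap.ker (c a))
    rw [Finset.iInf_insert, sum_insert ha, ← inf_assoc]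
    omega

theorem finrank_le_sum_finrank_range_of_injective {W' ι κ : Type*} [AddCommGroup W']
    [Module F W'] [DecidableEq ι] [DecidableEq κ] (s : Finset ι) (t : Finset κ)
    (c : ι → V →ₗ[F] W) (d : κ → V →ₗ[F] W')
    (hinj : ∀ x, (∀ i ∈ s, c i x = 0) → (∀ j ∈ t, d j x = 0) → x = 0) :
    finrank F V ≤ ∑ i ∈ s, finrank F (LinearMap.range (c i)) +
      ∑ j ∈ t, finrank F (LinearMap.range (d j)) := by
  have hc := Submodule.finrank_le_finrank_inf_iInf_ker_add_sum s c ⊤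
  have hd := Submodule.finrank_le_finrank_inf_iInf_ker_add_sum t d
    (⨅ i ∈ s, LinearMap.ker (c i))
  have hbot : (⨅ i ∈ s, LinearMap.ker (c i)) ⊓ ⨅ j ∈ t, LinearMap.ker (d j) = ⊥ := by
    refine eq_bot_iff.2 fun x hx => ?_
    simp only [Submodule.mem_inf, Submodule.mem_iInf, LinearMap.mem_ker] at hx
    exact hinj x hx.1 hx.2
  rw [hbot, finrank_bot] at hd
  rw [top_inf_eq, finrank_top] at hc
  omega

end LinearAlgebra

namespace Matrix

variable {F m n : Type*} [Field F] [Fintype m] [Fintype n]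

theorem finrank_range_vecMulLinear (M : Matrix m n F) :
    finrank F (LinearMap.range M.vecMulLinear) = M.rank := by
  rw [range_vecMulLinear, rank_eq_finrank_span_row]

theorem vecMul_injective_of_rank_eq_card (M : Matrix m n F) (h : M.rank = Fintype.card m) :
    Function.Injective M.vecMul := by
  rw [vecMul_injective_iff, linearIndependent_iff_card_eq_finrank_span, Set.finrank,
    ← rank_eq_finrank_span_row, h]

theorem rank_le_card_of_col_support_subset (M : Matrix m n F) (s : Finset n)
    (hs : ∀ j ∉ s, ∀ i, M i j = 0) : M.rank ≤ #s := by
  rw [← rank_transpose]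
  exact Mᵀ.rank_le_card_of_support_subset s fun j hj => by_contra fun hjs => hj (funext (hs j hjs))

end Matrix

theorem eq_zero_of_forall_sum_mul_eq_zero_of_support_subset {F ι κ : Type*} [Field F]
    [Fintype ι] [Fintype κ] [DecidableEq ι] [DecidableEq κ]
    (C : Submodule F (ι → κ → F)) (T : Finset ι) (hdim : finrank F C = #T * Fintype.card κ)
    (hMDS : ∀ c ∈ C, (∀ j ∈ T, c j = 0) → c = 0) {y : ι → κ → F}
    (hy : ∀ c ∈ C, ∑ j, ∑ i, y j i * c j i = 0) (hT : ∀ j ∉ T, y j = 0) : y = 0 := by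
  let restrict : C →ₗ[F] (T → κ → F) :=
    (LinearMap.funLeft F (κ → F) ((↑) : T → ι)).comp C.subtype
  have hinj : Function.Injective restrict := by
    refine (injective_iff_map_eq_zero restrict).2 fun c hc => Subtype.ext ?_
    exact hMDS c c.2 fun j hj => congrFun hc ⟨j, hj⟩
  have hsurj : Function.Surjective restrict :=
    (LinearMap.injective_iff_surjective_of_finrank_eq_finrank
      (by simp [hdim, Module.finrank_pi_fintype])).1 hinj
  funext j i
  by_cases hj : j ∈ T
  · -- pair `y` with a codeword that is the unit vector at `(j, i)` on `T`
    let z : ι → κ → F := Pi.single j (Pi.single i 1)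
    obtain ⟨c, hc⟩ := hsurj fun j' => z j'
    have hcz : ∀ j' i', y j' i' * c.1 j' i' = y j' i' * z j' i' := by
      intro j' i'
      by_cases hj' : j' ∈ T
      · rw [show c.1 j' = z j' from congrFun hc ⟨j', hj'⟩]
      · simp [hT j' hj']
    have := hy c c.2
    simpa [hcz, z, Pi.single_apply, ite_apply] using this
  · simp [hT j hj]

open Matrix

theorem eq_zero_of_vecMul_eq_zero_of_support_subset {F ι κ m n : Type*} [Field F] [Fintype ι]
    [Fintype κ] [Fintype m] [Fintype n] [DecidableEq ι] [DecidableEq κ]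
    (C : Submodule F (ι → κ → F)) (T : Finset ι) (hdim : finrank F C = #T * Fintype.card κ)
    (hMDS : ∀ c ∈ C, (∀ j ∈ T, c j = 0) → c = 0) (P : Matrix m (ι × κ) F)
    (hdual : ∀ r, ∀ c ∈ C, ∑ j, ∑ i, P r (j, i) * c j i = 0) (σ : n → ι × κ)
    (hrank : (P.submatrix id σ).rank = Fintype.card m) {x : m → F}
    (hx : ∀ j ∉ T, ∀ i, (x ᵥ* P) (j, i) = 0) : x = 0 := by
  have horth : ∀ c ∈ C, ∑ j, ∑ i, (x ᵥ* P) (j, i) * c j i = 0 := by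
    intro c hc
    calc ∑ j, ∑ i, (x ᵥ* P) (j, i) * c j i = ∑ j, ∑ r, ∑ i, x r * (P r (j, i) * c j i) := by
          simp only [vecMul, dotProduct, sum_mul, mul_assoc]
          exact sum_congr rfl fun _ _ => sum_comm
      _ = ∑ r, x r * ∑ j, ∑ i, P r (j, i) * c j i := by simp only [mul_sum]; exact sum_comm
      _ = 0 := by simp [hdual _ c hc]
  have hy : (fun j i => (x ᵥ* P) (j, i)) = 0 :=
    eq_zero_of_forall_sum_mul_eq_zero_of_support_subset C T hdim hMDS horth
      fun j hj => funext (hx j hj)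
  refine vecMul_injective_of_rank_eq_card _ hrank ?_
  change x ᵥ* P.submatrix id σ = 0 ᵥ* P.submatrix id σ
  rw [zero_vecMul]
  funext b
  exact congrFun (congrFun hy (σ b).1) (σ b).2

section Racks

variable {F m ι μ κ : Type*} [Field F]

-- `P̄_e` and `P_{eu+g}` in the paper's notation.
def rackBlock (P : Matrix m ((ι × μ) × κ) F) (e : ι) : Matrix m (μ × κ) F :=
  P.submatrix id fun gi => ((e, gi.1), gi.2)

def nodeBlock (P : Matrix m ((ι × μ) × κ) F) (j : ι × μ) : Matrix m κ F :=
  P.submatrix id fun i => (j, i)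

variable [DecidableEq ι] [Fintype μ] [DecidableEq μ]

-- Outside this set of `k` nodes, `xᵀ P` vanishes as soon as it vanishes on the racks `E` and on
-- the nodes `S` of rack `e0`.
def repairSupport (e' e0 : ι) (R E : Finset ι) (S : Finset μ) : Finset (ι × μ) :=
  insert e' ((R \ E).erase e0) ×ˢ univ ∪ {e0} ×ˢ Sᶜ

theorem card_repairSupport {kb v db : ℕ} {R E : Finset ι} {e' e0 : ι} (hR : #R = db)
    (he'R : e' ∉ R) (he0 : e0 ∈ R) (hE : E ⊆ R.erase e0) (hEcard : #E + kb = db)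
    {S : Finset μ} (hv : v ≤ Fintype.card μ) (hS : #S = Fintype.card μ - v) :
    #(repairSupport e' e0 R E S) = kb * Fintype.card μ + v := by
  have hER : E ⊆ R := hE.trans (erase_subset _ _)
  have he0E : e0 ∉ E := fun h => notMem_erase e0 R (hE h)
  have he'E : e' ∉ (R \ E).erase e0 := fun h => he'R (mem_sdiff.1 (mem_of_mem_erase h)).1
  have hdisj : Disjoint (insert e' ((R \ E).erase e0) ×ˢ (univ : Finset μ)) ({e0} ×ˢ Sᶜ) := by
    simp only [disjoint_left, mem_product, mem_insert, mem_erase, mem_singleton, not_and]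
    rintro ⟨e, g⟩ ⟨he | ⟨hne, -⟩, -⟩ rfl <;> simp_all
  have hkb : db - #E - 1 + 1 = kb := by
    have := card_le_card hE
    rw [card_erase_of_mem he0] at this
    have := card_pos.2 ⟨e0, he0⟩
    omega
  have hv' : Fintype.card μ - (Fintype.card μ - v) = v := by omega
  rw [repairSupport, card_union_of_disjoint hdisj, card_product, card_product,
    card_insert_of_notMem he'E, card_erase_of_mem (mem_sdiff.2 ⟨he0, he0E⟩),
    card_sdiff_of_subset hER, card_univ, card_singleton, card_compl, hR, hS]
  rw [hkb, hv', one_mul]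

end Racks

theorem eq_zero_of_forall_vecMul_rackBlock_eq_zero {F n : Type*} [Field F] [Fintype n]
    {nb u l h kb v db : ℕ} (hv : v ≤ u) (C : Submodule F ((Fin nb × Fin u) → Fin l → F))
    (hdim : finrank F C = (kb * u + v) * l)
    (hMDS : ∀ c ∈ C, ∀ S : Finset (Fin nb × Fin u), #S = kb * u + v →
      (∀ j ∈ S, c j = 0) → c = 0)
    (P : Matrix (Fin (h * l)) ((Fin nb × Fin u) × Fin l) F)
    (hdual : ∀ ρ, ∀ c ∈ C, ∑ j, ∑ i, P ρ (j, i) * c j i = 0)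
    (σ : n → (Fin nb × Fin u) × Fin l) (hrank : (P.submatrix id σ).rank = h * l)
    {R E : Finset (Fin nb)} {e' e0 : Fin nb} (hR : #R = db) (he'R : e' ∉ R)
    (hzero : ∀ e, e ∉ R → e ≠ e' → ∀ ρ g i, P ρ ((e, g), i) = 0) (he0 : e0 ∈ R)
    (hE : E ⊆ R.erase e0) (hEcard : #E + kb = db) {S : Finset (Fin u)} (hS : #S = u - v)
    {x : Fin (h * l) → F} (hxE : ∀ e ∈ E, x ᵥ* rackBlock P e = 0)
    (hxS : ∀ g ∈ S, x ᵥ* nodeBlock P (e0, g) = 0) : x = 0 := by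
  have hTcard : #(repairSupport e' e0 R E S) = kb * u + v := by
    simpa using card_repairSupport (kb := kb) (v := v) (S := S) hR he'R he0 hE hEcard
      (by simpa using hv) (by simpa using hS)
  refine eq_zero_of_vecMul_eq_zero_of_support_subset C _
    (by rw [hdim, hTcard, Fintype.card_fin]) (fun c hc => hMDS c hc _ hTcard) P hdual σ
    (by rw [hrank, Fintype.card_fin]) ?_
  rintro ⟨e, g⟩ hj i
  simp only [repairSupport, mem_union, mem_product, mem_insert, mem_erase, mem_sdiff,
    mem_singleton, mem_compl, mem_univ, and_true] at hj
  by_cases heE : e ∈ E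
  · exact congrFun (hxE e heE) (g, i)
  by_cases he0' : e = e0
  · subst he0'
    exact congrFun (hxS g (by tauto)) i
  · obtain ⟨heR, he'⟩ : e ∉ R ∧ e ≠ e' := by tauto
    simp [vecMul, dotProduct, hzero e heR he']

theorem access_lower_bound {F n : Type*} [Field F] [DecidableEq F] [Fintype n]
    {nb u l h kb v db sb : ℕ} (hkb : 1 ≤ kb) (hv : v ≤ u) (hdb : kb ≤ db)
    (hsb : sb = db - kb + 1) (C : Submodule F ((Fin nb × Fin u) → Fin l → F))
    (hdim : finrank F C = (kb * u + v) * l)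
    (hMDS : ∀ c ∈ C, ∀ S : Finset (Fin nb × Fin u), #S = kb * u + v →
      (∀ j ∈ S, c j = 0) → c = 0)
    (P : Matrix (Fin (h * l)) ((Fin nb × Fin u) × Fin l) F)
    (hdual : ∀ ρ, ∀ c ∈ C, ∑ j, ∑ i, P ρ (j, i) * c j i = 0)
    (σ : n → (Fin nb × Fin u) × Fin l) (hrank : (P.submatrix id σ).rank = h * l)
    {R : Finset (Fin nb)} {e' : Fin nb} (hR : #R = db) (he'R : e' ∉ R)
    (hzero : ∀ e, e ∉ R → e ≠ e' → ∀ ρ g i, P ρ ((e, g), i) = 0)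
    (hrankR : ∀ e ∈ R, sb * (rackBlock P e).rank = h * l)
    {e0 : Fin nb} (he0 : e0 ∈ R) {S : Finset (Fin u)} (hS : #S = u - v) :
    h * l ≤ sb * ∑ g ∈ S, #{i | ∃ ρ, P ρ ((e0, g), i) ≠ 0} := by
  obtain ⟨E, hE, hEcard⟩ := exists_subset_card_eq
    (show sb - 1 ≤ #(R.erase e0) by rw [card_erase_of_mem he0]; omega)
  have hcount : h * l ≤ ∑ e ∈ E, (rackBlock P e).rank + ∑ g ∈ S, (nodeBlock P (e0, g)).rank := by
    simpa only [finrank_range_vecMulLinear, finrank_fin_fun] using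
      finrank_le_sum_finrank_range_of_injective E S (fun e => (rackBlock P e).vecMulLinear)
        (fun g => (nodeBlock P (e0, g)).vecMulLinear) fun x hxE hxS =>
        eq_zero_of_forall_vecMul_rackBlock_eq_zero hv C hdim hMDS P hdual σ hrank hR he'R hzero
          he0 hE (by omega) hS hxE hxS
  have hErank : sb * ∑ e ∈ E, (rackBlock P e).rank = (sb - 1) * (h * l) := by
    rw [mul_sum, sum_congr rfl fun e he => hrankR e (mem_of_mem_erase (hE he)), sum_const,
      hEcard, smul_eq_mul]
  have hSrank :
      ∑ g ∈ S, (nodeBlock P (e0, g)).rank ≤ ∑ g ∈ S, #{i | ∃ ρ, P ρ ((e0, g), i) ≠ 0} :=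
    sum_le_sum fun g _ => rank_le_card_of_col_support_subset _ _ fun i hi ρ => by
      simp only [mem_filter, mem_univ, true_and, not_exists, not_not] at hi
      exact hi ρ
  have h1 := Nat.mul_le_mul_left sb hcount
  have h2 := Nat.mul_le_mul_left sb hSrank
  rw [mul_add, hErank] at h1
  have h3 : sb * (h * l) = (sb - 1) * (h * l) + h * l := by
    rw [Nat.sub_one_mul, Nat.sub_add_cancel (Nat.le_mul_of_pos_left _ (by omega))]
  omega

theorem access_bound_equality_general
    (F : Type*) [Field F] [DecidableEq F]
    (u nb kb v db sb l h : ℕ)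
    (hkb : 1 ≤ kb) (hv : v < u)
    (hdb1 : kb ≤ db) (hsb : sb = db - kb + 1)
    (C : Submodule F ((Fin nb × Fin u) → Fin l → F))
    (hdim : Module.finrank F C = (kb * u + v) * l)
    (hMDS : ∀ c ∈ C, ∀ S : Finset (Fin nb × Fin u), S.card = kb * u + v →
      (∀ j ∈ S, c j = 0) → c = 0)
    (P : Matrix (Fin (h * l)) ((Fin nb × Fin u) × Fin l) F)
    (hdual : ∀ ρ : Fin (h * l), ∀ c ∈ C,
      ∑ j : Fin nb × Fin u, ∑ i : Fin l, P ρ (j, i) * c j i = 0)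
    (e' : Fin nb) (g' : Fin h → Fin u)
    (hrank1 : (Matrix.of fun ρ (bi : Fin h × Fin l) =>
      P ρ ((e', g' bi.1), bi.2)).rank = h * l)
    (R : Finset (Fin nb)) (hR : R.card = db) (he'R : e' ∉ R)
    (hzero : ∀ e : Fin nb, e ∉ R → e ≠ e' → ∀ ρ g i, P ρ ((e, g), i) = 0)
    (hrankR : ∀ e ∈ R,
      sb * (Matrix.of fun ρ (gi : Fin u × Fin l) =>
        P ρ ((e, gi.1), gi.2)).rank = h * l)
    (hv0 : 0 < v) :
    (sb * (u - v) *
        ∑ e ∈ R, (Finset.univ.filter (fun gi : Fin u × Fin l =>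
          ∃ ρ, P ρ ((e, gi.1), gi.2) ≠ 0)).card = h * (db * (u * l)))
      ↔ ∀ e ∈ R, ∀ g : Fin u,
          sb * (u - v) * (Finset.univ.filter (fun i : Fin l =>
            ∃ ρ, P ρ ((e, g), i) ≠ 0)).card = h * l := by
  have hsub : ∀ e ∈ R, ∀ S ⊆ univ, #S = u - v →
      (u - v) * (h * l) ≤ ∑ g ∈ S, sb * (u - v) * #{i | ∃ ρ, P ρ ((e, g), i) ≠ 0} := by
    intro e he S _ hS
    have hkey := access_lower_bound hkb hv.le hdb1 hsb C hdim hMDS P hdual _ hrank1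
      hR he'R hzero hrankR he hS
    calc (u - v) * (h * l) ≤ (u - v) * (sb * ∑ g ∈ S, #{i | ∃ ρ, P ρ ((e, g), i) ≠ 0}) :=
          Nat.mul_le_mul_left _ hkey
      _ = _ := by rw [← mul_sum, mul_left_comm, mul_assoc]
  have hlhs : sb * (u - v) * ∑ e ∈ R, #{gi : Fin u × Fin l | ∃ ρ, P ρ ((e, gi.1), gi.2) ≠ 0} =
      ∑ e ∈ R, ∑ g ∈ univ, sb * (u - v) * #{i | ∃ ρ, P ρ ((e, g), i) ≠ 0} := by
    rw [mul_sum]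
    exact sum_congr rfl fun e _ => by
      rw [card_filter_prod fun g i => ∃ ρ, P ρ ((e, g), i) ≠ 0, mul_sum]
  have hrhs : h * (db * (u * l)) = #R * (#(univ : Finset (Fin u)) * (h * l)) := by
    rw [card_univ, Fintype.card_fin, hR]; ring
  rw [hlhs, hrhs, sum_sum_eq_card_mul_iff (by omega) R (by rw [card_univ, Fintype.card_fin]; omega) _ hsub]
  simp only [mem_univ, forall_const]

/-- **Theorem 1 (equality characterization of the access bound).**
Under the hypotheses of the total access bound of Theorem 1, assuming `v > 0`,
the total access `s̄(u−v) · ∑_{e∈R} acs(P̄_e) = h·d̄·u·l` holds with equality if and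
only if `s̄(u−v) · acs(P_{eu+g}) = h·l` for every `e ∈ R` and every `g`. -/
theorem access_bound_equality
    (F : Type*) [Field F] [Fintype F] [DecidableEq F]
    (u nb kb v db sb l h : ℕ)
    (hu : 1 < u) (hkb : 1 ≤ kb) (hnb : kb < nb) (hv : v < u)
    (hdb1 : kb ≤ db) (hdb2 : db ≤ nb - 1) (hsb : sb = db - kb + 1)
    (hh1 : 1 ≤ h) (hh2 : h ≤ u) (hh3 : h + v ≤ sb * u)
    (C : Submodule F ((Fin nb × Fin u) → Fin l → F))
    (hdim : Module.finrank F C = (kb * u + v) * l)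
    (hMDS : ∀ c ∈ C, ∀ S : Finset (Fin nb × Fin u), S.card = kb * u + v →
      (∀ j ∈ S, c j = 0) → c = 0)
    (P : Matrix (Fin (h * l)) ((Fin nb × Fin u) × Fin l) F)
    (hdual : ∀ ρ : Fin (h * l), ∀ c ∈ C,
      ∑ j : Fin nb × Fin u, ∑ i : Fin l, P ρ (j, i) * c j i = 0)
    (e' : Fin nb) (g' : Fin h → Fin u) (hg' : Function.Injective g')
    (hrank1 : (Matrix.of fun ρ (bi : Fin h × Fin l) =>
      P ρ ((e', g' bi.1), bi.2)).rank = h * l)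
    (R : Finset (Fin nb)) (hR : R.card = db) (he'R : e' ∉ R)
    (hzero : ∀ e : Fin nb, e ∉ R → e ≠ e' → ∀ ρ g i, P ρ ((e, g), i) = 0)
    (hrankR : ∀ e ∈ R,
      sb * (Matrix.of fun ρ (gi : Fin u × Fin l) =>
        P ρ ((e, gi.1), gi.2)).rank = h * l)
    (hv0 : 0 < v) :
    (sb * (u - v) *
        ∑ e ∈ R, (Finset.univ.filter (fun gi : Fin u × Fin l =>
          ∃ ρ, P ρ ((e, gi.1), gi.2) ≠ 0)).card = h * (db * (u * l)))
      ↔ ∀ e ∈ R, ∀ g : Fin u,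
          sb * (u - v) * (Finset.univ.filter (fun i : Fin l =>
            ∃ ρ, P ρ ((e, g), i) ≠ 0)).card = h * l :=
  access_bound_equality_general F u nb kb v db sb l h hkb hv hdb1 hsb C hdim hMDS P hdual e' g'
    hrank1 R hR he'R hzero hrankR hv0
end

section
/- The code C_0 of Construction 1 is an (n, k, l = s̄(u−v)) MDS array code: C_0 is an F-linear subspace of (F^l)^n of dimension kl, and for every subset S ⊆ {0,…,n−1} with |S| = k, any two codewords c, c' ∈ C_0 satisfying c_j = c'_j (all l coordinates) for every j ∈ S are equal. -/
lemma vand_kill {F : Type*} [Field F] {N : Type*} [Fintype N] [DecidableEq N]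
    (x : N → F) (hx : Function.Injective x) (r : ℕ) (c : N → F)
    (T : Finset N) (hT : T.card ≤ r) (hsupp : ∀ j ∉ T, c j = 0)
    (hsum : ∀ t < r, ∑ j, x j ^ t * c j = 0) : c = 0 := by
  have key : ∀ j ∈ T, c j = 0 := by
    have e : Fin T.card ≃ {a // a ∈ T} := T.equivFin.symm
    have hz : (fun b : Fin T.card => c (e b)) = 0 := by
      apply Matrix.eq_zero_of_forall_pow_sum_mul_pow_eq_zero
        (f := fun b : Fin T.card => x ((e b : {a // a ∈ T}) : N))
      · exact hx.comp (Subtype.val_injective.comp e.injective)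
      · intro i
        have h1 : ∑ b : Fin T.card, c (e b) * x (e b) ^ (i : ℕ)
            = ∑ j ∈ T, c j * x j ^ (i : ℕ) := by
          rw [← Finset.sum_coe_sort T (fun j => c j * x j ^ (i : ℕ))]
          exact e.sum_comp (fun a : {a // a ∈ T} => c a * x a ^ (i : ℕ))
        have h2 : ∑ j ∈ T, c j * x j ^ (i : ℕ) = ∑ j : N, c j * x j ^ (i : ℕ) := by
          apply Finset.sum_subset (T.subset_univ)
          intro j _ hj
          rw [hsupp j hj, zero_mul]
        have h3 : ∑ j : N, c j * x j ^ (i : ℕ) = 0 := by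
          rw [← hsum (i : ℕ) (lt_of_lt_of_le i.2 hT)]
          exact Finset.sum_congr rfl fun j _ => mul_comm _ _
        calc ∑ b : Fin T.card, c (e b) * x (e b) ^ (i : ℕ)
            = ∑ j ∈ T, c j * x j ^ (i : ℕ) := h1
          _ = ∑ j : N, c j * x j ^ (i : ℕ) := h2
          _ = 0 := h3
    intro j hj
    have := congrFun hz (e.symm ⟨j, hj⟩)
    simpa using this
  funext j
  by_cases hj : j ∈ T
  · exact key j hj
  · exact hsupp j hj

/-- **Construction 1 gives an `(n, k, l = s̄(u−v))` MDS array code.**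
Nodes are indexed by pairs `(e, g) : Fin nb × Fin u` (node `j = e·u+g`), symbol
coordinates by `i : Fin l` with `l = s̄·(u−v)`.  `lam` is an element of `F` of
multiplicative order `m·u` with `m = n̄ + s̄ − 1`, `λ_j = lam^(e+g·m)`, and for
`p = κ·s̄ + τ` (`0 ≤ κ < u−v`, `0 ≤ τ < s̄`, `p ≠ 0`), `μ_{p,g} = lam^((g+κ)m)` if
`τ = 0` and `μ_{p,g} = lam^(n̄+τ−1+κm)` otherwise.  The code `C₀`, cut out by the
parity-check equations (i)–(ii) of Construction 1, is an `F`-linear subspace of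
`(F^l)^n` of dimension `kl`, and any two codewords agreeing on some `k` nodes
are equal (the MDS property). -/
theorem construction1_is_MDS
    (F : Type*) [Field F]
    (u nb kb v db sb l r m : ℕ)
    (hu : 1 < u) (hkb : 1 ≤ kb) (hnb : kb < nb) (hv : v < u)
    (hdb1 : kb ≤ db) (hdb2 : db ≤ nb - 1) (hsb : sb = db - kb + 1)
    (hm : m = nb + sb - 1) (hl : l = sb * (u - v)) (hl0 : 0 < l)
    (hnb0 : 0 < nb) (hr : r = nb * u - (kb * u + v))
    (lam : F) (hlam : orderOf lam = m * u)
    (mu : Fin l → Fin u → F)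
    (hmu : ∀ p : Fin l, ∀ g : Fin u, mu p g =
      if p.1 % sb = 0 then lam ^ ((g.1 + p.1 / sb) * m)
      else lam ^ (nb + p.1 % sb - 1 + (p.1 / sb) * m))
    (C0 : Set ((Fin nb × Fin u) → Fin l → F))
    (hC0 : ∀ c, c ∈ C0 ↔ ∀ t < r,
      ((∑ j : Fin nb × Fin u, lam ^ ((j.1.1 + j.2.1 * m) * t) * c j ⟨0, hl0⟩)
        + ∑ g : Fin u, ∑ p ∈ Finset.univ.filter (fun p : Fin l => p.1 ≠ 0),
            (mu p g) ^ t * c (⟨0, hnb0⟩, g) p = 0)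
      ∧ ∀ i : Fin l, i.1 ≠ 0 →
          ∑ j : Fin nb × Fin u, lam ^ ((j.1.1 + j.2.1 * m) * t) * c j i = 0) :
    (∃ W : Submodule F ((Fin nb × Fin u) → Fin l → F),
      (W : Set ((Fin nb × Fin u) → Fin l → F)) = C0 ∧
        Module.finrank F W = (kb * u + v) * l)
    ∧ ∀ S : Finset (Fin nb × Fin u), S.card = kb * u + v →
        ∀ c ∈ C0, ∀ c' ∈ C0, (∀ j ∈ S, c j = c' j) → c = c' := by
  classical
  -- basic arithmetic facts
  have hsb1 : 1 ≤ sb := by omega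
  have hmnb : nb ≤ m := by omega
  have hk_le : kb * u + v ≤ nb * u := by
    calc kb * u + v ≤ kb * u + u := by omega
      _ = (kb + 1) * u := by ring
      _ ≤ nb * u := Nat.mul_le_mul_right _ (by omega)
  have hrn : r ≤ nb * u := by omega
  have hrk : r + (kb * u + v) = nb * u := by omega
  -- the evaluation points
  set x : Fin nb × Fin u → F := fun j => lam ^ (j.1.1 + j.2.1 * m) with hxdef
  have hbound : ∀ j : Fin nb × Fin u, j.1.1 + j.2.1 * m < m * u := by
    intro j
    calc j.1.1 + j.2.1 * m < m + j.2.1 * m := by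
          have := j.1.2; omega
      _ = (j.2.1 + 1) * m := by ring
      _ ≤ u * m := Nat.mul_le_mul_right _ j.2.2
      _ = m * u := Nat.mul_comm _ _
  have hxinj : Function.Injective x := by
    intro a b hab
    have := pow_injOn_Iio_orderOf (x := lam)
      (by rw [hlam]; exact hbound a) (by rw [hlam]; exact hbound b) hab
    have ha1 : a.1.1 < m := lt_of_lt_of_le a.1.2 hmnb
    have hb1 : b.1.1 < m := lt_of_lt_of_le b.1.2 hmnb
    have hmod := congrArg (· % m) this
    simp only [Nat.add_mul_mod_self_right, Nat.mod_eq_of_lt ha1,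
      Nat.mod_eq_of_lt hb1] at hmod
    have h2 : a.2.1 = b.2.1 := by
      have hm0 : 0 < m := by omega
      have : a.2.1 * m = b.2.1 * m := by omega
      exact Nat.eq_of_mul_eq_mul_right hm0 this
    exact Prod.ext (Fin.ext hmod) (Fin.ext h2)
  -- the kill lemma: a codeword supported on ≤ r nodes is zero
  have key : ∀ c ∈ C0, ∀ T : Finset (Fin nb × Fin u), T.card ≤ r →
      (∀ j ∉ T, c j = 0) → c = 0 := by
    intro c hc T hT hz
    have hne : ∀ i : Fin l, i.1 ≠ 0 → (fun j => c j i) = 0 := by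
      intro i hi
      apply vand_kill x hxinj r _ T hT
      · intro j hj; rw [hz j hj]; rfl
      · intro t ht
        have := ((hC0 c).1 hc t ht).2 i hi
        simpa only [pow_mul] using this
    have hcomp : ∀ i : Fin l, (fun j => c j i) = 0 := by
      intro i
      by_cases hi : i.1 = 0
      · have hi' : i = ⟨0, hl0⟩ := Fin.ext hi
        rw [hi']
        apply vand_kill x hxinj r _ T hT
        · intro j hj; rw [hz j hj]; rfl
        · intro t ht
          have h1 := ((hC0 c).1 hc t ht).1
          have h2 : ∑ g : Fin u, ∑ p ∈ Finset.univ.filter (fun p : Fin l => p.1 ≠ 0),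
              (mu p g) ^ t * c (⟨0, hnb0⟩, g) p = 0 := by
            apply Finset.sum_eq_zero; intro g _
            apply Finset.sum_eq_zero; intro p hp
            have hp' : p.1 ≠ 0 := (Finset.mem_filter.1 hp).2
            have := congrFun (hne p hp') (⟨0, hnb0⟩, g)
            simp only [Pi.zero_apply] at this
            rw [this, mul_zero]
          rw [h2, add_zero] at h1
          simpa only [pow_mul] using h1
      · exact hne i hi
    funext j i
    exact congrFun (hcomp i) j
  -- the parity-check linear map
  let Φ : ((Fin nb × Fin u) → Fin l → F) →ₗ[F] (Fin r → Fin l → F) :=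
    { toFun := fun c t i =>
        (∑ j : Fin nb × Fin u, lam ^ ((j.1.1 + j.2.1 * m) * (t : ℕ)) * c j i)
        + (if (i : ℕ) = 0 then
            ∑ g : Fin u, ∑ p ∈ Finset.univ.filter (fun p : Fin l => p.1 ≠ 0),
              (mu p g) ^ (t : ℕ) * c (⟨0, hnb0⟩, g) p else 0)
      map_add' := by
        intro a b; funext t i
        by_cases hi : (i : ℕ) = 0 <;>
          simp [hi, mul_add, Finset.sum_add_distrib] <;> ring
      map_smul' := by
        intro s a; funext t i
        by_cases hi : (i : ℕ) = 0 <;>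
          simp [hi, Finset.mul_sum, mul_left_comm, mul_add] }
  have hΦapp : ∀ c t i, Φ c t i =
      (∑ j : Fin nb × Fin u, lam ^ ((j.1.1 + j.2.1 * m) * (t : ℕ)) * c j i)
      + (if (i : ℕ) = 0 then
          ∑ g : Fin u, ∑ p ∈ Finset.univ.filter (fun p : Fin l => p.1 ≠ 0),
            (mu p g) ^ (t : ℕ) * c (⟨0, hnb0⟩, g) p else 0) := fun _ _ _ => rfl
  -- membership characterization
  have hmem : ∀ c, c ∈ C0 ↔ c ∈ LinearMap.ker Φ := by
    intro c
    rw [hC0, LinearMap.mem_ker]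
    constructor
    · intro h; funext t i
      rw [show ((0 : Fin r → Fin l → F) t i) = 0 from rfl, hΦapp]
      by_cases hi : (i : ℕ) = 0
      · have hi' : i = ⟨0, hl0⟩ := Fin.ext hi
        rw [if_pos hi, hi']
        exact (h t.1 t.2).1
      · rw [if_neg hi, add_zero]
        exact (h t.1 t.2).2 i hi
    · intro h t ht
      constructor
      · have := congrFun (congrFun h ⟨t, ht⟩) ⟨0, hl0⟩
        rw [hΦapp] at this
        simpa using this
      · intro i hi
        have := congrFun (congrFun h ⟨t, ht⟩) i
        rw [hΦapp, if_neg hi, add_zero] at this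
        simpa using this
  -- surjectivity of Φ
  have hcardN : Fintype.card (Fin nb × Fin u) = nb * u := by simp
  obtain ⟨T, -, hTcard⟩ := Finset.exists_subset_card_eq
    (s := (Finset.univ : Finset (Fin nb × Fin u))) (n := r)
    (by rw [Finset.card_univ, hcardN]; exact hrn)
  let ι : ({a // a ∈ T} → Fin l → F) →ₗ[F] ((Fin nb × Fin u) → Fin l → F) :=
    { toFun := fun y j => if h : j ∈ T then y ⟨j, h⟩ else 0
      map_add' := by intro a b; funext j; by_cases h : j ∈ T <;> simp [h]
      map_smul' := by intro s a; funext j; by_cases h : j ∈ T <;> simp [h] }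
  have hι_inj : Function.Injective ι := by
    intro a b hab
    funext s
    have := congrFun hab s.1
    simpa [ι, s.2] using this
  have hcomp_inj : Function.Injective (Φ ∘ₗ ι) := by
    rw [← LinearMap.ker_eq_bot]
    rw [LinearMap.ker_eq_bot']
    intro y hy
    have hιy0 : ι y = 0 := by
      apply key (ι y) ((hmem (ι y)).2 hy) T (le_of_eq hTcard)
      intro j hj
      show (if h : j ∈ T then y ⟨j, h⟩ else 0) = 0
      rw [dif_neg hj]
    have : ι y = ι 0 := by rw [hιy0, map_zero]
    exact hι_inj this
  have hTside : Module.finrank F ({a // a ∈ T} → Fin l → F) = T.card * l := by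
    rw [Module.finrank_pi_fintype]
    simp [Module.finrank_fintype_fun_eq_card, Finset.sum_const, Fintype.card_coe]
  have hcod : Module.finrank F (Fin r → Fin l → F) = r * l := by
    rw [Module.finrank_pi_fintype]
    simp [Module.finrank_fintype_fun_eq_card, Finset.sum_const]
  have hdimT : Module.finrank F ({a // a ∈ T} → Fin l → F)
      = Module.finrank F (Fin r → Fin l → F) := by
    rw [hTside, hcod, hTcard]
  have hsurj_comp : Function.Surjective (Φ ∘ₗ ι) :=
    (LinearMap.injective_iff_surjective_of_finrank_eq_finrank hdimT).1 hcomp_inj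
  have hsurj : Function.Surjective Φ := by
    intro w
    obtain ⟨y, hy⟩ := hsurj_comp w
    exact ⟨ι y, hy⟩
  -- dimension count
  have hdom : Module.finrank F ((Fin nb × Fin u) → Fin l → F) = nb * u * l := by
    rw [Module.finrank_pi_fintype]
    simp [Module.finrank_fintype_fun_eq_card, Finset.sum_const, Finset.card_univ, hcardN]
  have hrank := LinearMap.finrank_range_add_finrank_ker Φ
  rw [LinearMap.range_eq_top.mpr hsurj, finrank_top, hcod, hdom] at hrank
  have hker_rank : Module.finrank F (LinearMap.ker Φ) = (kb * u + v) * l := by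
    have h1 : r * l + (kb * u + v) * l = nb * u * l := by
      rw [← add_mul, hrk]
    omega
  refine ⟨⟨LinearMap.ker Φ, ?_, hker_rank⟩, ?_⟩
  · ext c
    exact (hmem c).symm
  · intro S hS c hc c' hc' hagree
    have hsub : c - c' ∈ C0 :=
      (hmem (c - c')).2 (sub_mem ((hmem c).1 hc) ((hmem c').1 hc'))
    have hcompl : (Sᶜ : Finset (Fin nb × Fin u)).card ≤ r := by
      rw [Finset.card_compl, hcardN, hS]
      omega
    have hz : ∀ j ∉ (Sᶜ : Finset (Fin nb × Fin u)), (c - c') j = 0 := by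
      intro j hj
      have hjS : j ∈ S := by simpa using hj
      show c j - c' j = 0
      rw [hagree j hjS, sub_self]
    have := key (c - c') hsub Sᶜ hcompl hz
    exact sub_eq_zero.1 this
end

section
/- Theorem 2 (optimal-bandwidth, optimal-access repair for C_0). Let g' ∈ {0,…,u−1} (a single failed node j' = g' in rack 0) and let R ⊆ {1,…,n̄−1} be any set of helper racks with |R| = d̄. If two codewords c, c' ∈ C_0 satisfy (i) ∑_{g=0}^{u−1} λ_{eu+g}^z · c_{eu+g,0} = ∑_{g=0}^{u−1} λ_{eu+g}^z · c'_{eu+g,0} for every e ∈ R and every z = 0,…,η−1, and (ii) c_g = c'_g (all l coordinates) for every g ∈ {0,…,u−1}∖{g'}, then c_{g'} = c'_{g'}. Hence the failed node is repaired by downloading d̄η = d̄l/s̄ symbols of F from the helper racks (attaining the cut-set bound), these symbols being generated by accessing only the d̄u symbols {c_{eu+g,0} : e ∈ R, 0 ≤ g < u} (attaining the access bound of Theorem 1 for h = 1). -/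
open Finset Matrix

private lemma aux_pow_inj {F : Type*} [Field F] (x : F) (hx : x ≠ 0) {a b : ℕ}
    (ha : a < orderOf x) (hb : b < orderOf x) (h : x ^ a = x ^ b) : a = b := by
  wlog hab : a ≤ b generalizing a b
  · exact (this hb ha h.symm (le_of_not_ge hab)).symm
  by_contra hne
  have h1 : x ^ a * x ^ (b - a) = x ^ a * 1 := by
    rw [mul_one, ← pow_add]; rw [h]; congr 1; omega
  have h2 : x ^ (b - a) = 1 := mul_left_cancel₀ (pow_ne_zero a hx) h1
  have h3 : orderOf x ∣ b - a := orderOf_dvd_of_pow_eq_one h2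
  have h4 := Nat.le_of_dvd (by omega) h3
  omega

private lemma aux_vand {F : Type*} [Field F] {n : ℕ} {ι : Type*} [Fintype ι] [DecidableEq ι]
    (hcard : Fintype.card ι = n) (x : ι → F) (hx : Function.Injective x) (X : ι → F)
    (h : ∀ w < n, ∑ i, x i ^ w * X i = 0) : ∀ i, X i = 0 := by
  classical
  let e : ι ≃ Fin n := Fintype.equivFinOfCardEq hcard
  set M : Matrix (Fin n) (Fin n) F := (Matrix.vandermonde (fun i => x (e.symm i)))ᵀ with hM
  have hdet : M.det ≠ 0 := by
    rw [hM, Matrix.det_transpose, Matrix.det_vandermonde]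
    apply Finset.prod_ne_zero_iff.2
    intro i _
    apply Finset.prod_ne_zero_iff.2
    intro j hj
    have : i ≠ j := by simp only [Finset.mem_Ioi] at hj; exact hj.ne'.symm
    exact sub_ne_zero.2 fun hxy => this (e.symm.injective (hx hxy)).symm
  have hmv : M.mulVec (fun i => X (e.symm i)) = 0 := by
    funext w
    have := h w.1 w.2
    simp only [Matrix.mulVec, dotProduct, hM, Matrix.transpose_apply,
      Matrix.vandermonde, Matrix.of_apply]
    rw [← Equiv.sum_comp e.symm (fun i => x i ^ (w : ℕ) * X i)] at this
    simpa using this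
  intro i
  have := Matrix.eq_zero_of_mulVec_eq_zero hdet hmv
  have h2 := congrFun this (e i)
  simpa using h2

/-- **Theorem 2 (optimal-bandwidth, optimal-access repair for `C₀`).**
For a single failed node `g'` in rack `0` and any set `R` of `d̄` helper racks
(`0 ∉ R`), any two codewords of `C₀` producing the same downloaded symbols
`∑_{g<u} λ_{eu+g}^z · c_{eu+g,0}` (`e ∈ R`, `0 ≤ z < η = u−v`) and agreeing on all
local nodes of rack `0` other than `g'` also agree on the failed node `g'`.
Hence the failed node is repaired from `d̄·η = d̄l/s̄` downloaded symbols of `F`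
(attaining the cut-set bound), generated by accessing only the `d̄·u` symbols
`{c_{eu+g,0} : e ∈ R, 0 ≤ g < u}` (attaining the access bound of Theorem 1 for `h = 1`). -/
theorem construction1_repair
    (F : Type*) [Field F]
    (u nb kb v db sb l r m : ℕ)
    (hu : 1 < u) (hkb : 1 ≤ kb) (hnb : kb < nb) (hv : v < u)
    (hdb1 : kb ≤ db) (hdb2 : db ≤ nb - 1) (hsb : sb = db - kb + 1)
    (hm : m = nb + sb - 1) (hl : l = sb * (u - v)) (hl0 : 0 < l)
    (hnb0 : 0 < nb) (hr : r = nb * u - (kb * u + v))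
    (lam : F) (hlam : orderOf lam = m * u)
    (mu : Fin l → Fin u → F)
    (hmu : ∀ p : Fin l, ∀ g : Fin u, mu p g =
      if p.1 % sb = 0 then lam ^ ((g.1 + p.1 / sb) * m)
      else lam ^ (nb + p.1 % sb - 1 + (p.1 / sb) * m))
    (C0 : Set ((Fin nb × Fin u) → Fin l → F))
    (hC0 : ∀ c, c ∈ C0 ↔ ∀ t < r,
      ((∑ j : Fin nb × Fin u, lam ^ ((j.1.1 + j.2.1 * m) * t) * c j ⟨0, hl0⟩)
        + ∑ g : Fin u, ∑ p ∈ Finset.univ.filter (fun p : Fin l => p.1 ≠ 0),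
            (mu p g) ^ t * c (⟨0, hnb0⟩, g) p = 0)
      ∧ ∀ i : Fin l, i.1 ≠ 0 →
          ∑ j : Fin nb × Fin u, lam ^ ((j.1.1 + j.2.1 * m) * t) * c j i = 0)
    (g' : Fin u)
    (R : Finset (Fin nb)) (hR : R.card = db) (h0R : (⟨0, hnb0⟩ : Fin nb) ∉ R)
    (c c' : (Fin nb × Fin u) → Fin l → F) (hc : c ∈ C0) (hc' : c' ∈ C0)
    (hdownload : ∀ e ∈ R, ∀ z < u - v,
      ∑ g : Fin u, lam ^ ((e.1 + g.1 * m) * z) * c (e, g) ⟨0, hl0⟩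
        = ∑ g : Fin u, lam ^ ((e.1 + g.1 * m) * z) * c' (e, g) ⟨0, hl0⟩)
    (hlocal : ∀ g : Fin u, g ≠ g' → c (⟨0, hnb0⟩, g) = c' (⟨0, hnb0⟩, g)) :
    c (⟨0, hnb0⟩, g') = c' (⟨0, hnb0⟩, g') := by
  classical
  -- basic numeric facts
  have hsb0 : 0 < sb := by omega
  have hη0 : 0 < u - v := by omega
  have hηu : u - v ≤ u := by omega
  have hmnb : nb ≤ m := by omega
  have hm0 : 0 < m := by omega
  set rack0 : Fin nb := ⟨0, hnb0⟩ with hrack0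
  set i0 : Fin l := ⟨0, hl0⟩ with hi0
  set d : (Fin nb × Fin u) → Fin l → F := fun j i => c j i - c' j i with hd
  suffices hgoal : ∀ i, d (rack0, g') i = 0 by
    funext i
    have := hgoal i
    rw [hd] at this
    simpa [sub_eq_zero] using this
  -- order facts
  have hlam1 : lam ^ (m * u) = 1 := by rw [← hlam]; exact pow_orderOf_eq_one lam
  have hlam0 : lam ≠ 0 := by
    intro h
    rw [h, zero_pow (by positivity)] at hlam1
    exact zero_ne_one hlam1
  have hord : ∀ a b : ℕ, 0 < a → a * b = m * u → orderOf (lam ^ a) = b := by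
    intro a b ha hab
    apply Nat.dvd_antisymm
    · apply orderOf_dvd_of_pow_eq_one
      rw [← pow_mul, hab, hlam1]
    · have h1 : lam ^ (a * orderOf (lam ^ a)) = 1 := by
        rw [pow_mul]; exact pow_orderOf_eq_one _
      have h2 : m * u ∣ a * orderOf (lam ^ a) := by
        rw [← hlam]; exact orderOf_dvd_of_pow_eq_one h1
      rw [← hab] at h2
      exact (Nat.mul_dvd_mul_iff_left ha).1 h2
  have hxiord : orderOf (lam ^ u) = m := hord u m (by omega) (Nat.mul_comm u m)
  have hbord : orderOf (lam ^ m) = u := hord m u hm0 rfl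
  -- difference codeword facts
  have hd1 : ∀ t < r,
      (∑ j : Fin nb × Fin u, lam ^ ((j.1.1 + j.2.1 * m) * t) * d j i0)
        + ∑ g : Fin u, ∑ p ∈ Finset.univ.filter (fun p : Fin l => p.1 ≠ 0),
            (mu p g) ^ t * d (rack0, g) p = 0 := by
    intro t ht
    have A := ((hC0 c).1 hc t ht).1
    have B := ((hC0 c').1 hc' t ht).1
    simp only [hd, mul_sub, Finset.sum_sub_distrib]
    rw [hrack0, hi0] at A B ⊢
    linear_combination A - B
  have hdl : ∀ e ∈ R, ∀ z < u - v,
      ∑ g : Fin u, lam ^ ((e.1 + g.1 * m) * z) * d (e, g) i0 = 0 := by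
    intro e he z hz
    have := hdownload e he z hz
    simp only [hd, mul_sub, Finset.sum_sub_distrib]
    rw [hi0] at this ⊢
    linear_combination this
  have hloc : ∀ g : Fin u, g ≠ g' → ∀ p, d (rack0, g) p = 0 := by
    intro g hg p
    simp [hd, hlocal g hg]
  -- setup for the grouped system
  set q := nb - kb with hq
  have hq0 : 0 < q := by omega
  set Af : Fin l → ℕ := fun p => if p.1 % sb = 0 then 0 else nb + p.1 % sb - 1 with hAf
  have hAfm : ∀ p : Fin l, Af p < m := by
    intro p
    rw [hAf]
    simp only []
    split
    · omega
    · have := Nat.mod_lt p.1 hsb0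
      omega
  set X : ℕ → Fin m → F := fun z a =>
    (∑ j : Fin nb × Fin u, if j.1.1 = a.1 then lam ^ ((j.1.1 + j.2.1 * m) * z) * d j i0 else 0)
    + ∑ g : Fin u, ∑ p ∈ Finset.univ.filter (fun p : Fin l => p.1 ≠ 0),
        (if Af p = a.1 then (mu p g) ^ z * d (rack0, g) p else 0) with hX
  -- collapse of an ite-sum over Fin n
  have hcol : ∀ {n : ℕ} (b : Fin n) (f : Fin n → F),
      (∑ a : Fin n, if b.1 = a.1 then f a else 0) = f b := by
    intro n b f
    rw [Finset.sum_eq_single_of_mem b (Finset.mem_univ b)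
      (fun a _ hne => if_neg (fun h => hne (show a = b from Fin.ext h.symm)))]
    rw [if_pos rfl]
  -- power decomposition
  have hpowbase : ∀ (b : F) (A' w z : ℕ), b ^ u = (lam ^ u) ^ A' →
      b ^ (w * u + z) = (lam ^ u) ^ (A' * w) * b ^ z := by
    intro b A' w z hb
    rw [pow_add, mul_comm w u, pow_mul, hb, ← pow_mul]
  have hbase_node : ∀ (e : Fin nb) (g : Fin u), (lam ^ (e.1 + g.1 * m)) ^ u = (lam ^ u) ^ e.1 := by
    intro e g
    rw [← pow_mul, ← pow_mul]
    have h1 : (e.1 + g.1 * m) * u = u * e.1 + m * u * g.1 := by ring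
    rw [h1, pow_add, pow_mul lam (m*u) g.1, hlam1, one_pow, mul_one]
  have hbase_mu : ∀ (p : Fin l) (g : Fin u), (mu p g) ^ u = (lam ^ u) ^ (Af p) := by
    intro p g
    rw [hmu p g, hAf]
    simp only []
    split
    · rw [← pow_mul]
      have h1 : (g.1 + p.1 / sb) * m * u = m * u * (g.1 + p.1 / sb) := by ring
      rw [h1, pow_mul lam (m*u), hlam1, one_pow, pow_zero]
    · rw [← pow_mul, ← pow_mul]
      have h1 : (nb + p.1 % sb - 1 + p.1 / sb * m) * u
          = u * (nb + p.1 % sb - 1) + m * u * (p.1 / sb) := by ring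
      rw [h1, pow_add, pow_mul lam (m*u), hlam1, one_pow, mul_one]
  -- Claim 1 : grouped parity equations
  have hC1 : ∀ z < u - v, ∀ w < q, ∑ a : Fin m, (lam ^ u) ^ (a.1 * w) * X z a = 0 := by
    intro z hz w hw
    have ht : w * u + z < r := by
      have h1 : w * u + u ≤ q * u := by
        have h2 := Nat.mul_le_mul_right u (show w + 1 ≤ q by omega)
        rwa [Nat.add_mul, one_mul] at h2
      have h3 : q * u = nb * u - kb * u := by rw [hq, Nat.sub_mul]
      have h4 : kb * u ≤ nb * u := Nat.mul_le_mul_right u (le_of_lt hnb)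
      omega
    have hEq := hd1 (w * u + z) ht
    calc ∑ a : Fin m, (lam ^ u) ^ (a.1 * w) * X z a
        = (∑ j : Fin nb × Fin u, lam ^ ((j.1.1 + j.2.1 * m) * (w * u + z)) * d j i0)
          + ∑ g : Fin u, ∑ p ∈ Finset.univ.filter (fun p : Fin l => p.1 ≠ 0),
              (mu p g) ^ (w * u + z) * d (rack0, g) p := ?_
      _ = 0 := hEq
    rw [hX]
    simp only []
    rw [show (∑ a : Fin m, (lam ^ u) ^ (a.1 * w) *
        ((∑ j : Fin nb × Fin u, if j.1.1 = a.1 then lam ^ ((j.1.1 + j.2.1 * m) * z) * d j i0 else 0)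
        + ∑ g : Fin u, ∑ p ∈ Finset.univ.filter (fun p : Fin l => p.1 ≠ 0),
            (if Af p = a.1 then (mu p g) ^ z * d (rack0, g) p else 0)))
      = ∑ a : Fin m,
        ((∑ j : Fin nb × Fin u, if j.1.1 = a.1 then (lam ^ u) ^ (a.1 * w) * (lam ^ ((j.1.1 + j.2.1 * m) * z) * d j i0) else 0)
        + ∑ g : Fin u, ∑ p ∈ Finset.univ.filter (fun p : Fin l => p.1 ≠ 0),
            (if Af p = a.1 then (lam ^ u) ^ (a.1 * w) * ((mu p g) ^ z * d (rack0, g) p) else 0))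
      from Finset.sum_congr rfl fun a _ => by
        rw [mul_add, Finset.mul_sum, Finset.mul_sum]
        congr 1
        · exact Finset.sum_congr rfl fun j _ => by rw [mul_ite, mul_zero]
        · refine Finset.sum_congr rfl fun g _ => ?_
          rw [Finset.mul_sum]
          exact Finset.sum_congr rfl fun p _ => by rw [mul_ite, mul_zero]]
    rw [Finset.sum_add_distrib]
    congr 1
    · rw [Finset.sum_comm]
      refine Finset.sum_congr rfl fun j _ => ?_
      have hjm : j.1.1 < m := lt_of_lt_of_le j.1.2 hmnb
      have hco := hcol (⟨j.1.1, hjm⟩ : Fin m)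
        (fun a => (lam ^ u) ^ (a.1 * w) * (lam ^ ((j.1.1 + j.2.1 * m) * z) * d j i0))
      simp only [] at hco
      rw [hco]
      show (lam ^ u) ^ (j.1.1 * w) * (lam ^ ((j.1.1 + j.2.1 * m) * z) * d j i0)
          = lam ^ ((j.1.1 + j.2.1 * m) * (w * u + z)) * d j i0
      rw [pow_mul lam (j.1.1 + j.2.1 * m) (w * u + z),
        hpowbase (lam ^ (j.1.1 + j.2.1 * m)) j.1.1 w z (hbase_node j.1 j.2),
        ← pow_mul lam (j.1.1 + j.2.1 * m) z, mul_assoc]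
    · rw [Finset.sum_comm]
      refine Finset.sum_congr rfl fun g _ => ?_
      rw [Finset.sum_comm]
      refine Finset.sum_congr rfl fun p hp => ?_
      have hco := hcol (⟨Af p, hAfm p⟩ : Fin m)
        (fun a => (lam ^ u) ^ (a.1 * w) * ((mu p g) ^ z * d (rack0, g) p))
      simp only [] at hco
      rw [hco]
      show (lam ^ u) ^ (Af p * w) * ((mu p g) ^ z * d (rack0, g) p)
          = (mu p g) ^ (w * u + z) * d (rack0, g) p
      rw [hpowbase (mu p g) (Af p) w z (hbase_mu p g), mul_assoc]
  -- Claim 2 : X vanishes on helper racks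
  have hC2 : ∀ z < u - v, ∀ a : Fin m, (∃ e ∈ R, e.1 = a.1) → X z a = 0 := by
    intro z hz a ⟨e, heR, hea⟩
    have he0 : e.1 ≠ 0 := by
      intro h
      exact h0R (by rwa [show e = rack0 from Fin.ext (by rw [h, hrack0])] at heR)
    have hean : a.1 < nb := hea ▸ e.2
    rw [hX]
    simp only []
    have h1 : (∑ j : Fin nb × Fin u,
        if j.1.1 = a.1 then lam ^ ((j.1.1 + j.2.1 * m) * z) * d j i0 else 0) = 0 := by
      rw [Fintype.sum_prod_type]
      rw [show (∑ e' : Fin nb, ∑ g : Fin u,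
          if (e', g).1.1 = a.1 then lam ^ (((e', g).1.1 + (e', g).2.1 * m) * z) * d (e', g) i0 else 0)
        = ∑ e' : Fin nb, (if e.1 = e'.1 then
            ∑ g : Fin u, lam ^ ((e'.1 + g.1 * m) * z) * d (e', g) i0 else 0) from
        Finset.sum_congr rfl fun e' _ => by
          by_cases h : e'.1 = a.1
          · rw [Finset.sum_congr rfl fun g _ => if_pos h, if_pos (by omega)]
          · rw [Finset.sum_congr rfl fun g _ => if_neg h, if_neg (by omega), Finset.sum_const_zero]]
      rw [hcol e (fun e' => ∑ g : Fin u, lam ^ ((e'.1 + g.1 * m) * z) * d (e', g) i0)]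
      exact hdl e heR z hz
    have h2 : (∑ g : Fin u, ∑ p ∈ Finset.univ.filter (fun p : Fin l => p.1 ≠ 0),
        if Af p = a.1 then (mu p g) ^ z * d (rack0, g) p else 0) = 0 := by
      apply Finset.sum_eq_zero
      intro g _
      apply Finset.sum_eq_zero
      intro p hp
      apply if_neg
      rw [hAf]
      simp only []
      split
      · omega
      · have hps : p.1 % sb ≠ 0 := by assumption
        omega
    rw [h1, h2, add_zero]
  -- Claim 3 : all grouped unknowns vanish
  have hXS : ∀ z < u - v, ∀ a : Fin m, X z a = 0 := by
    intro z hz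
    set S : Finset (Fin m) := (R.image (Fin.castLE hmnb))ᶜ with hS
    have hnotS : ∀ a : Fin m, a ∉ S → X z a = 0 := by
      intro a ha
      simp only [hS, Finset.mem_compl, not_not] at ha
      obtain ⟨e, heR, hec⟩ := Finset.mem_image.1 ha
      exact hC2 z hz a ⟨e, heR, by rw [← hec]; rfl⟩
    have hScard : Fintype.card {x // x ∈ S} = q := by
      rw [Fintype.card_coe, hS, Finset.card_compl,
        Finset.card_image_of_injective _ (Fin.castLE_injective hmnb), hR]
      simp only [Fintype.card_fin]
      omega
    have hinj : Function.Injective (fun i : {x // x ∈ S} => (lam ^ u) ^ (i.1.1 : ℕ)) := by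
      intro i j h
      have := aux_pow_inj (lam ^ u) (pow_ne_zero u hlam0)
        (a := i.1.1) (b := j.1.1) (by rw [hxiord]; exact i.1.2) (by rw [hxiord]; exact j.1.2) h
      exact Subtype.ext (Fin.ext this)
    have heqs : ∀ w < q, ∑ i : {x // x ∈ S}, ((lam ^ u) ^ (i.1.1 : ℕ)) ^ w * X z i.1 = 0 := by
      intro w hw
      rw [Finset.sum_coe_sort S (fun a : Fin m => ((lam ^ u) ^ (a.1 : ℕ)) ^ w * X z a)]
      rw [Finset.sum_subset (Finset.subset_univ S)
        (fun a _ ha => by rw [hnotS a ha, mul_zero])]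
      rw [show (∑ a : Fin m, ((lam ^ u) ^ (a.1 : ℕ)) ^ w * X z a)
          = ∑ a : Fin m, (lam ^ u) ^ (a.1 * w) * X z a from
        Finset.sum_congr rfl fun a _ => by rw [← pow_mul]]
      exact hC1 z hz w hw
    have hzero := aux_vand hScard _ hinj (fun i => X z i.1) heqs
    intro a
    by_cases ha : a ∈ S
    · exact hzero ⟨a, ha⟩
    · exact hnotS a ha
  -- index arithmetic helper
  have hlt : ∀ τ κ : ℕ, τ < sb → κ < u - v → κ * sb + τ < l := by
    intro τ κ hτ hκ
    calc κ * sb + τ < κ * sb + sb := by omega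
      _ = (κ + 1) * sb := by ring
      _ ≤ (u - v) * sb := Nat.mul_le_mul_right sb (by omega)
      _ = l := by rw [hl, Nat.mul_comm]
  -- Claim 4 : recovery of the failed node, coordinate by coordinate
  have hfin : ∀ τ (hτ : τ < sb) κ (hκ : κ < u - v),
      d (rack0, g') ⟨κ * sb + τ, hlt τ κ hτ hκ⟩ = 0 := by
    intro τ hτ
    set aτ : Fin m := ⟨if τ = 0 then 0 else nb + τ - 1, by split <;> omega⟩ with haτ
    have haτv : aτ.1 = if τ = 0 then 0 else nb + τ - 1 := rfl
    set Yf : Fin (u - v) → F :=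
      fun κ => d (rack0, g') ⟨κ.1 * sb + τ, hlt τ κ.1 hτ κ.2⟩ with hYf
    set fac : ℕ → F :=
      fun z => if τ = 0 then lam ^ (g'.1 * m * z) else lam ^ ((nb + τ - 1) * z) with hfac
    have hfac0 : ∀ z, fac z ≠ 0 := by
      intro z; rw [hfac]; simp only []; split <;> exact pow_ne_zero _ hlam0
    have hcond : ∀ p : Fin l, (Af p = aτ.1) ↔ (p.1 % sb = τ) := by
      intro p
      rw [hAf, haτv]
      simp only []
      have hps := Nat.mod_lt p.1 hsb0
      split_ifs with h1 h2 h2 <;> omega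
    have hkeyz : ∀ z < u - v, ∑ κ : Fin (u - v), (lam ^ (κ.1 * m)) ^ z * Yf κ = 0 := by
      intro z hz
      have hX0 := hXS z hz aτ
      have hB : (∑ g : Fin u, ∑ p ∈ Finset.univ.filter (fun p : Fin l => p.1 ≠ 0),
          if Af p = aτ.1 then (mu p g) ^ z * d (rack0, g) p else 0)
          = ∑ κ ∈ Finset.univ.filter (fun κ : Fin (u - v) => κ.1 * sb + τ ≠ 0),
              fac z * ((lam ^ (κ.1 * m)) ^ z * Yf κ) := by
        rw [Finset.sum_eq_single_of_mem g' (Finset.mem_univ g')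
          (fun g _ hg => Finset.sum_eq_zero fun p _ => by
            rw [hloc g hg p, mul_zero, ite_self])]
        rw [show (∑ p ∈ Finset.univ.filter (fun p : Fin l => p.1 ≠ 0),
            if Af p = aτ.1 then (mu p g') ^ z * d (rack0, g') p else 0)
          = ∑ p ∈ Finset.univ.filter (fun p : Fin l => p.1 ≠ 0),
            if p.1 % sb = τ then (mu p g') ^ z * d (rack0, g') p else 0 from
          Finset.sum_congr rfl fun p _ => if_congr (hcond p) rfl rfl]
        rw [← Finset.sum_filter, Finset.filter_filter]
        refine Finset.sum_nbij'
          (i := fun p : Fin l => (⟨p.1 / sb, by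
            rw [Nat.div_lt_iff_lt_mul hsb0]
            have h2 := p.2
            have hc : sb * (u - v) = (u - v) * sb := Nat.mul_comm _ _
            omega⟩ : Fin (u - v)))
          (j := fun κ : Fin (u - v) => (⟨κ.1 * sb + τ, hlt τ κ.1 hτ κ.2⟩ : Fin l))
          ?_ ?_ ?_ ?_ ?_
        · intro p hp
          simp only [Finset.mem_filter, Finset.mem_univ, true_and] at hp ⊢
          have hdm := Nat.div_add_mod p.1 sb
          have hc : sb * (p.1 / sb) = p.1 / sb * sb := Nat.mul_comm _ _
          omega
        · intro κ hκ
          simp only [Finset.mem_filter, Finset.mem_univ, true_and] at hκ ⊢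
          constructor
          · exact hκ
          · rw [Nat.mul_comm κ.1 sb, Nat.mul_add_mod]
            exact Nat.mod_eq_of_lt hτ
        · intro p hp
          simp only [Finset.mem_filter, Finset.mem_univ, true_and] at hp
          apply Fin.ext
          have hdm := Nat.div_add_mod p.1 sb
          have hc : sb * (p.1 / sb) = p.1 / sb * sb := Nat.mul_comm _ _
          simp only []
          omega
        · intro κ hκ
          apply Fin.ext
          simp only []
          rw [Nat.mul_comm κ.1 sb, Nat.mul_add_div hsb0, Nat.div_eq_of_lt hτ, add_zero]
        · intro p hp
          simp only [Finset.mem_filter, Finset.mem_univ, true_and] at hp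
          show (mu p g') ^ z * d (rack0, g') p
              = fac z * ((lam ^ (p.1 / sb * m)) ^ z * d (rack0, g')
                  ⟨p.1 / sb * sb + τ, hlt τ (p.1 / sb) hτ (by
                    rw [Nat.div_lt_iff_lt_mul hsb0]
                    have h2 := p.2
                    have hc : sb * (u - v) = (u - v) * sb := Nat.mul_comm _ _
                    omega)⟩)
          have hpd : (⟨p.1 / sb * sb + τ, hlt τ (p.1 / sb) hτ (by
                    rw [Nat.div_lt_iff_lt_mul hsb0]
                    have h2 := p.2
                    have hc : sb * (u - v) = (u - v) * sb := Nat.mul_comm _ _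
                    omega)⟩ : Fin l) = p := by
            apply Fin.ext
            have hdm := Nat.div_add_mod p.1 sb
            have hc : sb * (p.1 / sb) = p.1 / sb * sb := Nat.mul_comm _ _
            simp only []
            omega
          rw [hpd]
          have hmu' : (mu p g') ^ z = fac z * (lam ^ (p.1 / sb * m)) ^ z := by
            rw [hmu p g', hp.2, hfac]
            simp only []
            split_ifs with h0
            · rw [← pow_mul, ← pow_mul, ← pow_add]
              congr 1
              ring
            · rw [← pow_mul, ← pow_mul, ← pow_add]
              congr 1
              rw [Nat.add_mul]
          rw [hmu', mul_assoc]
      have hA : (∑ j : Fin nb × Fin u,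
          if j.1.1 = aτ.1 then lam ^ ((j.1.1 + j.2.1 * m) * z) * d j i0 else 0)
          = ∑ κ ∈ Finset.univ.filter (fun κ : Fin (u - v) => ¬(κ.1 * sb + τ ≠ 0)),
              fac z * ((lam ^ (κ.1 * m)) ^ z * Yf κ) := by
        by_cases hτ0 : τ = 0
        · have hset : Finset.univ.filter (fun κ : Fin (u - v) => ¬(κ.1 * sb + τ ≠ 0))
              = {(⟨0, hη0⟩ : Fin (u - v))} := by
            ext κ
            simp only [Finset.mem_filter, Finset.mem_univ, true_and, not_not,
              Finset.mem_singleton]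
            constructor
            · intro h
              have h1 : κ.1 * sb = 0 := by omega
              have h2 : κ.1 = 0 := by
                rcases Nat.mul_eq_zero.1 h1 with h' | h'
                · exact h'
                · omega
              exact Fin.ext h2
            · intro h
              rw [h]
              show (0 : ℕ) * sb + τ = 0
              omega
          rw [hset, Finset.sum_singleton]
          rw [Fintype.sum_prod_type]
          rw [show (∑ e' : Fin nb, ∑ g : Fin u,
              if (e', g).1.1 = aτ.1 then lam ^ (((e', g).1.1 + (e', g).2.1 * m) * z) * d (e', g) i0 else 0)
            = ∑ e' : Fin nb, (if rack0.1 = e'.1 then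
                ∑ g : Fin u, lam ^ ((e'.1 + g.1 * m) * z) * d (e', g) i0 else 0) from
            Finset.sum_congr rfl fun e' _ => by
              by_cases h : e'.1 = aτ.1
              · rw [Finset.sum_congr rfl fun g _ => if_pos h, if_pos (by
                  rw [haτv, if_pos hτ0] at h
                  show (0 : ℕ) = e'.1
                  omega)]
              · rw [Finset.sum_congr rfl fun g _ => if_neg h, if_neg (by
                  rw [haτv, if_pos hτ0] at h
                  show ¬((0 : ℕ) = e'.1)
                  omega), Finset.sum_const_zero]]
          rw [hcol rack0 (fun e' => ∑ g : Fin u, lam ^ ((e'.1 + g.1 * m) * z) * d (e', g) i0)]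
          rw [Finset.sum_eq_single_of_mem g' (Finset.mem_univ g')
            (fun g _ hg => by rw [hloc g hg, mul_zero])]
          rw [hYf, hfac]
          simp only []
          rw [if_pos hτ0]
          have hidx : (⟨(0 : ℕ) * sb + τ, hlt τ 0 hτ hη0⟩ : Fin l) = i0 := by
            apply Fin.ext
            simp only [hi0]
            omega
          show lam ^ ((rack0.1 + g'.1 * m) * z) * d (rack0, g') i0
            = lam ^ (g'.1 * m * z) * ((lam ^ ((0 : ℕ) * m)) ^ z *
                d (rack0, g') ⟨(0 : ℕ) * sb + τ, hlt τ 0 hτ hη0⟩)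
          rw [hidx]
          have hrv : rack0.1 = 0 := rfl
          rw [hrv]
          rw [show (0 : ℕ) * m = 0 from by omega, pow_zero, one_pow, one_mul,
            Nat.zero_add]
        · have hset : Finset.univ.filter (fun κ : Fin (u - v) => ¬(κ.1 * sb + τ ≠ 0))
              = ∅ := by
            apply Finset.filter_eq_empty_iff.2
            intro κ _
            simp only [not_not]
            intro h
            exact hτ0 (by omega)
          rw [hset, Finset.sum_empty]
          apply Finset.sum_eq_zero
          intro j _
          apply if_neg
          rw [haτv, if_neg hτ0]
          have := j.1.2
          omega
      have hXeq : X z aτ = fac z * ∑ κ : Fin (u - v), (lam ^ (κ.1 * m)) ^ z * Yf κ := by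
        rw [hX]
        simp only []
        rw [hA, hB, Finset.mul_sum]
        rw [← Finset.sum_filter_add_sum_filter_not Finset.univ
          (fun κ : Fin (u - v) => κ.1 * sb + τ ≠ 0)
          (fun κ => fac z * ((lam ^ (κ.1 * m)) ^ z * Yf κ))]
        rw [add_comm]
      rw [hXeq] at hX0
      exact (mul_eq_zero.1 hX0).resolve_left (hfac0 z)
    have hinj : Function.Injective (fun κ : Fin (u - v) => lam ^ (κ.1 * m)) := by
      intro κ κ' h
      have h2 : (lam ^ m) ^ κ.1 = (lam ^ m) ^ κ'.1 := by
        rw [← pow_mul, ← pow_mul, Nat.mul_comm m κ.1, Nat.mul_comm m κ'.1]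
        exact h
      refine Fin.ext (aux_pow_inj (lam ^ m) (pow_ne_zero m hlam0) ?_ ?_ h2)
      · rw [hbord]; exact lt_of_lt_of_le κ.2 hηu
      · rw [hbord]; exact lt_of_lt_of_le κ'.2 hηu
    have hzero := aux_vand (by simp) _ hinj Yf hkeyz
    intro κ hκ
    have := hzero ⟨κ, hκ⟩
    rw [hYf] at this
    exact this
  -- conclusion
  intro i
  have hi1 : i.1 % sb < sb := Nat.mod_lt _ hsb0
  have hi2 : i.1 / sb < u - v := by
    rw [Nat.div_lt_iff_lt_mul hsb0]
    have h2 := i.2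
    have hc : sb * (u - v) = (u - v) * sb := Nat.mul_comm _ _
    omega
  have h := hfin (i.1 % sb) hi1 (i.1 / sb) hi2
  have hidx : (⟨i.1 / sb * sb + i.1 % sb, hlt _ _ hi1 hi2⟩ : Fin l) = i := by
    apply Fin.ext
    have hdm := Nat.div_add_mod i.1 sb
    have hc : sb * (i.1 / sb) = i.1 / sb * sb := Nat.mul_comm _ _
    simp only []
    omega
  rwa [hidx] at h
end

section
/- MDS property of Construction 2 (part of Theorem 3). The code C of Construction 2 is an (n, k, l = θ^{n̄}) MDS array code: C is an F-linear subspace of (F^l)^n of dimension kl, and for every subset S ⊆ {0,…,n−1} with |S| = k, any two codewords c, c' ∈ C satisfying c_j = c'_j (all l coordinates) for every j ∈ S are equal. -/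
open Matrix

lemma vand_fin {F : Type*} [Field F] {n : ℕ} (x : Fin n → F) (hx : Function.Injective x)
    (c : Fin n → F) (h : ∀ t : Fin n, ∑ j, x j ^ (t : ℕ) * c j = 0) : c = 0 := by
  have hdet : (Matrix.vandermonde x).det ≠ 0 := by
    rw [Matrix.det_vandermonde]
    refine Finset.prod_ne_zero_iff.2 fun i _ => Finset.prod_ne_zero_iff.2 fun j hj => ?_
    exact sub_ne_zero.2 fun e => (Finset.mem_Ioi.1 hj).ne' (hx e)
  haveI : Invertible (Matrix.vandermonde x)ᵀ :=
    Matrix.invertibleOfIsUnitDet (Matrix.vandermonde x)ᵀ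
      (by rw [Matrix.det_transpose]; exact hdet.isUnit)
  have hinj := Matrix.mulVec_injective_of_invertible (Matrix.vandermonde x)ᵀ
  have hmv : (Matrix.vandermonde x)ᵀ *ᵥ c = (Matrix.vandermonde x)ᵀ *ᵥ 0 := by
    rw [Matrix.mulVec_zero]
    funext t
    simpa [Matrix.mulVec, dotProduct, Matrix.vandermonde] using h t
  exact hinj hmv

lemma vand {F : Type*} [Field F] {ι : Type*} [Fintype ι] (x : ι → F)
    (hx : Function.Injective x) (c : ι → F)
    (h : ∀ t < Fintype.card ι, ∑ j, x j ^ t * c j = 0) : ∀ j, c j = 0 := by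
  classical
  let e := Fintype.equivFin ι
  have h0 := vand_fin (x ∘ e.symm) (hx.comp e.symm.injective) (c ∘ e.symm) (by
    intro t
    have ht := h t t.isLt
    rw [← Equiv.sum_comp e.symm (fun j => x j ^ (t : ℕ) * c j)] at ht
    exact ht)
  intro j
  have := congrFun h0 (e j)
  simpa using this

/-- **MDS property of Construction 2** (part of Theorem 3).
Nodes are indexed by `(e, g) : Fin nb × Fin u` (node `j = e·u+g`); symbol
coordinates are identified with their `θ`-ary digit strings `i : Fin nb → Fin θ`
(`θ = s̄(u−v)`, so `l = θ^n̄`), with `i(a,b)` realized by `Function.update i a b`.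
The code `C` cut out by the parity-check equations of Construction 2 is an
`F`-linear subspace of `(F^l)^n` of dimension `kl = (k̄u+v)·θ^n̄`, and any two
codewords agreeing on some `k` nodes are equal (the MDS property). -/
theorem construction2_is_MDS
    (F : Type*) [Field F]
    (u nb kb v db sb th r m : ℕ)
    (hu : 1 < u) (hkb : 1 ≤ kb) (hnb : kb < nb) (hv : v < u)
    (hdb1 : kb ≤ db) (hdb2 : db ≤ nb - 1) (hsb : sb = db - kb + 1)
    (hm : m = nb + sb - 1) (hth : th = sb * (u - v))
    (hr : r = nb * u - (kb * u + v))
    (lam : F) (hlam : orderOf lam = m * u)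
    (mu : Fin th → (Fin nb × Fin u) → F)
    (hmu : ∀ p : Fin th, ∀ j : Fin nb × Fin u, mu p j =
      if p.1 % sb = 0 then lam ^ (j.1.1 + (j.2.1 + p.1 / sb) * m)
      else lam ^ (nb + p.1 % sb - 1 + (p.1 / sb) * m))
    (Ccode : Set ((Fin nb × Fin u) → (Fin nb → Fin th) → F))
    (hmem : ∀ c, c ∈ Ccode ↔ ∀ i : Fin nb → Fin th, ∀ t < r,
      (∑ j : Fin nb × Fin u, lam ^ ((j.1.1 + j.2.1 * m) * t) * c j i)
        + ∑ j : Fin nb × Fin u,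
            (if (i j.1).1 = 0 then
              ∑ p ∈ Finset.univ.filter (fun p : Fin th => p.1 ≠ 0),
                (mu p j) ^ t * c j (Function.update i j.1 p)
            else 0) = 0) :
    (∃ W : Submodule F ((Fin nb × Fin u) → (Fin nb → Fin th) → F),
      (W : Set ((Fin nb × Fin u) → (Fin nb → Fin th) → F)) = Ccode ∧
        Module.finrank F W = (kb * u + v) * th ^ nb)
    ∧ ∀ S : Finset (Fin nb × Fin u), S.card = kb * u + v →
        ∀ c ∈ Ccode, ∀ c' ∈ Ccode, (∀ j ∈ S, c j = c' j) → c = c' := by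
  classical
  have hnbm : nb ≤ m := by omega
  -- injectivity of node values
  have hlamj : Function.Injective
      (fun j : Fin nb × Fin u => lam ^ (j.1.1 + j.2.1 * m)) := by
    intro j j' hjj
    have hb : ∀ j : Fin nb × Fin u, j.1.1 + j.2.1 * m < m * u := by
      intro j
      have h1 : j.1.1 < m := lt_of_lt_of_le j.1.isLt hnbm
      have h2 : j.2.1 + 1 ≤ u := j.2.isLt
      calc j.1.1 + j.2.1 * m < m + j.2.1 * m := by omega
        _ = (j.2.1 + 1) * m := by ring
        _ ≤ u * m := Nat.mul_le_mul_right _ h2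
        _ = m * u := Nat.mul_comm _ _
    have he : j.1.1 + j.2.1 * m = j'.1.1 + j'.2.1 * m := by
      have := pow_injOn_Iio_orderOf (x := lam)
        (by rw [hlam]; exact hb j) (by rw [hlam]; exact hb j') hjj
      exact this
    have hm0 : 0 < m := by omega
    have h1 : j.1.1 < m := lt_of_lt_of_le j.1.isLt hnbm
    have h1' : j'.1.1 < m := lt_of_lt_of_le j'.1.isLt hnbm
    have hg : j.2.1 = j'.2.1 := by
      have d1 : (j.1.1 + j.2.1 * m) / m = j.2.1 := by
        rw [Nat.mul_comm, Nat.add_mul_div_left _ _ hm0, Nat.div_eq_of_lt h1,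
          Nat.zero_add]
      have d2 : (j'.1.1 + j'.2.1 * m) / m = j'.2.1 := by
        rw [Nat.mul_comm, Nat.add_mul_div_left _ _ hm0, Nat.div_eq_of_lt h1',
          Nat.zero_add]
      rw [← d1, ← d2, he]
    have hefst : j.1.1 = j'.1.1 := by
      have := he
      rw [hg] at this
      omega
    exact Prod.ext (Fin.ext hefst) (Fin.ext hg)
  -- the parity-check linear map
  let Hfun : ((Fin nb × Fin u) → (Fin nb → Fin th) → F) →
      ((Fin nb → Fin th) → Fin r → F) := fun c i t =>
    (∑ j : Fin nb × Fin u, lam ^ ((j.1.1 + j.2.1 * m) * (t : ℕ)) * c j i)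
      + ∑ j : Fin nb × Fin u,
          (if (i j.1).1 = 0 then
            ∑ p ∈ Finset.univ.filter (fun p : Fin th => p.1 ≠ 0),
              (mu p j) ^ (t : ℕ) * c j (Function.update i j.1 p)
          else 0)
  have hiteadd : ∀ (P : Prop) [Decidable P] (a b : F),
      (if P then a + b else 0) = (if P then a else 0) + (if P then b else 0) := by
    intro P _ a b; split <;> simp
  have hitemul : ∀ (P : Prop) [Decidable P] (a b : F),
      (if P then a * b else 0) = a * (if P then b else 0) := by
    intro P _ a b; split <;> simp
  let H : ((Fin nb × Fin u) → (Fin nb → Fin th) → F) →ₗ[F]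
      ((Fin nb → Fin th) → Fin r → F) :=
    { toFun := Hfun
      map_add' := by
        intro c c'
        funext i t
        show Hfun (c + c') i t = Hfun c i t + Hfun c' i t
        simp only [Hfun, Pi.add_apply, mul_add, Finset.sum_add_distrib, hiteadd]
        ring
      map_smul' := by
        intro a c
        funext i t
        show Hfun (a • c) i t = a * Hfun c i t
        simp only [Hfun, Pi.smul_apply, smul_eq_mul, mul_add, Finset.mul_sum]
        congr 1
        · exact Finset.sum_congr rfl fun j _ => by ring
        · refine Finset.sum_congr rfl fun j _ => ?_
          split_ifs with h
          · rw [Finset.mul_sum]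
            exact Finset.sum_congr rfl fun p _ => by ring
          · rw [mul_zero] }
  have hHapp : ∀ c i t, H c i t = Hfun c i t := fun _ _ _ => rfl
  -- Ccode is the kernel of H
  have hkerC : ∀ c, c ∈ Ccode ↔ H c = 0 := by
    intro c
    rw [hmem]
    constructor
    · intro h
      funext i t
      exact h i t t.isLt
    · intro h i t ht
      exact congrFun (congrFun h i) (⟨t, ht⟩ : Fin r)
  -- key erasure lemma
  have key : ∀ T : Finset (Fin nb × Fin u), T.card = r →
      ∀ d, H d = 0 → (∀ j ∉ T, d j = 0) → d = 0 := by
    intro T hT d hd hsupp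
    have reduce : ∀ i : Fin nb → Fin th,
        (∀ j : Fin nb × Fin u, (i j.1).1 = 0 → ∀ p : Fin th, p.1 ≠ 0 →
          d j (Function.update i j.1 p) = 0) → ∀ j, d j i = 0 := by
      intro i hcross
      have heq : ∀ t < r, ∑ j ∈ T, (lam ^ (j.1.1 + j.2.1 * m)) ^ t * d j i = 0 := by
        intro t ht
        have h0 := congrFun (congrFun hd i) (⟨t, ht⟩ : Fin r)
        rw [hHapp] at h0
        simp only [Hfun, Pi.zero_apply] at h0
        have h1 : ∑ j : Fin nb × Fin u,
            (if (i j.1).1 = 0 then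
              ∑ p ∈ Finset.univ.filter (fun p : Fin th => p.1 ≠ 0),
                (mu p j) ^ ((⟨t, ht⟩ : Fin r) : ℕ) * d j (Function.update i j.1 p)
            else 0) = 0 := by
          refine Finset.sum_eq_zero fun j _ => ?_
          split
          · refine Finset.sum_eq_zero fun p hp => ?_
            rw [hcross j (by assumption) p (Finset.mem_filter.1 hp).2, mul_zero]
          · rfl
        rw [h1, add_zero] at h0
        calc ∑ j ∈ T, (lam ^ (j.1.1 + j.2.1 * m)) ^ t * d j i
            = ∑ j ∈ T, lam ^ ((j.1.1 + j.2.1 * m) * ((⟨t, ht⟩ : Fin r) : ℕ)) * d j i :=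
              Finset.sum_congr rfl fun j _ => by rw [← pow_mul]
          _ = ∑ j : Fin nb × Fin u,
                lam ^ ((j.1.1 + j.2.1 * m) * ((⟨t, ht⟩ : Fin r) : ℕ)) * d j i :=
              Finset.sum_subset (Finset.subset_univ T)
                (fun j _ hj => by rw [hsupp j hj]; simp)
          _ = 0 := h0
      have hcard : Fintype.card {x // x ∈ T} = r := by
        rw [Fintype.card_coe, hT]
      have hvz := vand (ι := {x // x ∈ T})
        (fun j => lam ^ ((j : Fin nb × Fin u).1.1 + (j : Fin nb × Fin u).2.1 * m))
        (fun a b hab => Subtype.ext (hlamj hab))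
        (fun j => d (j : Fin nb × Fin u) i)
        (by
          intro t ht
          rw [hcard] at ht
          have h2 := heq t ht
          rw [← Finset.sum_coe_sort T
            (fun j => (lam ^ (j.1.1 + j.2.1 * m)) ^ t * d j i)] at h2
          exact h2)
      intro j
      by_cases hj : j ∈ T
      · exact hvz ⟨j, hj⟩
      · rw [hsupp j hj]; rfl
    have main : ∀ nz : ℕ, ∀ i : Fin nb → Fin th,
        (Finset.univ.filter (fun a => (i a).1 = 0)).card ≤ nz → ∀ j, d j i = 0 := by
      intro nz
      induction nz with
      | zero =>
        intro i hi j
        refine reduce i (fun j' hj' p hp => ?_) j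
        have hjf : j'.1 ∈ Finset.univ.filter (fun a => (i a).1 = 0) :=
          Finset.mem_filter.2 ⟨Finset.mem_univ _, hj'⟩
        rw [Finset.card_eq_zero.1 (Nat.le_zero.1 hi)] at hjf
        exact absurd hjf (Finset.notMem_empty _)
      | succ nz ih =>
        intro i hi j
        refine reduce i (fun j' hj' p hp => ?_) j
        have hfil : (Finset.univ.filter
            (fun a => ((Function.update i j'.1 p) a).1 = 0))
            = (Finset.univ.filter (fun a => (i a).1 = 0)).erase j'.1 := by
          ext b
          by_cases hb : b = j'.1
          · subst hb
            simp [Function.update_self, hp]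
          · simp [Function.update_of_ne hb, Finset.mem_erase, hb]
        have hmem' : j'.1 ∈ Finset.univ.filter (fun a => (i a).1 = 0) :=
          Finset.mem_filter.2 ⟨Finset.mem_univ _, hj'⟩
        refine ih (Function.update i j'.1 p) ?_ j'
        rw [hfil, Finset.card_erase_of_mem hmem']
        omega
    funext j i
    exact main _ i le_rfl j
  -- cardinalities
  have hrn : r ≤ nb * u := by omega
  have hcardL : Fintype.card (Fin nb → Fin th) = th ^ nb := by
    simp [Fintype.card_fun]
  have hcardN : Fintype.card (Fin nb × Fin u) = nb * u := by simp
  have hfinD : Module.finrank F ((Fin nb × Fin u) → (Fin nb → Fin th) → F)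
      = nb * u * th ^ nb := by
    rw [Module.finrank_pi_fintype F]
    simp [Module.finrank_pi, hcardL, Finset.sum_const, hcardN]
  have hfinE : Module.finrank F ((Fin nb → Fin th) → Fin r → F)
      = th ^ nb * r := by
    rw [Module.finrank_pi_fintype F]
    simp [Module.finrank_pi, hcardL, Finset.sum_const]
  -- pick a set of r nodes and prove surjectivity of H
  obtain ⟨T₀, -, hT₀⟩ : ∃ T ⊆ (Finset.univ : Finset (Fin nb × Fin u)), T.card = r :=
    Finset.exists_subset_card_eq (by rw [Finset.card_univ, hcardN]; exact hrn)
  let Φ : ({x // x ∈ T₀} → (Fin nb → Fin th) → F) →ₗ[F]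
      ((Fin nb × Fin u) → (Fin nb → Fin th) → F) :=
    { toFun := fun y j => if h : j ∈ T₀ then y ⟨j, h⟩ else 0
      map_add' := by
        intro y y'
        funext j
        by_cases h : j ∈ T₀ <;> simp [h]
      map_smul' := by
        intro a y
        funext j
        by_cases h : j ∈ T₀ <;> simp [h] }
  have hHΦ : Function.Injective (H.comp Φ) := by
    rw [injective_iff_map_eq_zero]
    intro y hy
    have h0 : Φ y = 0 := key T₀ hT₀ (Φ y) hy (fun j hj => by
      show (if h : j ∈ T₀ then y ⟨j, h⟩ else 0) = 0
      rw [dif_neg hj])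
    funext jp i
    have h1 := congrFun (congrFun h0 (jp : Fin nb × Fin u)) i
    have h2 : (Φ y) (jp : Fin nb × Fin u) = y jp := by
      show (if h : (jp : Fin nb × Fin u) ∈ T₀ then y ⟨(jp : Fin nb × Fin u), h⟩ else 0)
        = y jp
      rw [dif_pos jp.2]
    rw [h2] at h1
    exact h1
  have hfinT : Module.finrank F ({x // x ∈ T₀} → (Fin nb → Fin th) → F)
      = th ^ nb * r := by
    rw [Module.finrank_pi_fintype F]
    simp [Module.finrank_pi, hcardL, Finset.sum_const, Fintype.card_coe, hT₀,
      Nat.mul_comm]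
  have hrange : LinearMap.range H = ⊤ := by
    rw [← top_le_iff]
    have h1 : LinearMap.range (H.comp Φ) = ⊤ := by
      apply Submodule.eq_top_of_finrank_eq
      rw [LinearMap.finrank_range_of_inj hHΦ, hfinT, hfinE]
    rw [← h1]
    exact LinearMap.range_comp_le_range Φ H
  have h2 := LinearMap.finrank_range_add_finrank_ker H
  rw [hrange, finrank_top, hfinD, hfinE] at h2
  have hle : kb * u + v ≤ nb * u := by
    have h3 : (kb + 1) * u ≤ nb * u := Nat.mul_le_mul_right _ (by omega)
    have h4 : kb * u + u = (kb + 1) * u := by ring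
    omega
  have haux : th ^ nb * r + (kb * u + v) * th ^ nb = nb * u * th ^ nb := by
    calc th ^ nb * r + (kb * u + v) * th ^ nb
        = th ^ nb * (nb * u - (kb * u + v)) + th ^ nb * (kb * u + v) := by
          rw [hr, Nat.mul_comm (kb * u + v)]
      _ = th ^ nb * ((nb * u - (kb * u + v)) + (kb * u + v)) := (Nat.mul_add _ _ _).symm
      _ = th ^ nb * (nb * u) := by rw [Nat.sub_add_cancel hle]
      _ = nb * u * th ^ nb := Nat.mul_comm _ _
  have hfinker : Module.finrank F (LinearMap.ker H) = (kb * u + v) * th ^ nb :=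
    Nat.add_left_cancel (h2.trans haux.symm)
  refine ⟨⟨LinearMap.ker H, ?_, hfinker⟩, ?_⟩
  · ext c
    rw [SetLike.mem_coe, LinearMap.mem_ker]
    exact (hkerC c).symm
  · intro S hS c hc c' hc' hagree
    have hd : H (c - c') = 0 := by
      rw [map_sub, (hkerC c).1 hc, (hkerC c').1 hc', sub_zero]
    have hTc : Sᶜ.card = r := by
      rw [Finset.card_compl, hS, hcardN, hr]
    have h0 := key Sᶜ hTc (c - c') hd (fun j hj => by
      have hjS : j ∈ S := by simpa using hj
      rw [Pi.sub_apply, hagree j hjS, sub_self])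
    exact sub_eq_zero.1 h0
end

section
/- Repair property of Construction 2 (part of Theorem 3: C is a rack-aware MSR code with optimal access for a single failed node). Let e' ∈ {0,…,n̄−1} be a host rack, g' ∈ {0,…,u−1} (the failed node is j' = e'u + g'), and let R ⊆ {0,…,n̄−1}∖{e'} be any set of helper racks with |R| = d̄. If two codewords c, c' ∈ C satisfy (i) ∑_{g=0}^{u−1} λ^{(e+gm)z} · c_{eu+g,i} = ∑_{g=0}^{u−1} λ^{(e+gm)z} · c'_{eu+g,i} for every e ∈ R, every z = 0,…,η−1, and every i ∈ {0,…,l−1} with i_{e'} = 0, and (ii) c_{e'u+g} = c'_{e'u+g} (all l coordinates) for every g ∈ {0,…,u−1}∖{g'}, then c_{j'} = c'_{j'}. Hence the failed node is repaired by downloading d̄·η·θ^{n̄−1} = d̄l/(d̄−k̄+1) symbols of F (attaining the cut-set bound), generated by accessing only the d̄·u·θ^{n̄−1} = d̄ul/(s̄(u−v)) symbols {c_{eu+g,i} : e ∈ R, 0 ≤ g < u, i_{e'} = 0} (attaining the access bound of Theorem 1 for h = 1). -/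
open Finset in
private lemma vand_aux {F : Type*} [Field F] {ι : Type*} [DecidableEq ι]
    (S : Finset ι) (x : ι → F) (v : ι → F) (W : ℕ)
    (hx : ∀ a ∈ S, ∀ b ∈ S, x a = x b → a = b)
    (hS : S.card ≤ W)
    (h : ∀ w < W, ∑ a ∈ S, v a * x a ^ w = 0) :
    ∀ a ∈ S, v a = 0 := by
  classical
  intro a₀ ha₀
  set f : Polynomial F := ∏ b ∈ S.erase a₀, (Polynomial.X - Polynomial.C (x b)) with hf
  have hmon : ∀ b ∈ S.erase a₀, (Polynomial.X - Polynomial.C (x b)).Monic :=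
    fun b _ => Polynomial.monic_X_sub_C _
  have hdeg : f.natDegree = (S.erase a₀).card := by
    rw [hf, Polynomial.natDegree_prod_of_monic _ _ hmon]
    simp
  have hcard : (S.erase a₀).card < W := by
    have h1 := Finset.card_erase_of_mem ha₀
    have h2 : 1 ≤ S.card := Finset.card_pos.mpr ⟨a₀, ha₀⟩
    omega
  have hdegW : f.natDegree < W := by omega
  have hsum : ∑ a ∈ S, v a * f.eval (x a) = 0 := by
    calc ∑ a ∈ S, v a * f.eval (x a)
        = ∑ a ∈ S, ∑ w ∈ Finset.range W, f.coeff w * (v a * x a ^ w) := by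
          refine Finset.sum_congr rfl fun a _ => ?_
          rw [Polynomial.eval_eq_sum_range' hdegW (x a), Finset.mul_sum]
          exact Finset.sum_congr rfl fun w _ => by ring
      _ = ∑ w ∈ Finset.range W, f.coeff w * ∑ a ∈ S, v a * x a ^ w := by
          rw [Finset.sum_comm]
          exact Finset.sum_congr rfl fun w _ => (Finset.mul_sum _ _ _).symm
      _ = 0 := by
          refine Finset.sum_eq_zero fun w hw => ?_
          rw [h w (Finset.mem_range.mp hw), mul_zero]
  have hmain : v a₀ * f.eval (x a₀) = 0 := by
    have h2 : ∑ a ∈ S, v a * f.eval (x a) = v a₀ * f.eval (x a₀) := by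
      refine Finset.sum_eq_single a₀ (fun b hb hne => ?_) (fun h' => absurd ha₀ h')
      have hz : f.eval (x b) = 0 := by
        rw [hf, Polynomial.eval_prod]
        exact Finset.prod_eq_zero (Finset.mem_erase.mpr ⟨hne, hb⟩) (by simp)
      rw [hz, mul_zero]
    rw [← h2, hsum]
  have hne : f.eval (x a₀) ≠ 0 := by
    rw [hf, Polynomial.eval_prod]
    refine Finset.prod_ne_zero_iff.mpr fun b hb => ?_
    have hb' := Finset.mem_erase.mp hb
    simp only [Polynomial.eval_sub, Polynomial.eval_X, Polynomial.eval_C, sub_ne_zero]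
    exact fun he => hb'.1 (hx a₀ ha₀ b hb'.2 he).symm
  exact (mul_eq_zero.mp hmain).resolve_right hne
/-- **Repair property of Construction 2** (part of Theorem 3: the code is a
rack-aware MSR code with optimal access for a single failed node).
For a failed node `(e', g')` and any set `R` of `d̄` helper racks (`e' ∉ R`), any
two codewords producing the same downloaded symbols
`∑_{g<u} lam^((e+gm)z) · c_{eu+g,i}` for all `e ∈ R`, `0 ≤ z < η = u−v`, and all
coordinates `i` with digit `i_{e'} = 0`, and agreeing on all local nodes of rack
`e'` other than `g'`, also agree on the failed node.  Hence the failed node is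
repaired by downloading `d̄·η·θ^{n̄−1} = d̄l/(d̄−k̄+1)` symbols of `F` (attaining the
cut-set bound), generated by accessing only the `d̄·u·θ^{n̄−1} = d̄ul/(s̄(u−v))`
symbols `{c_{eu+g,i} : e ∈ R, 0 ≤ g < u, i_{e'} = 0}` (attaining the access bound
of Theorem 1 for `h = 1`). -/
theorem construction2_repair
    (F : Type*) [Field F]
    (u nb kb v db sb th r m : ℕ)
    (hu : 1 < u) (hkb : 1 ≤ kb) (hnb : kb < nb) (hv : v < u)
    (hdb1 : kb ≤ db) (hdb2 : db ≤ nb - 1) (hsb : sb = db - kb + 1)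
    (hm : m = nb + sb - 1) (hth : th = sb * (u - v))
    (hr : r = nb * u - (kb * u + v))
    (lam : F) (hlam : orderOf lam = m * u)
    (mu : Fin th → (Fin nb × Fin u) → F)
    (hmu : ∀ p : Fin th, ∀ j : Fin nb × Fin u, mu p j =
      if p.1 % sb = 0 then lam ^ (j.1.1 + (j.2.1 + p.1 / sb) * m)
      else lam ^ (nb + p.1 % sb - 1 + (p.1 / sb) * m))
    (Ccode : Set ((Fin nb × Fin u) → (Fin nb → Fin th) → F))
    (hmem : ∀ c, c ∈ Ccode ↔ ∀ i : Fin nb → Fin th, ∀ t < r,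
      (∑ j : Fin nb × Fin u, lam ^ ((j.1.1 + j.2.1 * m) * t) * c j i)
        + ∑ j : Fin nb × Fin u,
            (if (i j.1).1 = 0 then
              ∑ p ∈ Finset.univ.filter (fun p : Fin th => p.1 ≠ 0),
                (mu p j) ^ t * c j (Function.update i j.1 p)
            else 0) = 0)
    (e' : Fin nb) (g' : Fin u)
    (R : Finset (Fin nb)) (hR : R.card = db) (he'R : e' ∉ R)
    (c c' : (Fin nb × Fin u) → (Fin nb → Fin th) → F)
    (hc : c ∈ Ccode) (hc' : c' ∈ Ccode)
    (hdownload : ∀ e ∈ R, ∀ z < u - v, ∀ i : Fin nb → Fin th, (i e').1 = 0 →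
      ∑ g : Fin u, lam ^ ((e.1 + g.1 * m) * z) * c (e, g) i
        = ∑ g : Fin u, lam ^ ((e.1 + g.1 * m) * z) * c' (e, g) i)
    (hlocal : ∀ g : Fin u, g ≠ g' → c (e', g) = c' (e', g)) :
    c (e', g') = c' (e', g') := by
  classical
  -- basic numeric facts
  have hsb0 : 0 < sb := by omega
  have hη : 0 < u - v := by omega
  have hth0 : 0 < th := by rw [hth]; exact Nat.mul_pos hsb0 hη
  have hnbm : nb ≤ m := by omega
  have hmu0 : 0 < m * u := Nat.mul_pos (by omega) (by omega)
  have hWpos : 0 < nb - kb := by omega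
  -- λ facts
  have hlam1 : lam ^ (m * u) = 1 := by rw [← hlam]; exact pow_orderOf_eq_one lam
  have hlam0 : lam ≠ 0 := by
    intro h0
    rw [h0, zero_pow (by omega)] at hlam1
    exact zero_ne_one hlam1
  have hpowne : ∀ k : ℕ, lam ^ k ≠ 0 := fun k => pow_ne_zero k hlam0
  have hdist : ∀ x y : ℕ, x < m * u → y < m * u → lam ^ x = lam ^ y → x = y := by
    have key : ∀ x y : ℕ, x ≤ y → y < m * u → lam ^ x = lam ^ y → x = y := by
      intro x y hxy hy he
      have h2 : lam ^ x * lam ^ (y - x) = lam ^ x * 1 := by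
        rw [← pow_add, Nat.add_sub_cancel' hxy, he, mul_one]
      have h3 : lam ^ (y - x) = 1 := mul_left_cancel₀ (hpowne x) h2
      have h4 : m * u ∣ (y - x) := hlam ▸ orderOf_dvd_of_pow_eq_one h3
      rcases Nat.eq_zero_or_pos (y - x) with h5 | h5
      · omega
      · have := Nat.le_of_dvd h5 h4; omega
    intro x y hx hy he
    rcases le_total x y with h | h
    · exact key x y h hy he
    · exact (key y x h hx he.symm).symm
  -- canonical θ-ary digit injections
  set pn : ℕ → Fin th := fun x => ⟨x % th, Nat.mod_lt x hth0⟩ with hpndef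
  have hpn : ∀ x, x < th → (pn x).1 = x := fun x hx => Nat.mod_eq_of_lt hx
  have hstep : ∀ κ τ₂ : ℕ, κ < u - v → τ₂ < sb → κ * sb + τ₂ < th := by
    intro κ τ₂ hκ hτ
    calc κ * sb + τ₂ < κ * sb + sb := by omega
      _ = (κ + 1) * sb := by ring
      _ ≤ (u - v) * sb := Nat.mul_le_mul_right _ (by omega)
      _ = th := by rw [hth, Nat.mul_comm]
  -- the difference of the two codewords
  set d : (Fin nb × Fin u) → (Fin nb → Fin th) → F := fun j i => c j i - c' j i with hd
  -- parity equations for d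
  have hpar : ∀ i : Fin nb → Fin th, ∀ t < r,
      (∑ j : Fin nb × Fin u, lam ^ ((j.1.1 + j.2.1 * m) * t) * d j i)
        + ∑ j : Fin nb × Fin u,
            (if (i j.1).1 = 0 then
              ∑ p ∈ Finset.univ.filter (fun p : Fin th => p.1 ≠ 0),
                (mu p j) ^ t * d j (Function.update i j.1 p)
            else 0) = 0 := by
    intro i t ht
    have h1 := (hmem c).mp hc i t ht
    have h2 := (hmem c').mp hc' i t ht
    have hA1 : (∑ j : Fin nb × Fin u, lam ^ ((j.1.1 + j.2.1 * m) * t) * d j i)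
        = (∑ j : Fin nb × Fin u, lam ^ ((j.1.1 + j.2.1 * m) * t) * c j i)
          - (∑ j : Fin nb × Fin u, lam ^ ((j.1.1 + j.2.1 * m) * t) * c' j i) := by
      rw [← Finset.sum_sub_distrib]
      exact Finset.sum_congr rfl fun j _ => mul_sub _ _ _
    have hA2 : (∑ j : Fin nb × Fin u,
            (if (i j.1).1 = 0 then
              ∑ p ∈ Finset.univ.filter (fun p : Fin th => p.1 ≠ 0),
                (mu p j) ^ t * d j (Function.update i j.1 p)
            else 0))
        = (∑ j : Fin nb × Fin u,
            (if (i j.1).1 = 0 then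
              ∑ p ∈ Finset.univ.filter (fun p : Fin th => p.1 ≠ 0),
                (mu p j) ^ t * c j (Function.update i j.1 p)
            else 0))
          - (∑ j : Fin nb × Fin u,
            (if (i j.1).1 = 0 then
              ∑ p ∈ Finset.univ.filter (fun p : Fin th => p.1 ≠ 0),
                (mu p j) ^ t * c' j (Function.update i j.1 p)
            else 0)) := by
      rw [← Finset.sum_sub_distrib]
      refine Finset.sum_congr rfl fun j _ => ?_
      by_cases hcond : (i j.1).1 = 0
      · simp only [if_pos hcond, ← Finset.sum_sub_distrib]
        exact Finset.sum_congr rfl fun p _ => mul_sub _ _ _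
      · simp [hcond]
    rw [hA1, hA2]
    linear_combination h1 - h2
  -- local nodes of rack e' vanish
  have hloc : ∀ g : Fin u, g ≠ g' → ∀ i, d (e', g) i = 0 := by
    intro g hg i
    rw [hd]; show c (e', g) i - c' (e', g) i = 0
    rw [hlocal g hg, sub_self]
  -- downloads vanish for d
  have hdown : ∀ e ∈ R, ∀ z < u - v, ∀ i : Fin nb → Fin th, (i e').1 = 0 →
      ∑ g : Fin u, lam ^ ((e.1 + g.1 * m) * z) * d (e, g) i = 0 := by
    intro e he z hz i hi
    have h1 := hdownload e he z hz i hi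
    have h2 : ∑ g : Fin u, lam ^ ((e.1 + g.1 * m) * z) * d (e, g) i
        = (∑ g : Fin u, lam ^ ((e.1 + g.1 * m) * z) * c (e, g) i)
          - (∑ g : Fin u, lam ^ ((e.1 + g.1 * m) * z) * c' (e, g) i) := by
      rw [← Finset.sum_sub_distrib]
      exact Finset.sum_congr rfl fun g _ => mul_sub _ _ _
    rw [h2, h1, sub_self]
  -- splitting of the nonzero-p sum
  have hPsum : ∀ f : Fin th → F,
      ∑ p ∈ Finset.univ.filter (fun p : Fin th => p.1 ≠ 0), f p
        = (∑ κ ∈ Finset.Ico 1 (u - v), f (pn (κ * sb)))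
          + ∑ τ ∈ Finset.range (sb - 1), ∑ κ ∈ Finset.range (u - v), f (pn (κ * sb + τ + 1)) := by
    intro f
    have hpn0 : (pn 0).1 = 0 := hpn 0 hth0
    have htot : (∑ p : Fin th, f p)
        = ∑ κ ∈ Finset.range (u - v), ∑ τ ∈ Finset.range sb, f (pn (κ * sb + τ)) := by
      have hbij : (∑ p : Fin th, f p)
          = ∑ q ∈ (Finset.range (u - v)) ×ˢ (Finset.range sb), f (pn (q.1 * sb + q.2)) := by
        refine Finset.sum_nbij' (i := fun p : Fin th => ((p.1 / sb, p.1 % sb) : ℕ × ℕ))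
          (j := fun q : ℕ × ℕ => pn (q.1 * sb + q.2)) ?_ ?_ ?_ ?_ ?_
        · intro p _
          simp only [Finset.mem_product, Finset.mem_range]
          refine ⟨?_, Nat.mod_lt _ hsb0⟩
          have hp2 : (p.1 : ℕ) < sb * (u - v) := lt_of_lt_of_eq p.2 hth
          exact Nat.div_lt_of_lt_mul hp2
        · intro q _; exact Finset.mem_univ _
        · intro p _
          show pn (p.1 / sb * sb + p.1 % sb) = p
          rw [Nat.div_add_mod' p.1 sb]
          exact Fin.ext (hpn p.1 p.2)
        · intro q hq
          simp only [Finset.mem_product, Finset.mem_range] at hq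
          have hlt : q.1 * sb + q.2 < th := hstep q.1 q.2 hq.1 hq.2
          have hv1 : (pn (q.1 * sb + q.2)).1 = q.1 * sb + q.2 := hpn _ hlt
          have hdiv : (q.1 * sb + q.2) / sb = q.1 := by
            rw [Nat.mul_comm q.1 sb, Nat.mul_add_div hsb0, Nat.div_eq_of_lt hq.2, Nat.add_zero]
          have hmod : (q.1 * sb + q.2) % sb = q.2 := by
            rw [Nat.mul_comm q.1 sb, Nat.mul_add_mod, Nat.mod_eq_of_lt hq.2]
          show ((pn (q.1 * sb + q.2)).1 / sb, (pn (q.1 * sb + q.2)).1 % sb) = q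
          rw [hv1, hdiv, hmod]
        · intro p _
          show f p = f (pn (p.1 / sb * sb + p.1 % sb))
          rw [Nat.div_add_mod' p.1 sb]
          congr 1
          exact (Fin.ext (hpn p.1 p.2)).symm
      rw [hbij, Finset.sum_product]
    have hfil : Finset.univ.filter (fun p : Fin th => p.1 ≠ 0) = Finset.univ.erase (pn 0) := by
      ext p
      simp only [Finset.mem_filter, Finset.mem_univ, true_and, Finset.mem_erase, and_true]
      constructor
      · intro hne he; exact hne (he ▸ hpn0)
      · intro hne he; exact hne (Fin.ext (he.trans hpn0.symm))
    rw [hfil, Finset.sum_erase_eq_sub (Finset.mem_univ _), htot]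
    have h2 : ∀ κ : ℕ, (∑ τ ∈ Finset.range sb, f (pn (κ * sb + τ)))
        = f (pn (κ * sb)) + ∑ τ ∈ Finset.range (sb - 1), f (pn (κ * sb + τ + 1)) := by
      intro κ
      rw [show sb = (sb - 1) + 1 by omega, Finset.sum_range_succ']
      simp only [Nat.add_zero, ← Nat.add_assoc]
      exact add_comm _ _
    rw [Finset.sum_congr rfl (fun κ _ => h2 κ), Finset.sum_add_distrib]
    have h3 : ∑ κ ∈ Finset.range (u - v), f (pn (κ * sb))
        = f (pn 0) + ∑ κ ∈ Finset.Ico 1 (u - v), f (pn (κ * sb)) := by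
      rw [Finset.range_eq_Ico, Finset.sum_eq_sum_Ico_succ_bot hη, Nat.zero_mul]
    rw [h3, Finset.sum_comm]
    ring
  -- the regrouped parity equations
  have hregroup : ∀ i : Fin nb → Fin th, ∀ z w : ℕ, z + u * w < r →
      (∑ e : Fin nb, (lam ^ (u * w)) ^ e.1 *
        ((∑ g : Fin u, lam ^ ((e.1 + g.1 * m) * z) * d (e, g) i) +
          (if (i e).1 = 0 then
            ∑ κ ∈ Finset.Ico 1 (u - v), lam ^ (κ * m * z) *
              ∑ g : Fin u, lam ^ ((e.1 + g.1 * m) * z) * d (e, g) (Function.update i e (pn (κ * sb)))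
          else 0)))
      + (∑ τ ∈ Finset.range (sb - 1), (lam ^ (u * w)) ^ (nb + τ) *
          ∑ κ ∈ Finset.range (u - v), lam ^ ((nb + τ + κ * m) * z) *
            ∑ e : Fin nb, (if (i e).1 = 0 then
              ∑ g : Fin u, d (e, g) (Function.update i e (pn (κ * sb + τ + 1))) else 0)) = 0 := by
    intro i z w hzww
    have hpow1 : ∀ B A : ℕ, lam ^ (A + B * (m * u)) = lam ^ A := by
      intro B A
      rw [pow_add, show B * (m * u) = (m * u) * B by ring, pow_mul, hlam1, one_pow, mul_one]
    have hsplit3 : ∀ X Y Z B : ℕ, X = Y + Z + B * (m * u) → lam ^ X = lam ^ Y * lam ^ Z := by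
      intro X Y Z B hX
      rw [hX, hpow1 B (Y + Z), pow_add]
    have I1 : ∀ E G : ℕ, lam ^ ((E + G * m) * (z + u * w))
        = lam ^ (u * w * E) * lam ^ ((E + G * m) * z) :=
      fun E G => hsplit3 _ _ _ (G * w) (by ring)
    have I2 : ∀ E G K : ℕ, lam ^ ((E + (G + K) * m) * (z + u * w))
        = lam ^ (u * w * E) * (lam ^ (K * m * z) * lam ^ ((E + G * m) * z)) := by
      intro E G K
      rw [hsplit3 ((E + (G + K) * m) * (z + u * w)) (u * w * E) (K * m * z + (E + G * m) * z)
        ((G + K) * w) (by ring), pow_add]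
    have I3 : ∀ N K : ℕ, lam ^ ((N + K * m) * (z + u * w))
        = lam ^ (u * w * N) * lam ^ ((N + K * m) * z) :=
      fun N K => hsplit3 _ _ _ (K * w) (by ring)
    have hpw : ∀ a : ℕ, (lam ^ (u * w)) ^ a = lam ^ (u * w * a) :=
      fun a => (pow_mul lam (u * w) a).symm
    have hmuIco : ∀ κ ∈ Finset.Ico 1 (u - v), ∀ (e : Fin nb) (g : Fin u),
        mu (pn (κ * sb)) (e, g) = lam ^ (e.1 + (g.1 + κ) * m) := by
      intro κ hκ e g
      rw [Finset.mem_Ico] at hκ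
      have hlt : κ * sb < th := by have := hstep κ 0 hκ.2 hsb0; omega
      have hval : (pn (κ * sb)).1 = κ * sb := hpn _ hlt
      have hmod : (pn (κ * sb)).1 % sb = 0 := by rw [hval]; exact Nat.mul_mod_left κ sb
      have hdiv : (pn (κ * sb)).1 / sb = κ := by rw [hval]; exact Nat.mul_div_cancel κ hsb0
      rw [hmu, if_pos hmod, hdiv]
    have hmuTau : ∀ τ κ : ℕ, τ < sb - 1 → κ < u - v → ∀ (e : Fin nb) (g : Fin u),
        mu (pn (κ * sb + τ + 1)) (e, g) = lam ^ (nb + τ + κ * m) := by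
      intro τ κ hτ hκ e g
      have hlt : κ * sb + τ + 1 < th := by have := hstep κ (τ + 1) hκ (by omega); omega
      have hval : (pn (κ * sb + τ + 1)).1 = κ * sb + τ + 1 := hpn _ hlt
      have hmod : (pn (κ * sb + τ + 1)).1 % sb = τ + 1 := by
        rw [hval, show κ * sb + τ + 1 = sb * κ + (τ + 1) by ring, Nat.mul_add_mod,
          Nat.mod_eq_of_lt (by omega)]
      have hdiv : (pn (κ * sb + τ + 1)).1 / sb = κ := by
        rw [hval, show κ * sb + τ + 1 = sb * κ + (τ + 1) by ring, Nat.mul_add_div hsb0,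
          Nat.div_eq_of_lt (by omega), Nat.add_zero]
      rw [hmu, if_neg (by rw [hmod]; omega), hmod, hdiv]
      congr 1
    have hmain := hpar i (z + u * w) hzww
    have keyA : (∑ j : Fin nb × Fin u, lam ^ ((j.1.1 + j.2.1 * m) * (z + u * w)) * d j i)
        = ∑ e : Fin nb, (lam ^ (u * w)) ^ e.1 *
            (∑ g : Fin u, lam ^ ((e.1 + g.1 * m) * z) * d (e, g) i) := by
      rw [Fintype.sum_prod_type]
      refine Finset.sum_congr rfl fun e _ => ?_
      rw [Finset.mul_sum]
      refine Finset.sum_congr rfl fun g _ => ?_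
      rw [I1 e.1 g.1, hpw e.1]
      ring
    have hC2 : (∑ j : Fin nb × Fin u,
            (if (i j.1).1 = 0 then
              ∑ p ∈ Finset.univ.filter (fun p : Fin th => p.1 ≠ 0),
                (mu p j) ^ (z + u * w) * d j (Function.update i j.1 p)
            else 0))
        = ∑ e : Fin nb, ∑ g : Fin u,
            ((if (i e).1 = 0 then ∑ κ ∈ Finset.Ico 1 (u - v),
                lam ^ (u * w * e.1) * (lam ^ (κ * m * z) *
                  (lam ^ ((e.1 + g.1 * m) * z) * d (e, g) (Function.update i e (pn (κ * sb)))))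
              else 0)
            + (if (i e).1 = 0 then ∑ τ ∈ Finset.range (sb - 1), ∑ κ ∈ Finset.range (u - v),
                lam ^ (u * w * (nb + τ)) * (lam ^ ((nb + τ + κ * m) * z) *
                  d (e, g) (Function.update i e (pn (κ * sb + τ + 1))))
              else 0)) := by
      rw [Fintype.sum_prod_type]
      refine Finset.sum_congr rfl fun e _ => ?_
      refine Finset.sum_congr rfl fun g _ => ?_
      by_cases hce : (i e).1 = 0
      · rw [if_pos hce, if_pos hce, if_pos hce,
          hPsum (fun p => (mu p (e, g)) ^ (z + u * w) * d (e, g) (Function.update i e p))]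
        congr 1
        · refine Finset.sum_congr rfl fun κ hκ => ?_
          rw [hmuIco κ hκ e g, ← pow_mul, I2 e.1 g.1 κ]
          ring
        · refine Finset.sum_congr rfl fun τ hτ => ?_
          refine Finset.sum_congr rfl fun κ hκ => ?_
          rw [hmuTau τ κ (Finset.mem_range.mp hτ) (Finset.mem_range.mp hκ) e g, ← pow_mul,
            I3 (nb + τ) κ]
          ring
      · rw [if_neg hce, if_neg hce, if_neg hce, add_zero]
    have hBrack1 : (∑ e : Fin nb, (lam ^ (u * w)) ^ e.1 *
          (if (i e).1 = 0 then
            ∑ κ ∈ Finset.Ico 1 (u - v), lam ^ (κ * m * z) *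
              ∑ g : Fin u, lam ^ ((e.1 + g.1 * m) * z) * d (e, g) (Function.update i e (pn (κ * sb)))
          else 0))
        = ∑ e : Fin nb, ∑ g : Fin u,
            (if (i e).1 = 0 then ∑ κ ∈ Finset.Ico 1 (u - v),
                lam ^ (u * w * e.1) * (lam ^ (κ * m * z) *
                  (lam ^ ((e.1 + g.1 * m) * z) * d (e, g) (Function.update i e (pn (κ * sb)))))
              else 0) := by
      refine Finset.sum_congr rfl fun e _ => ?_
      by_cases hce : (i e).1 = 0
      · simp only [if_pos hce]
        rw [hpw e.1]
        simp only [Finset.mul_sum]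
        rw [Finset.sum_comm]
      · simp only [if_neg hce, mul_zero, Finset.sum_const_zero]
    have hBrack2 : (∑ τ ∈ Finset.range (sb - 1), (lam ^ (u * w)) ^ (nb + τ) *
          ∑ κ ∈ Finset.range (u - v), lam ^ ((nb + τ + κ * m) * z) *
            ∑ e : Fin nb, (if (i e).1 = 0 then
              ∑ g : Fin u, d (e, g) (Function.update i e (pn (κ * sb + τ + 1))) else 0))
        = ∑ e : Fin nb, ∑ g : Fin u,
            (if (i e).1 = 0 then ∑ τ ∈ Finset.range (sb - 1), ∑ κ ∈ Finset.range (u - v),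
                lam ^ (u * w * (nb + τ)) * (lam ^ ((nb + τ + κ * m) * z) *
                  d (e, g) (Function.update i e (pn (κ * sb + τ + 1))))
              else 0) := by
      have step1 : (∑ τ ∈ Finset.range (sb - 1), (lam ^ (u * w)) ^ (nb + τ) *
            ∑ κ ∈ Finset.range (u - v), lam ^ ((nb + τ + κ * m) * z) *
              ∑ e : Fin nb, (if (i e).1 = 0 then
                ∑ g : Fin u, d (e, g) (Function.update i e (pn (κ * sb + τ + 1))) else 0))
          = ∑ τ ∈ Finset.range (sb - 1), ∑ κ ∈ Finset.range (u - v), ∑ e : Fin nb,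
              (if (i e).1 = 0 then ∑ g : Fin u,
                lam ^ (u * w * (nb + τ)) * (lam ^ ((nb + τ + κ * m) * z) *
                  d (e, g) (Function.update i e (pn (κ * sb + τ + 1)))) else 0) := by
        refine Finset.sum_congr rfl fun τ _ => ?_
        rw [hpw (nb + τ), Finset.mul_sum]
        refine Finset.sum_congr rfl fun κ _ => ?_
        rw [Finset.mul_sum, Finset.mul_sum]
        refine Finset.sum_congr rfl fun e _ => ?_
        by_cases hce : (i e).1 = 0
        · simp only [if_pos hce, Finset.mul_sum]
        · simp only [if_neg hce, mul_zero]
      have step2 : (∑ τ ∈ Finset.range (sb - 1), ∑ κ ∈ Finset.range (u - v), ∑ e : Fin nb,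
              (if (i e).1 = 0 then ∑ g : Fin u,
                lam ^ (u * w * (nb + τ)) * (lam ^ ((nb + τ + κ * m) * z) *
                  d (e, g) (Function.update i e (pn (κ * sb + τ + 1)))) else 0))
          = ∑ e : Fin nb, ∑ τ ∈ Finset.range (sb - 1), ∑ κ ∈ Finset.range (u - v),
              (if (i e).1 = 0 then ∑ g : Fin u,
                lam ^ (u * w * (nb + τ)) * (lam ^ ((nb + τ + κ * m) * z) *
                  d (e, g) (Function.update i e (pn (κ * sb + τ + 1)))) else 0) :=
        (Finset.sum_congr rfl fun τ _ => Finset.sum_comm).trans Finset.sum_comm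
      rw [step1, step2]
      refine Finset.sum_congr rfl fun e _ => ?_
      by_cases hce : (i e).1 = 0
      · simp only [if_pos hce]
        exact (Finset.sum_congr rfl fun τ _ => Finset.sum_comm).trans Finset.sum_comm
      · simp only [if_neg hce, Finset.sum_const_zero]
    have hsplitV1 : (∑ e : Fin nb, (lam ^ (u * w)) ^ e.1 *
          ((∑ g : Fin u, lam ^ ((e.1 + g.1 * m) * z) * d (e, g) i) +
            (if (i e).1 = 0 then
              ∑ κ ∈ Finset.Ico 1 (u - v), lam ^ (κ * m * z) *
                ∑ g : Fin u, lam ^ ((e.1 + g.1 * m) * z) * d (e, g) (Function.update i e (pn (κ * sb)))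
            else 0)))
        = (∑ e : Fin nb, (lam ^ (u * w)) ^ e.1 *
            (∑ g : Fin u, lam ^ ((e.1 + g.1 * m) * z) * d (e, g) i))
          + ∑ e : Fin nb, (lam ^ (u * w)) ^ e.1 *
            (if (i e).1 = 0 then
              ∑ κ ∈ Finset.Ico 1 (u - v), lam ^ (κ * m * z) *
                ∑ g : Fin u, lam ^ ((e.1 + g.1 * m) * z) * d (e, g) (Function.update i e (pn (κ * sb)))
            else 0) := by
      rw [← Finset.sum_add_distrib]
      exact Finset.sum_congr rfl fun e _ => mul_add _ _ _
    rw [keyA, hC2] at hmain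
    rw [Finset.sum_congr rfl (fun (e : Fin nb) (_ : e ∈ Finset.univ) => Finset.sum_add_distrib),
      Finset.sum_add_distrib] at hmain
    rw [hsplitV1, hBrack1, hBrack2]
    linear_combination hmain
  -- availability of enough equations
  have hzw : ∀ z w : ℕ, z < u - v → w < nb - kb → z + u * w < r := by
    intro z w hz hw
    obtain ⟨w₂, hw₂⟩ : ∃ w₂, nb = kb + w + 1 + w₂ := ⟨nb - kb - w - 1, by omega⟩
    have h1 : nb * u = kb * u + u * w + u + w₂ * u := by subst hw₂; ring
    generalize hA : nb * u = A at h1 hr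
    generalize hB : kb * u = B at h1 hr
    generalize hC : u * w = C at h1 ⊢
    generalize hD : w₂ * u = D at h1
    omega
  -- the key lemma: all V-quantities vanish
  have hVzero : ∀ i : Fin nb → Fin th, (i e').1 = 0 → ∀ z < u - v,
      (∀ e : Fin nb,
        ((∑ g : Fin u, lam ^ ((e.1 + g.1 * m) * z) * d (e, g) i) +
          (if (i e).1 = 0 then
            ∑ κ ∈ Finset.Ico 1 (u - v), lam ^ (κ * m * z) *
              ∑ g : Fin u, lam ^ ((e.1 + g.1 * m) * z) * d (e, g) (Function.update i e (pn (κ * sb)))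
          else 0)) = 0)
      ∧ (∀ τ < sb - 1,
          (∑ κ ∈ Finset.range (u - v), lam ^ ((nb + τ + κ * m) * z) *
            ∑ e : Fin nb, (if (i e).1 = 0 then
              ∑ g : Fin u, d (e, g) (Function.update i e (pn (κ * sb + τ + 1))) else 0)) = 0) := by
    intro i hi z hz
    set V1f : Fin nb → F := fun e =>
      (∑ g : Fin u, lam ^ ((e.1 + g.1 * m) * z) * d (e, g) i) +
        (if (i e).1 = 0 then
          ∑ κ ∈ Finset.Ico 1 (u - v), lam ^ (κ * m * z) *
            ∑ g : Fin u, lam ^ ((e.1 + g.1 * m) * z) * d (e, g) (Function.update i e (pn (κ * sb)))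
        else 0) with hV1f
    set V2f : ℕ → F := fun τ =>
      ∑ κ ∈ Finset.range (u - v), lam ^ ((nb + τ + κ * m) * z) *
        ∑ e : Fin nb, (if (i e).1 = 0 then
          ∑ g : Fin u, d (e, g) (Function.update i e (pn (κ * sb + τ + 1))) else 0) with hV2f
    suffices hS : (∀ e : Fin nb, V1f e = 0) ∧ (∀ τ < sb - 1, V2f τ = 0) by
      exact ⟨fun e => hS.1 e, fun τ hτ => hS.2 τ hτ⟩
    have hhelp : ∀ e ∈ R, V1f e = 0 := by
      intro e he
      have hne : e' ≠ e := fun h => he'R (h ▸ he)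
      have h1 : (∑ g : Fin u, lam ^ ((e.1 + g.1 * m) * z) * d (e, g) i) = 0 :=
        hdown e he z hz i hi
      have h2 : ∀ κ : ℕ,
          (∑ g : Fin u, lam ^ ((e.1 + g.1 * m) * z) * d (e, g) (Function.update i e (pn (κ * sb)))) = 0 := by
        intro κ
        refine hdown e he z hz _ ?_
        rw [Function.update_of_ne hne]
        exact hi
      rw [hV1f]
      simp only [h1, zero_add]
      split
      · exact Finset.sum_eq_zero fun κ _ => by rw [h2 κ, mul_zero]
      · rfl
    have hrg : ∀ w < nb - kb,
        (∑ e : Fin nb, (lam ^ (u * w)) ^ e.1 * V1f e)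
          + ∑ τ ∈ Finset.range (sb - 1), (lam ^ (u * w)) ^ (nb + τ) * V2f τ = 0 :=
      fun w hw => hregroup i z w (hzw z w hz hw)
    set S : Finset ℕ := (Finset.range m) \ (R.image Fin.val) with hSdef
    have himsub : R.image Fin.val ⊆ Finset.range m := by
      intro a ha
      obtain ⟨e, _, rfl⟩ := Finset.mem_image.mp ha
      exact Finset.mem_range.mpr (lt_of_lt_of_le e.2 hnbm)
    have hScard : S.card = nb - kb := by
      rw [hSdef, Finset.card_sdiff_of_subset himsub, Finset.card_image_of_injective _ Fin.val_injective, hR,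
        Finset.card_range]
      omega
    set vv : ℕ → F := fun a => if h : a < nb then V1f ⟨a, h⟩ else V2f (a - nb) with hvvdef
    have hfull : ∀ w < nb - kb, ∑ a ∈ Finset.range m, vv a * ((lam ^ u) ^ a) ^ w = 0 := by
      intro w hw
      have h0 := hrg w hw
      have hxw : ∀ a : ℕ, vv a * ((lam ^ u) ^ a) ^ w = (lam ^ (u * w)) ^ a * vv a := by
        intro a
        have hx2 : ((lam ^ u) ^ a) ^ w = (lam ^ (u * w)) ^ a := by
          rw [← pow_mul, ← pow_mul, ← pow_mul]
          congr 1
          ring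
        rw [hx2, mul_comm]
      calc ∑ a ∈ Finset.range m, vv a * ((lam ^ u) ^ a) ^ w
          = ∑ a ∈ Finset.range m, (lam ^ (u * w)) ^ a * vv a :=
            Finset.sum_congr rfl fun a _ => hxw a
        _ = (∑ a ∈ Finset.range nb, (lam ^ (u * w)) ^ a * vv a)
            + ∑ a ∈ Finset.Ico nb m, (lam ^ (u * w)) ^ a * vv a := by
            rw [Finset.range_eq_Ico, ← Finset.sum_Ico_consecutive _ (Nat.zero_le nb) hnbm,
              ← Finset.range_eq_Ico]
        _ = 0 := by
            have hpart1 : (∑ a ∈ Finset.range nb, (lam ^ (u * w)) ^ a * vv a)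
                = ∑ e : Fin nb, (lam ^ (u * w)) ^ e.1 * V1f e := by
              rw [← Fin.sum_univ_eq_sum_range fun a => (lam ^ (u * w)) ^ a * vv a]
              refine Finset.sum_congr rfl fun e _ => ?_
              congr 1
              simp only [hvvdef]
              exact dif_pos e.2
            have hpart2 : (∑ a ∈ Finset.Ico nb m, (lam ^ (u * w)) ^ a * vv a)
                = ∑ τ ∈ Finset.range (sb - 1), (lam ^ (u * w)) ^ (nb + τ) * V2f τ := by
              rw [Finset.sum_Ico_eq_sum_range, show m - nb = sb - 1 by omega]
              refine Finset.sum_congr rfl fun τ _ => ?_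
              congr 1
              simp only [hvvdef]
              rw [dif_neg (by omega)]
              congr 1
              omega
            rw [hpart1, hpart2]
            exact h0
    have hvvS : ∀ w < nb - kb, ∑ a ∈ S, vv a * ((lam ^ u) ^ a) ^ w = 0 := by
      intro w hw
      have h1 := hfull w hw
      rw [← Finset.sum_sdiff himsub] at h1
      have h2 : ∑ a ∈ R.image Fin.val, vv a * ((lam ^ u) ^ a) ^ w = 0 := by
        refine Finset.sum_eq_zero fun a ha => ?_
        obtain ⟨e, he, rfl⟩ := Finset.mem_image.mp ha
        have hz1 : vv e.1 = 0 := by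
          simp only [hvvdef]
          rw [dif_pos e.2]
          exact hhelp e he
        rw [hz1, zero_mul]
      rw [h2, add_zero] at h1
      exact h1
    have hinj : ∀ a ∈ S, ∀ b ∈ S, (lam ^ u) ^ a = (lam ^ u) ^ b → a = b := by
      intro a ha b hb hab
      have haR : a < m := Finset.mem_range.mp (Finset.mem_sdiff.mp ha).1
      have hbR : b < m := Finset.mem_range.mp (Finset.mem_sdiff.mp hb).1
      have hab' : lam ^ (u * a) = lam ^ (u * b) := by
        rw [pow_mul, pow_mul]
        exact hab
      have h3 : u * a < m * u := by
        have := Nat.mul_lt_mul_of_lt_of_le haR (le_refl u) (by omega)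
        calc u * a = a * u := by ring
          _ < m * u := this
      have h4 : u * b < m * u := by
        have := Nat.mul_lt_mul_of_lt_of_le hbR (le_refl u) (by omega)
        calc u * b = b * u := by ring
          _ < m * u := this
      have := hdist (u * a) (u * b) h3 h4 hab'
      exact Nat.eq_of_mul_eq_mul_left (by omega) this
    have hall : ∀ a ∈ S, vv a = 0 :=
      vand_aux S (fun a => (lam ^ u) ^ a) vv (nb - kb) hinj (le_of_eq hScard) hvvS
    refine ⟨fun e => ?_, fun τ hτ => ?_⟩
    · by_cases he : e ∈ R
      · exact hhelp e he
      · have heS : e.1 ∈ S := by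
          refine Finset.mem_sdiff.mpr ⟨Finset.mem_range.mpr (lt_of_lt_of_le e.2 hnbm), ?_⟩
          intro hmem
          obtain ⟨f, hf, hfe⟩ := Finset.mem_image.mp hmem
          exact he (by rwa [Fin.val_injective hfe] at hf)
        have hz1 := hall e.1 heS
        simp only [hvvdef] at hz1
        rw [dif_pos e.2] at hz1
        exact hz1
    · have hτS : nb + τ ∈ S := by
        refine Finset.mem_sdiff.mpr ⟨Finset.mem_range.mpr (by omega), ?_⟩
        intro hmem
        obtain ⟨f, _, hfe⟩ := Finset.mem_image.mp hmem
        have := f.2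
        omega
      have hz1 := hall (nb + τ) hτS
      simp only [hvvdef] at hz1
      rw [dif_neg (by omega)] at hz1
      rwa [show nb + τ - nb = τ by omega] at hz1
  -- extraction (a): the τ = 0 coordinates of the failed node
  have hA : ∀ i : Fin nb → Fin th, (i e').1 = 0 → ∀ κ < u - v,
      d (e', g') (Function.update i e' (pn (κ * sb))) = 0 := by
    intro i hi
    have hupd0 : Function.update i e' (pn (0 * sb)) = i := by
      funext a
      by_cases ha : a = e'
      · subst ha
        rw [Function.update_self]
        refine Fin.ext ?_
        rw [hpn (0 * sb) (by omega)]
        omega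
      · rw [Function.update_of_ne ha]
    have hDe' : ∀ (z : ℕ) (i' : Fin nb → Fin th),
        (∑ g : Fin u, lam ^ ((e'.1 + g.1 * m) * z) * d (e', g) i')
          = lam ^ ((e'.1 + g'.1 * m) * z) * d (e', g') i' := by
      intro z i'
      refine Fintype.sum_eq_single g' fun g hg => ?_
      rw [hloc g hg i', mul_zero]
    have hsys : ∀ z < u - v,
        ∑ κ ∈ Finset.range (u - v),
          d (e', g') (Function.update i e' (pn (κ * sb))) * (lam ^ (m * κ)) ^ z = 0 := by
      intro z hz
      have h1 := (hVzero i hi z hz).1 e'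
      rw [if_pos hi, hDe'] at h1
      have h2 : ∀ κ ∈ Finset.Ico 1 (u - v),
          lam ^ (κ * m * z) * (∑ g : Fin u, lam ^ ((e'.1 + g.1 * m) * z) *
              d (e', g) (Function.update i e' (pn (κ * sb))))
            = lam ^ ((e'.1 + g'.1 * m) * z) *
                (d (e', g') (Function.update i e' (pn (κ * sb))) * (lam ^ (m * κ)) ^ z) :=
        fun κ _ => by rw [hDe']; ring
      rw [Finset.sum_congr rfl h2] at h1
      have h3 : ∑ κ ∈ Finset.range (u - v),
            d (e', g') (Function.update i e' (pn (κ * sb))) * (lam ^ (m * κ)) ^ z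
          = d (e', g') (Function.update i e' (pn (0 * sb))) * (lam ^ (m * 0)) ^ z
            + ∑ κ ∈ Finset.Ico 1 (u - v),
                d (e', g') (Function.update i e' (pn (κ * sb))) * (lam ^ (m * κ)) ^ z := by
        rw [Finset.range_eq_Ico, Finset.sum_eq_sum_Ico_succ_bot hη]
      rw [h3, hupd0]
      have h4 : lam ^ ((e'.1 + g'.1 * m) * z) *
          (d (e', g') i * (lam ^ (m * 0)) ^ z
            + ∑ κ ∈ Finset.Ico 1 (u - v),
                d (e', g') (Function.update i e' (pn (κ * sb))) * (lam ^ (m * κ)) ^ z) = 0 := by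
        rw [mul_add, Finset.mul_sum]
        rw [show lam ^ ((e'.1 + g'.1 * m) * z) * (d (e', g') i * (lam ^ (m * 0)) ^ z)
            = lam ^ ((e'.1 + g'.1 * m) * z) * d (e', g') i from by
          rw [Nat.mul_zero, pow_zero, one_pow, mul_one]]
        exact h1
      exact (mul_eq_zero.mp h4).resolve_left (hpowne _)
    have hinj2 : ∀ a ∈ Finset.range (u - v), ∀ b ∈ Finset.range (u - v),
        lam ^ (m * a) = lam ^ (m * b) → a = b := by
      intro a ha b hb hab
      have haU : a < u := by have := Finset.mem_range.mp ha; omega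
      have hbU : b < u := by have := Finset.mem_range.mp hb; omega
      have := hdist (m * a) (m * b) (Nat.mul_lt_mul_of_le_of_lt (le_refl m) haU (by omega))
        (Nat.mul_lt_mul_of_le_of_lt (le_refl m) hbU (by omega)) hab
      exact Nat.eq_of_mul_eq_mul_left (by omega) this
    intro κ hκ
    exact vand_aux (Finset.range (u - v)) (fun κ => lam ^ (m * κ))
      (fun κ => d (e', g') (Function.update i e' (pn (κ * sb)))) (u - v) hinj2
      (le_of_eq (Finset.card_range _)) hsys κ (Finset.mem_range.mpr hκ)
  -- extraction (b): plain rack sums for racks with nonzero digit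
  have hB : ∀ e : Fin nb, e ≠ e' → ∀ i : Fin nb → Fin th, (i e').1 = 0 → (i e).1 ≠ 0 →
      ∑ g : Fin u, d (e, g) i = 0 := by
    intro e hne i hie' hie
    have h1 := (hVzero i hie' 0 hη).1 e
    rw [if_neg hie, add_zero] at h1
    calc ∑ g : Fin u, d (e, g) i
        = ∑ g : Fin u, lam ^ ((e.1 + g.1 * m) * 0) * d (e, g) i := by
          refine Finset.sum_congr rfl fun g _ => ?_
          rw [Nat.mul_zero, pow_zero, one_mul]
      _ = 0 := h1
  -- extraction (c): the aggregates for τ ≠ 0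
  have hC : ∀ i : Fin nb → Fin th, (i e').1 = 0 → ∀ τ < sb - 1, ∀ κ < u - v,
      (∑ e : Fin nb, (if (i e).1 = 0 then
        ∑ g : Fin u, d (e, g) (Function.update i e (pn (κ * sb + τ + 1))) else 0)) = 0 := by
    intro i hi τ hτ
    have hsys : ∀ z < u - v,
        ∑ κ ∈ Finset.range (u - v),
          (∑ e : Fin nb, (if (i e).1 = 0 then
            ∑ g : Fin u, d (e, g) (Function.update i e (pn (κ * sb + τ + 1))) else 0))
            * (lam ^ (m * κ)) ^ z = 0 := by
      intro z hz
      have h1 := (hVzero i hi z hz).2 τ hτ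
      have h4 : lam ^ ((nb + τ) * z) *
          ∑ κ ∈ Finset.range (u - v),
            (∑ e : Fin nb, (if (i e).1 = 0 then
              ∑ g : Fin u, d (e, g) (Function.update i e (pn (κ * sb + τ + 1))) else 0))
              * (lam ^ (m * κ)) ^ z = 0 := by
        rw [Finset.mul_sum]
        calc ∑ κ ∈ Finset.range (u - v), lam ^ ((nb + τ) * z) *
              ((∑ e : Fin nb, (if (i e).1 = 0 then
                ∑ g : Fin u, d (e, g) (Function.update i e (pn (κ * sb + τ + 1))) else 0))
                * (lam ^ (m * κ)) ^ z)
            = ∑ κ ∈ Finset.range (u - v), lam ^ ((nb + τ + κ * m) * z) *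
                ∑ e : Fin nb, (if (i e).1 = 0 then
                  ∑ g : Fin u, d (e, g) (Function.update i e (pn (κ * sb + τ + 1))) else 0) := by
              refine Finset.sum_congr rfl fun κ _ => ?_
              rw [show (nb + τ + κ * m) * z = (nb + τ) * z + m * κ * z by ring, pow_add]
              ring
          _ = 0 := h1
      exact (mul_eq_zero.mp h4).resolve_left (hpowne _)
    have hinj2 : ∀ a ∈ Finset.range (u - v), ∀ b ∈ Finset.range (u - v),
        lam ^ (m * a) = lam ^ (m * b) → a = b := by
      intro a ha b hb hab
      have haU : a < u := by have := Finset.mem_range.mp ha; omega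
      have hbU : b < u := by have := Finset.mem_range.mp hb; omega
      have := hdist (m * a) (m * b) (Nat.mul_lt_mul_of_le_of_lt (le_refl m) haU (by omega))
        (Nat.mul_lt_mul_of_le_of_lt (le_refl m) hbU (by omega)) hab
      exact Nat.eq_of_mul_eq_mul_left (by omega) this
    intro κ hκ
    exact vand_aux (Finset.range (u - v)) (fun κ => lam ^ (m * κ))
      (fun κ => ∑ e : Fin nb, (if (i e).1 = 0 then
        ∑ g : Fin u, d (e, g) (Function.update i e (pn (κ * sb + τ + 1))) else 0)) (u - v) hinj2
      (le_of_eq (Finset.card_range _)) hsys κ (Finset.mem_range.mpr hκ)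
  -- final assembly
  have hfinal : ∀ i₀ : Fin nb → Fin th, d (e', g') i₀ = 0 := by
    intro i₀
    set i : Fin nb → Fin th := Function.update i₀ e' (pn 0) with hidef
    have hie' : (i e').1 = 0 := by
      rw [hidef, Function.update_self]
      exact hpn 0 hth0
    have hupdback : ∀ x : ℕ, x < th → x = (i₀ e').1 → Function.update i e' (pn x) = i₀ := by
      intro x hx hxp
      funext a
      by_cases ha : a = e'
      · subst ha
        rw [Function.update_self]
        exact Fin.ext (by rw [hpn x hx, hxp])
      · rw [Function.update_of_ne ha, hidef, Function.update_of_ne ha]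
    have hκlt : (i₀ e').1 / sb < u - v := by
      have h1 : ((i₀ e').1 : ℕ) < sb * (u - v) := lt_of_lt_of_eq (i₀ e').2 hth
      exact Nat.div_lt_of_lt_mul h1
    by_cases hτ0 : (i₀ e').1 % sb = 0
    · have hdvd : ((i₀ e').1 / sb) * sb = (i₀ e').1 :=
        Nat.div_mul_cancel (Nat.dvd_of_mod_eq_zero hτ0)
      have h2 := hA i hie' ((i₀ e').1 / sb) hκlt
      rwa [hupdback _ (by rw [hdvd]; exact (i₀ e').2) hdvd] at h2
    · have hρlt : (i₀ e').1 % sb < sb := Nat.mod_lt _ hsb0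
      have hcomb : ((i₀ e').1 / sb) * sb + ((i₀ e').1 % sb - 1) + 1 = (i₀ e').1 := by
        have h3 : ((i₀ e').1 / sb) * sb + (i₀ e').1 % sb = (i₀ e').1 := Nat.div_add_mod' _ sb
        generalize hQ : ((i₀ e').1 / sb) * sb = Q at h3 ⊢
        omega
      have hp0 : ((i₀ e').1 : ℕ) ≠ 0 := by
        intro h0
        apply hτ0
        rw [h0, Nat.zero_mod]
      have h2 := hC i hie' ((i₀ e').1 % sb - 1) (by omega) ((i₀ e').1 / sb) hκlt
      have hsingle : ∀ e : Fin nb, e ≠ e' →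
          (if (i e).1 = 0 then ∑ g : Fin u,
            d (e, g) (Function.update i e (pn (((i₀ e').1 / sb) * sb + ((i₀ e').1 % sb - 1) + 1)))
          else 0) = 0 := by
        intro e hne
        by_cases hce : (i e).1 = 0
        · rw [if_pos hce]
          refine hB e hne _ ?_ ?_
          · rw [Function.update_of_ne (Ne.symm hne)]
            exact hie'
          · rw [Function.update_self]
            rw [hpn _ (by rw [hcomb]; exact (i₀ e').2)]
            rw [hcomb]
            exact hp0
        · rw [if_neg hce]
      have h7 := Fintype.sum_eq_single e' hsingle
      rw [h7, if_pos hie',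
        hupdback _ (by rw [hcomb]; exact (i₀ e').2) hcomb] at h2
      have h8 : ∑ g : Fin u, d (e', g) i₀ = d (e', g') i₀ :=
        Fintype.sum_eq_single g' fun g hg => hloc g hg i₀
      rw [h8] at h2
      exact h2
  funext i₀
  have := hfinal i₀
  rw [hd] at this
  exact sub_eq_zero.mp this
end
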